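/- arXiv:1404.6723 — 10 statements merged into one kernel-verified Lean document; each statement's English description precedes it below -/
import Mathlib

section
/- For any two subspaces X and Y of F_q^n, the subspace distance satisfies d_S(X,Y) ≥ d_H(v(X),v(Y)), where d_H is the Hamming distance, and the injection distance satisfies d_I(X,Y) ≥ d_asym(v(X),v(Y)), where d_asym(u,w) = max{N(u,w), N(w,u)} and N(u,w) is the number of coordinates i with u_i = 1 and w_i = 0. -/
open Module

/-- The subspace distance `d_S(X,Y) = dim X + dim Y - 2 dim (X ∩ Y)`. -/
noncomputable def dS {F V : Type*} [Field F] [AddCommGroup V] [Module F V]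
    (X Y : Submodule F V) : ℕ :=
  finrank F X + finrank F Y - 2 * finrank F ↥(X ⊓ Y)

/-- The injection distance `d_I(X,Y) = max{dim X, dim Y} - dim (X ∩ Y)`. -/
noncomputable def dI {F V : Type*} [Field F] [AddCommGroup V] [Module F V]
    (X Y : Submodule F V) : ℕ :=
  max (finrank F X) (finrank F Y) - finrank F ↥(X ⊓ Y)

/-- The dimension of the projection of `X` onto the first `j` coordinates. -/
noncomputable def projDim {F : Type*} [Field F] {n : ℕ}
    (X : Submodule F (Fin n → F)) (j : ℕ) (hj : j ≤ n) : ℕ :=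
  finrank F (X.map (LinearMap.funLeft F F (Fin.castLE hj)))

/-- The set of pivot positions of `X`, i.e. the support of the identifying vector `v(X)`:
`v(X)_j = 1` iff the dimension of the projection of `X` onto the first `j` coordinates
exceeds that of the projection onto the first `j-1` coordinates. -/
noncomputable def pivots {F : Type*} [Field F] {n : ℕ}
    (X : Submodule F (Fin n → F)) : Finset (Fin n) :=
  Finset.univ.filter fun j : Fin n =>
    projDim X j.val j.isLt.le < projDim X (j.val + 1) j.isLt


section Aux


variable {F : Type*} [Field F] {n : ℕ}

/-- The subspace of vectors vanishing on coordinates `< j`. -/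
def Zsub (F : Type*) [Field F] (n j : ℕ) : Submodule F (Fin n → F) where
  carrier := {x | ∀ i : Fin n, (i : ℕ) < j → x i = 0}
  add_mem' := by intro a b ha hb i hi; simp [ha i hi, hb i hi]
  zero_mem' := by intro i hi; rfl
  smul_mem' := by intro c a ha i hi; simp [ha i hi]

lemma mem_Zsub {j : ℕ} {x : Fin n → F} :
    x ∈ Zsub F n j ↔ ∀ i : Fin n, (i : ℕ) < j → x i = 0 := Iff.rfl

lemma ker_funLeft {j : ℕ} (hj : j ≤ n) :
    LinearMap.ker (LinearMap.funLeft F F (Fin.castLE hj)) = Zsub F n j := by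
  ext x
  simp only [LinearMap.mem_ker, mem_Zsub, funext_iff, LinearMap.funLeft_apply, Pi.zero_apply]
  constructor
  · intro h i hi
    have := h ⟨(i : ℕ), hi⟩
    simpa [Fin.castLE] using this
  · intro h i
    exact h (Fin.castLE hj i) i.isLt

lemma finrank_comap_subtype {V : Type*} [AddCommGroup V] [Module F V]
    (p K : Submodule F V) :
    finrank F ↥(Submodule.comap p.subtype K) = finrank F ↥(p ⊓ K) := by
  have h : Submodule.comap p.subtype K = Submodule.comap p.subtype (p ⊓ K) := by
    rw [Submodule.comap_inf, Submodule.comap_subtype_self, top_inf_eq]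
  rw [h]
  exact (Submodule.comapSubtypeEquivOfLe inf_le_left).finrank_eq

lemma rank_proj (X : Submodule F (Fin n → F)) {j : ℕ} (hj : j ≤ n) :
    projDim X j hj + finrank F ↥(X ⊓ Zsub F n j) = finrank F X := by
  classical
  set f := LinearMap.funLeft F F (Fin.castLE hj) with hf
  have hrange : LinearMap.range (f.comp X.subtype) = X.map f := by
    rw [LinearMap.range_comp, Submodule.range_subtype]
  have hker : finrank F ↥(LinearMap.ker (f.comp X.subtype)) = finrank F ↥(X ⊓ Zsub F n j) := by
    rw [LinearMap.ker_comp, ker_funLeft hj]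
    exact finrank_comap_subtype X (Zsub F n j)
  have := LinearMap.finrank_range_add_finrank_ker (f.comp X.subtype)
  rw [hrange, hker] at this
  simpa [projDim] using this

lemma Zsub_succ {j : ℕ} (hj : j < n) :
    Zsub F n (j + 1) = Zsub F n j ⊓ LinearMap.ker (LinearMap.proj (R := F)
      (φ := fun _ : Fin n => F) ⟨j, hj⟩) := by
  ext x
  simp only [Submodule.mem_inf, mem_Zsub, LinearMap.mem_ker, LinearMap.proj_apply]
  constructor
  · intro h
    exact ⟨fun i hi => h i (Nat.lt_succ_of_lt hi), h ⟨j, hj⟩ (Nat.lt_succ_self j)⟩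
  · rintro ⟨h1, h2⟩ i hi
    rcases Nat.lt_succ_iff_lt_or_eq.mp hi with hi | hi
    · exact h1 i hi
    · have : i = ⟨j, hj⟩ := Fin.ext hi
      rw [this]; exact h2

lemma Zsub_anti {j : ℕ} : Zsub F n (j + 1) ≤ Zsub F n j :=
  fun x hx i hi => hx i (Nat.lt_succ_of_lt hi)

lemma Zsub_zero : Zsub F n 0 = ⊤ := by
  ext x; simp [mem_Zsub]

lemma Zsub_n : Zsub F n n = ⊥ := by
  ext x
  simp only [mem_Zsub, Submodule.mem_bot]
  constructor
  · intro h; funext i; exact h i i.isLt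
  · intro h i _; rw [h]; rfl

/-- `g X j`: the dimension of the part of `X` vanishing on the first `j` coordinates. -/
noncomputable def gfun (X : Submodule F (Fin n → F)) (j : ℕ) : ℕ :=
  finrank F ↥(X ⊓ Zsub F n j)

lemma gfun_anti (X : Submodule F (Fin n → F)) (j : ℕ) : gfun X (j + 1) ≤ gfun X j :=
  Submodule.finrank_mono (inf_le_inf_left X Zsub_anti)

lemma gfun_step (X : Submodule F (Fin n → F)) {j : ℕ} (hj : j < n) :
    gfun X j ≤ gfun X (j + 1) + 1 := by
  classical
  have hineq : X ⊓ Zsub F n (j+1) = (X ⊓ Zsub F n j) ⊓ LinearMap.ker (LinearMap.proj (R := F) (φ := fun _ : Fin n => F) ⟨j, hj⟩) := by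
    rw [Zsub_succ hj, inf_assoc]
  have hrn := LinearMap.finrank_range_add_finrank_ker ((LinearMap.proj (R := F) (φ := fun _ : Fin n => F) ⟨j, hj⟩).comp (X ⊓ Zsub F n j).subtype)
  rw [LinearMap.ker_comp, finrank_comap_subtype (X ⊓ Zsub F n j) (LinearMap.ker (LinearMap.proj (R := F) (φ := fun _ : Fin n => F) ⟨j, hj⟩))] at hrn
  have hr : finrank F ↥(LinearMap.range ((LinearMap.proj (R := F) (φ := fun _ : Fin n => F) ⟨j, hj⟩).comp (X ⊓ Zsub F n j).subtype)) ≤ 1 := by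
    have := Submodule.finrank_le (LinearMap.range ((LinearMap.proj (R := F) (φ := fun _ : Fin n => F) ⟨j, hj⟩).comp (X ⊓ Zsub F n j).subtype))
    simpa using this
  unfold gfun
  rw [hineq]
  omega

lemma gfun_zero (X : Submodule F (Fin n → F)) : gfun X 0 = finrank F X := by
  unfold gfun; rw [Zsub_zero, inf_top_eq]

lemma gfun_n (X : Submodule F (Fin n → F)) : gfun X n = 0 := by
  unfold gfun; rw [Zsub_n, inf_bot_eq, finrank_bot]

lemma mem_pivots_iff (X : Submodule F (Fin n → F)) (j : Fin n) :
    j ∈ pivots X ↔ gfun X (j.val + 1) < gfun X j.val := by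
  have h1 := rank_proj X j.isLt.le
  have h2 := rank_proj X (show j.val + 1 ≤ n from j.isLt)
  simp only [pivots, Finset.mem_filter, Finset.mem_univ, true_and]
  unfold gfun at *
  omega

lemma pivots_mono {X Y : Submodule F (Fin n → F)} (h : X ≤ Y) :
    pivots X ⊆ pivots Y := by
  intro j hj
  rw [mem_pivots_iff] at hj ⊢
  -- pivot iff exists a witness
  have hne : X ⊓ Zsub F n (j.val + 1) ≠ X ⊓ Zsub F n j.val := by
    intro heq
    unfold gfun at hj
    rw [heq] at hj
    exact lt_irrefl _ hj
  have hle : X ⊓ Zsub F n (j.val + 1) ≤ X ⊓ Zsub F n j.val :=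
    inf_le_inf_left X Zsub_anti
  obtain ⟨x, hx1, hx2⟩ := Set.not_subset.mp
    (fun hs => hne (le_antisymm hle (fun y hy => hs hy)))
  -- x ∈ X ⊓ Zsub j, x ∉ X ⊓ Zsub (j+1); so x j ≠ 0
  have hxj : x j ≠ 0 := by
    intro h0
    apply hx2
    refine ⟨hx1.1, ?_⟩
    intro i hi
    rcases Nat.lt_succ_iff_lt_or_eq.mp hi with hi | hi
    · exact hx1.2 i hi
    · have : i = j := Fin.ext hi
      rw [this]; exact h0
  -- now in Y
  have hY1 : x ∈ Y ⊓ Zsub F n j.val := ⟨h hx1.1, hx1.2⟩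
  have hY2 : x ∉ Y ⊓ Zsub F n (j.val + 1) := by
    rintro ⟨-, h2⟩
    exact hxj (h2 j (Nat.lt_succ_self _))
  have hlt : Y ⊓ Zsub F n (j.val + 1) < Y ⊓ Zsub F n j.val :=
    lt_of_le_of_ne (inf_le_inf_left Y Zsub_anti) (fun heq => hY2 (heq ▸ hY1))
  exact Submodule.finrank_lt_finrank_of_lt hlt

lemma count_lemma (g : ℕ → ℕ) :
    ∀ m : ℕ, (∀ j < m, g (j+1) ≤ g j) → (∀ j < m, g j ≤ g (j+1) + 1) →
    ((Finset.range m).filter fun j => g (j+1) < g j).card = g 0 - g m ∧ g m ≤ g 0 := by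
  intro m
  induction m with
  | zero => simp
  | succ m ih =>
    intro h1 h2
    obtain ⟨hc, hle⟩ := ih (fun j hj => h1 j (Nat.lt_succ_of_lt hj))
      (fun j hj => h2 j (Nat.lt_succ_of_lt hj))
    rw [Finset.range_add_one, Finset.filter_insert]
    have ha := h1 m (Nat.lt_succ_self m)
    have hb := h2 m (Nat.lt_succ_self m)
    by_cases hm : g (m+1) < g m
    · rw [if_pos hm, Finset.card_insert_of_notMem (by simp)]
      constructor
      · omega
      · omega
    · rw [if_neg hm]
      constructor
      · omega
      · omega

lemma card_pivots (X : Submodule F (Fin n → F)) : (pivots X).card = finrank F X := by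
  classical
  have hcard : (pivots X).card =
      ((Finset.range n).filter fun j => gfun X (j+1) < gfun X j).card := by
    apply Finset.card_bij (fun (j : Fin n) _ => (j : ℕ))
    · intro j hj
      rw [mem_pivots_iff] at hj
      simp [Finset.mem_filter, j.isLt, hj]
    · intro a _ b _ h
      exact Fin.ext h
    · intro m hm
      simp only [Finset.mem_filter, Finset.mem_range] at hm
      exact ⟨⟨m, hm.1⟩, by rw [mem_pivots_iff]; exact hm.2, rfl⟩
  obtain ⟨hc, -⟩ := count_lemma (gfun X) n (fun j hj => gfun_anti X j)
    (fun j hj => gfun_step X hj)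
  rw [hcard, hc, gfun_zero, gfun_n]
  omega

end Aux

/-- For any two subspaces `X`, `Y` of `F_q^n`, the subspace distance is at least the Hamming
distance of the identifying vectors, and the injection distance is at least their asymmetric
distance `max{N(v(X),v(Y)), N(v(Y),v(X))}`. -/
theorem statement0 (q n : ℕ) (hq : IsPrimePow q)
    (F : Type*) [Field F] [Fintype F] (hF : Fintype.card F = q)
    (X Y : Submodule F (Fin n → F)) :
    (symmDiff (pivots X) (pivots Y)).card ≤ dS X Y ∧
    max ((pivots X \ pivots Y).card) ((pivots Y \ pivots X).card) ≤ dI X Y := by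
  classical
  have hX := card_pivots X
  have hY := card_pivots Y
  have hXY := card_pivots (X ⊓ Y)
  have hsub : pivots (X ⊓ Y) ⊆ pivots X ∩ pivots Y := by
    intro j hj
    exact Finset.mem_inter.mpr ⟨pivots_mono inf_le_left hj, pivots_mono inf_le_right hj⟩
  have hc : finrank F ↥(X ⊓ Y) ≤ (pivots X ∩ pivots Y).card := by
    rw [← hXY]; exact Finset.card_le_card hsub
  have hiX : (pivots X ∩ pivots Y).card ≤ (pivots X).card :=
    Finset.card_le_card Finset.inter_subset_left
  have hiY : (pivots X ∩ pivots Y).card ≤ (pivots Y).card :=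
    Finset.card_le_card Finset.inter_subset_right
  have hdX : (pivots X \ pivots Y).card + (pivots X ∩ pivots Y).card = (pivots X).card :=
    Finset.card_sdiff_add_card_inter _ _
  have hdY : (pivots Y \ pivots X).card + (pivots Y ∩ pivots X).card = (pivots Y).card :=
    Finset.card_sdiff_add_card_inter _ _
  have hcomm : (pivots Y ∩ pivots X).card = (pivots X ∩ pivots Y).card := by
    rw [Finset.inter_comm]
  have hsymm : (symmDiff (pivots X) (pivots Y)).card =
      (pivots X \ pivots Y).card + (pivots Y \ pivots X).card := by
    rw [symmDiff_def, Finset.sup_eq_union]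
    exact Finset.card_union_of_disjoint (disjoint_sdiff_sdiff)
  unfold dS dI
  omega
end

section
/- If X and Y are k-dimensional subspaces of F_q^n with v(X) = v(Y), then d_S(X,Y) = 2·rank(RE(X) − RE(Y)) and d_I(X,Y) = rank(RE(X) − RE(Y)). -/
open Module

/-- `M` is in reduced row echelon form (with no zero rows): there is a strictly increasing
sequence of pivot columns, each row has a `1` in its pivot column, zeros to the left of it,
and every pivot column has zeros in all other rows. -/
def IsRREF {F : Type*} [Field F] {k n : ℕ} (M : Matrix (Fin k) (Fin n) F) : Prop :=
  ∃ p : Fin k → Fin n, StrictMono p ∧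
    (∀ i, M i (p i) = 1) ∧
    (∀ i j, j < p i → M i j = 0) ∧
    (∀ i i', i ≠ i' → M i (p i') = 0)

section Aux

variable {F : Type*} [Field F] {k n : ℕ}

lemma sum_smul_apply_pivot (M : Matrix (Fin k) (Fin n) F) (p : Fin k → Fin n)
    (h1 : ∀ i, M i (p i) = 1) (h0 : ∀ i i', i ≠ i' → M i (p i') = 0)
    (c : Fin k → F) (i0 : Fin k) : (∑ i, c i • M i) (p i0) = c i0 := by
  rw [Finset.sum_apply]
  rw [Finset.sum_eq_single i0]
  · simp [h1]
  · intro i _ hne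
    simp [h0 i i0 hne]
  · simp

/-- evaluation at pivots determines members of the row space. -/
lemma eval_pivot_zero (M : Matrix (Fin k) (Fin n) F) (p : Fin k → Fin n)
    (h1 : ∀ i, M i (p i) = 1) (h0 : ∀ i i', i ≠ i' → M i (p i') = 0)
    (x : Fin n → F) (hx : x ∈ Submodule.span F (Set.range M))
    (hz : ∀ i, x (p i) = 0) : x = 0 := by
  obtain ⟨c, rfl⟩ := (Submodule.mem_span_range_iff_exists_fun F).mp hx
  have : ∀ i0, c i0 = 0 := by
    intro i0
    have := hz i0
    rwa [sum_smul_apply_pivot M p h1 h0 c i0] at this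
  simp [this]

lemma projDim_span (M : Matrix (Fin k) (Fin n) F) (p : Fin k → Fin n)
    (h1 : ∀ i, M i (p i) = 1) (hleft : ∀ i j, j < p i → M i j = 0)
    (h0 : ∀ i i', i ≠ i' → M i (p i') = 0)
    (j : ℕ) (hj : j ≤ n) :
    projDim (Submodule.span F (Set.range M)) j hj
      = (Finset.univ.filter fun i : Fin k => (p i : ℕ) < j).card := by
  classical
  set π := LinearMap.funLeft F F (Fin.castLE hj) with hπ
  set g : Fin k → Fin j → F := fun i => π (M i) with hg
  set S : Finset (Fin k) := Finset.univ.filter fun i : Fin k => (p i : ℕ) < j with hS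
  have hmap : (Submodule.span F (Set.range M)).map π = Submodule.span F (Set.range g) := by
    rw [Submodule.map_span]
    exact congrArg _ (Set.range_comp _ _).symm
  have hzero : ∀ i ∉ S, g i = 0 := by
    intro i hi
    have hi' : j ≤ (p i : ℕ) := by
      simp only [hS, Finset.mem_filter, Finset.mem_univ, true_and, not_lt] at hi
      exact hi
    funext l
    exact hleft i _ (by exact_mod_cast lt_of_lt_of_le l.isLt hi')
  have hspan2 : Submodule.span F (Set.range g)
      = Submodule.span F (Set.range fun i : S => g i) := by
    apply le_antisymm
    · rw [Submodule.span_le]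
      rintro _ ⟨i, rfl⟩
      by_cases hi : i ∈ S
      · exact Submodule.subset_span ⟨⟨i, hi⟩, rfl⟩
      · rw [hzero i hi]; exact (Submodule.span F _).zero_mem
    · rw [Submodule.span_le]
      rintro _ ⟨i, rfl⟩
      exact Submodule.subset_span ⟨i, rfl⟩
  have hli : LinearIndependent F fun i : S => g i := by
    rw [Fintype.linearIndependent_iff]
    intro c hc i0
    have hp0 : (p i0.1 : ℕ) < j := by
      exact (Finset.mem_filter.mp i0.2).2
    have := congrFun hc ⟨(p i0.1 : ℕ), hp0⟩
    rw [Finset.sum_apply] at this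
    rw [Finset.sum_eq_single i0] at this
    · simpa [hg, hπ, LinearMap.funLeft, Fin.castLE, h1, Fin.ext_iff] using this
    · intro i _ hne
      have : M i.1 (p i0.1) = 0 := h0 i.1 i0.1 (fun h => hne (Subtype.ext h))
      simp only [Pi.smul_apply, smul_eq_mul, hg, hπ]
      simp only [LinearMap.funLeft_apply, Function.comp]
      have hcast : Fin.castLE hj ⟨(p i0.1 : ℕ), hp0⟩ = p i0.1 := by
        apply Fin.ext; rfl
      rw [hcast, this, mul_zero]
    · simp
  rw [projDim, hmap, hspan2, finrank_span_eq_card hli]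
  simp [Fintype.card_coe]

lemma pivots_span (M : Matrix (Fin k) (Fin n) F) (p : Fin k → Fin n) (hp : StrictMono p)
    (h1 : ∀ i, M i (p i) = 1) (hleft : ∀ i j, j < p i → M i j = 0)
    (h0 : ∀ i i', i ≠ i' → M i (p i') = 0) :
    pivots (Submodule.span F (Set.range M)) = Finset.univ.image p := by
  classical
  ext jf
  simp only [pivots, Finset.mem_filter, Finset.mem_univ, true_and,
    projDim_span M p h1 hleft h0, Finset.mem_image]
  have hsplit : (Finset.univ.filter fun i : Fin k => (p i : ℕ) < jf.val + 1)
      = (Finset.univ.filter fun i : Fin k => (p i : ℕ) < jf.val)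
        ∪ (Finset.univ.filter fun i : Fin k => (p i : ℕ) = jf.val) := by
    rw [← Finset.filter_or]
    apply Finset.filter_congr
    intro i _
    constructor <;> intro h <;> omega
  have hdisj : Disjoint (Finset.univ.filter fun i : Fin k => (p i : ℕ) < jf.val)
      (Finset.univ.filter fun i : Fin k => (p i : ℕ) = jf.val) := by
    rw [Finset.disjoint_filter]
    intro i _ hlt
    omega
  rw [hsplit, Finset.card_union_of_disjoint hdisj]
  constructor
  · intro h
    have : (Finset.univ.filter fun i : Fin k => (p i : ℕ) = jf.val).Nonempty := by
      rw [← Finset.card_pos]; omega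
    obtain ⟨i, hi⟩ := this
    simp only [Finset.mem_filter] at hi
    exact ⟨i, Fin.ext hi.2⟩
  · rintro ⟨i, -, rfl⟩
    have : i ∈ Finset.univ.filter fun i' : Fin k => (p i' : ℕ) = (p i).val := by
      simp
    have := Finset.card_pos.mpr ⟨i, this⟩
    omega

end Aux

/-- If `X` and `Y` are `k`-dimensional subspaces of `F_q^n` with `v(X) = v(Y)`, then
`d_S(X,Y) = 2 rank(RE(X) - RE(Y))` and `d_I(X,Y) = rank(RE(X) - RE(Y))`. -/
theorem statement1 (q k n : ℕ) (hq : IsPrimePow q)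
    (F : Type*) [Field F] [Fintype F] (hF : Fintype.card F = q)
    (X Y : Submodule F (Fin n → F))
    (hX : finrank F X = k) (hY : finrank F Y = k)
    (M N : Matrix (Fin k) (Fin n) F) (hM : IsRREF M) (hN : IsRREF N)
    (hMX : Submodule.span F (Set.range M) = X)
    (hNY : Submodule.span F (Set.range N) = Y)
    (hv : pivots X = pivots Y) :
    dS X Y = 2 * (M - N).rank ∧ dI X Y = (M - N).rank := by
  classical
  obtain ⟨p, hpmono, hp1, hpleft, hp0⟩ := hM
  obtain ⟨p', hpmono', hp1', hpleft', hp0'⟩ := hN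
  -- the two pivot functions agree
  have himg : Finset.univ.image p = Finset.univ.image p' := by
    rw [← pivots_span M p hpmono hp1 hpleft hp0, ← pivots_span N p' hpmono' hp1' hpleft' hp0',
      hMX, hNY, hv]
  have hcard : (Finset.univ.image p).card = k := by
    rw [Finset.card_image_of_injective _ hpmono.injective, Finset.card_univ, Fintype.card_fin]
  have hpp' : p = p' := by
    have e1 := Finset.orderEmbOfFin_unique hcard
      (fun x => Finset.mem_image_of_mem p (Finset.mem_univ x)) hpmono
    have e2 := Finset.orderEmbOfFin_unique hcard
      (fun x => himg ▸ Finset.mem_image_of_mem p' (Finset.mem_univ x)) hpmono'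
    exact e1.trans e2.symm
  subst hpp'
  -- the difference rowspace
  set Y' : Submodule F (Fin n → F) := Submodule.span F (Set.range (N - M)) with hY'
  have hrowdiff : ∀ i i', (N - M) i (p i') = 0 := by
    intro i i'
    by_cases h : i = i'
    · subst h; simp [Matrix.sub_apply, hp1, hp1']
    · simp [Matrix.sub_apply, hp0 i i' h, hp0' i i' h]
  have hY'zero : ∀ x ∈ Y', ∀ i, x (p i) = 0 := by
    intro x hx i
    obtain ⟨c, rfl⟩ := (Submodule.mem_span_range_iff_exists_fun F).mp hx
    rw [Finset.sum_apply, Finset.sum_eq_zero]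
    intro i' _
    simp [hrowdiff i' i]
  -- X ⊓ Y' = ⊥
  have hint : X ⊓ Y' = ⊥ := by
    rw [eq_bot_iff]
    rintro x ⟨hx1, hx2⟩
    have := eval_pivot_zero M p hp1 hp0 x (hMX ▸ hx1) (hY'zero x hx2)
    simp [this]
  -- X ⊔ Y' = X ⊔ Y
  have hsup : X ⊔ Y' = X ⊔ Y := by
    apply le_antisymm
    · apply sup_le le_sup_left
      rw [hY', Submodule.span_le]
      rintro _ ⟨i, rfl⟩
      have : (N - M) i = N i - M i := rfl
      rw [this]
      exact sub_mem (Submodule.mem_sup_right (hNY ▸ Submodule.subset_span ⟨i, rfl⟩))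
        (Submodule.mem_sup_left (hMX ▸ Submodule.subset_span ⟨i, rfl⟩))
    · apply sup_le le_sup_left
      rw [← hNY, Submodule.span_le]
      rintro _ ⟨i, rfl⟩
      have : N i = M i + (N - M) i := by funext l; simp [Matrix.sub_apply]
      rw [this]
      exact add_mem (Submodule.mem_sup_left (hMX ▸ Submodule.subset_span ⟨i, rfl⟩))
        (Submodule.mem_sup_right (Submodule.subset_span ⟨i, rfl⟩))
  -- rank of M - N equals finrank Y'
  have hspans : Submodule.span F (Set.range (M - N)) = Y' := by
    rw [hY']
    apply le_antisymm <;> rw [Submodule.span_le] <;> rintro _ ⟨i, rfl⟩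
    · have : (M - N) i = -((N - M) i) := by funext l; simp [Matrix.sub_apply]
      rw [this]
      exact neg_mem (Submodule.subset_span ⟨i, rfl⟩)
    · have : (N - M) i = -((M - N) i) := by funext l; simp [Matrix.sub_apply]
      rw [this]
      exact neg_mem (Submodule.subset_span ⟨i, rfl⟩)
  have hrank : (M - N).rank = finrank F Y' := by
    rw [Matrix.rank_eq_finrank_span_row, Matrix.row, hspans]
  set r := (M - N).rank with hr
  -- dimension count
  have hdim : finrank F ↥(X ⊔ Y) = k + r := by
    have := Submodule.finrank_sup_add_finrank_inf_eq X Y'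
    rw [hint, hsup] at this
    simp only [finrank_bot, add_zero] at this
    rw [this, hX, hrank]
  have hdiminf : finrank F ↥(X ⊓ Y) + (k + r) = k + k := by
    have := Submodule.finrank_sup_add_finrank_inf_eq X Y
    rw [hdim, hX, hY] at this
    omega
  have hrk : r ≤ k := by omega
  constructor
  · rw [dS, hX, hY]; omega
  · rw [dI, hX, hY]; omega
end

section
/- Let X, Y ∈ G_q(k,n) be such that RE(X) and RE(Y) have a quasi-pending block of size m₁×ℓ₁ in the same position, and suppose d_H(v(X),v(Y)) = 2d, where d_H is the Hamming distance. Let B_X and B_Y denote the m₁×ℓ₁ submatrices of the Ferrers tableaux forms F(X) and F(Y) corresponding to these quasi-pending blocks. Then d_I(X,Y) ≥ d + rank(B_X − B_Y), or equivalently d_S(X,Y) ≥ 2d + 2·rank(B_X − B_Y). -/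
open Module

/-- Number of dots in row `i` (0-indexed from the top) of the Ferrers diagram of an RREF
matrix with pivot map `p`: the dots of row `i` correspond to the non-pivot columns to the
right of `p i` (the diagram columns are the non-pivot columns to the right of the first
pivot, and the rows are right-justified). -/
def rowDots {n k : ℕ} (p : Fin k → Fin n) (i : Fin k) : ℕ :=
  (Finset.univ.filter fun j : Fin n => (∀ i', p i' ≠ j) ∧ p i < j).card

/-- Number of dots in the rightmost column of the Ferrers diagram of an RREF matrix with
pivot map `p`: since the diagram is right-justified, this is the number of rows having at
least one dot. -/
def rightColDots {n k : ℕ} (p : Fin k → Fin n) : ℕ :=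
  (Finset.univ.filter fun i : Fin k => ∃ j : Fin n, (∀ i', p i' ≠ j) ∧ p i < j).card

set_option maxHeartbeats 1000000 in
/-- Auxiliary general form of the pending-block bound, with the block matrix `B`
given abstractly by its entries. -/
theorem statement3_aux {n k d m₁ ℓ₁ : ℕ}
    {F : Type*} [Field F]
    (hk : 0 < k) (hm₁k : m₁ < k)
    (X Y : Submodule F (Fin n → F))
    (M N : Matrix (Fin k) (Fin n) F) (p r : Fin k → Fin n)
    (hpmono : StrictMono p) (hM1 : ∀ i, M i (p i) = 1)
    (hM0 : ∀ i j, j < p i → M i j = 0) (hMc : ∀ i i', i ≠ i' → M i (p i') = 0)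
    (hXM : Submodule.span F (Set.range M) = X) (hXk : finrank F X = k)
    (hrmono : StrictMono r) (hN1 : ∀ i, N i (r i) = 1)
    (hN0 : ∀ i j, j < r i → N i j = 0) (hNc : ∀ i i', i ≠ i' → N i (r i') = 0)
    (hYN : Submodule.span F (Set.range N) = Y) (hYk : finrank F Y = k)
    (hHam : (symmDiff (Finset.image p Finset.univ) (Finset.image r Finset.univ)).card = 2 * d)
    (C : Finset (Fin n))
    (hCp : ∀ c ∈ C, (∀ i, p i ≠ c) ∧ p ⟨0, hk⟩ < c)
    (hCr : ∀ c ∈ C, (∀ i, r i ≠ c) ∧ r ⟨0, hk⟩ < c)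
    (hCleftP : ∀ j : Fin n, (∀ i, p i ≠ j) → p ⟨0, hk⟩ < j → j ∉ C → ∀ c ∈ C, c < j)
    (hCleftR : ∀ j : Fin n, (∀ i, r i ≠ j) → r ⟨0, hk⟩ < j → j ∉ C → ∀ c ∈ C, c < j)
    (hPivLeft : ∀ j : Fin n, (∀ c ∈ C, j < c) → ((∃ i, p i = j) ↔ (∃ i, r i = j)))
    (emb : Fin ℓ₁ → Fin n) (hembC : ∀ c, emb c ∈ C)
    (B : Matrix (Fin m₁) (Fin ℓ₁) F)
    (hBdef : ∀ i c, B i c = M (Fin.castLE hm₁k.le i) (emb c) - N (Fin.castLE hm₁k.le i) (emb c)) :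
    d + B.rank ≤ dI X Y ∧ 2 * d + 2 * B.rank ≤ dS X Y := by
  classical
  have hpinj := hpmono.injective
  have hrinj := hrmono.injective
  set P : Finset (Fin n) := Finset.image p Finset.univ with hP
  set R : Finset (Fin n) := Finset.image r Finset.univ with hR
  -- cardinalities of pivot sets
  have hPk : P.card = k := by
    rw [hP, Finset.card_image_of_injective _ hpinj, Finset.card_univ, Fintype.card_fin]
  have hRk : R.card = k := by
    rw [hR, Finset.card_image_of_injective _ hrinj, Finset.card_univ, Fintype.card_fin]
  have hdRP : (R \ P).card = d := by
    have h1 := Finset.card_sdiff_add_card_inter P R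
    have h2 := Finset.card_sdiff_add_card_inter R P
    rw [Finset.inter_comm] at h2
    have h3 : (symmDiff P R).card = (P \ R).card + (R \ P).card := by
      rw [symmDiff_def]
      exact Finset.card_union_of_disjoint disjoint_sdiff_sdiff
    omega
  -- "Low" columns: those at or to the left of some block column
  set Low : Fin n → Prop := fun j => ∃ c ∈ C, j ≤ c with hLow
  have hNotLow : ∀ j : Fin n, ¬ Low j ↔ ∀ c ∈ C, c < j := by
    intro j; simp [hLow, not_le]
  have hLowDown : ∀ j j' : Fin n, j' ≤ j → Low j → Low j' := by
    rintro j j' h ⟨c, hc, hjc⟩; exact ⟨c, hc, le_trans h hjc⟩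
  have hp0le : ∀ i, p ⟨0, hk⟩ ≤ p i := fun i => hpmono.monotone (by simp [Fin.le_def])
  have hr0le : ∀ i, r ⟨0, hk⟩ ≤ r i := fun i => hrmono.monotone (by simp [Fin.le_def])
  -- on low columns, the pivot columns of the two matrices coincide
  have hcommon : ∀ j : Fin n, Low j → ((∃ i, p i = j) ↔ (∃ i, r i = j)) := by
    intro j hlow
    by_cases hall : ∀ c ∈ C, j < c
    · exact hPivLeft j hall
    push_neg at hall
    obtain ⟨c₀, hc₀C, hc₀⟩ := hall
    constructor
    · rintro ⟨i, rfl⟩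
      by_contra hno
      push_neg at hno
      have hjC : p i ∉ C := fun h => (hCp _ h).1 i rfl
      have hc₀lt : c₀ < p i := lt_of_le_of_ne hc₀ (fun h => hjC (h ▸ hc₀C))
      have hr0 : r ⟨0, hk⟩ < p i := lt_trans (hCr c₀ hc₀C).2 hc₀lt
      have := hCleftR (p i) hno hr0 hjC
      exact ((hNotLow (p i)).mpr this) hlow
    · rintro ⟨i, rfl⟩
      by_contra hno
      push_neg at hno
      have hjC : r i ∉ C := fun h => (hCr _ h).1 i rfl
      have hc₀lt : c₀ < r i := lt_of_le_of_ne hc₀ (fun h => hjC (h ▸ hc₀C))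
      have hp0 : p ⟨0, hk⟩ < r i := lt_trans (hCp c₀ hc₀C).2 hc₀lt
      have := hCleftP (r i) hno hp0 hjC
      exact ((hNotLow (r i)).mpr this) hlow
  -- counting: the common low pivots appear in the same rows
  have hIic : ∀ (s : Fin k → Fin n), StrictMono s → ∀ i : Fin k,
      (Finset.univ.filter fun j => j ≤ s i ∧ ∃ i₀, s i₀ = j).card = (i : ℕ) + 1 := by
    intro s hs i
    have himg : Finset.image s (Finset.Iic i)
        = Finset.univ.filter fun j => j ≤ s i ∧ ∃ i₀, s i₀ = j := by
      ext j
      simp only [Finset.mem_image, Finset.mem_Iic, Finset.mem_filter, Finset.mem_univ, true_and]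
      constructor
      · rintro ⟨i₀, hi₀, rfl⟩; exact ⟨hs.monotone hi₀, i₀, rfl⟩
      · rintro ⟨hle, i₀, rfl⟩; exact ⟨i₀, hs.le_iff_le.mp hle, rfl⟩
    rw [← himg, Finset.card_image_of_injective _ hs.injective, Fin.card_Iic]
  have halign : ∀ i i' : Fin k, Low (p i) → p i = r i' → i = i' := by
    intro i i' hlow heq
    have hsets : (Finset.univ.filter fun j => j ≤ p i ∧ ∃ i₀, p i₀ = j)
        = Finset.univ.filter fun j => j ≤ r i' ∧ ∃ i₀, r i₀ = j := by
      ext j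
      simp only [Finset.mem_filter, Finset.mem_univ, true_and, ← heq]
      constructor
      · rintro ⟨hle, hex⟩; exact ⟨hle, (hcommon j (hLowDown _ _ hle hlow)).mp hex⟩
      · rintro ⟨hle, hex⟩; exact ⟨hle, (hcommon j (hLowDown _ _ hle hlow)).mpr hex⟩
    have h1 := hIic p hpmono i
    have h2 := hIic r hrmono i'
    rw [hsets, h2] at h1
    exact Fin.ext (by omega)
  -- on low non-block columns, the two matrices agree
  have hMN : ∀ (i : Fin k) (j : Fin n), Low j → j ∉ C → M i j = N i j := by
    intro i j hlow hjC
    by_cases hpj : ∃ i'', p i'' = j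
    · obtain ⟨i'', rfl⟩ := hpj
      obtain ⟨i''', hi'''⟩ := (hcommon _ hlow).mp ⟨i'', rfl⟩
      have hieq : i'' = i''' := halign i'' i''' hlow hi'''.symm
      subst hieq
      by_cases hii : i = i''
      · subst hii
        rw [hM1 i, ← hi''', hN1 i]
      · rw [hMc i i'' hii, ← hi''', hNc i i'' hii]
    · have hrj : ¬ ∃ i'', r i'' = j := fun h => hpj ((hcommon j hlow).mpr h)
      push_neg at hpj hrj
      have hjp : j < p i := by
        by_contra hge
        push_neg at hge
        have h1 : p i < j := lt_of_le_of_ne hge (hpj i)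
        have h0 : p ⟨0, hk⟩ < j := lt_of_le_of_lt (hp0le i) h1
        exact ((hNotLow j).mpr (hCleftP j hpj h0 hjC)) hlow
      have hjr : j < r i := by
        by_contra hge
        push_neg at hge
        have h1 : r i < j := lt_of_le_of_ne hge (hrj i)
        have h0 : r ⟨0, hk⟩ < j := lt_of_le_of_lt (hr0le i) h1
        exact ((hNotLow j).mpr (hCleftR j hrj h0 hjC)) hlow
      rw [hM0 i j hjp, hN0 i j hjr]
  -- pivots of `N` that are not pivots of `M` lie to the right of all block columns
  have hhighR : ∀ i : Fin k, r i ∉ P → ∀ c ∈ C, c < r i := by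
    intro i hnp c hc
    by_contra hge
    push_neg at hge
    have hlow : Low (r i) := ⟨c, hc, hge⟩
    obtain ⟨i', hi'⟩ := (hcommon _ hlow).mpr ⟨i, rfl⟩
    exact hnp (by rw [hP]; exact Finset.mem_image.mpr ⟨i', Finset.mem_univ _, hi'⟩)
  -- the rank of `B` as the dimension of its row space
  have hrk : B.rank = finrank F (Submodule.span F (Set.range (fun i : Fin m₁ => B i))) := by
    rw [← Matrix.rank_transpose B, Matrix.rank_eq_finrank_span_cols]
    rfl
  obtain ⟨bset, hbsub, hbspan, hbli⟩ :=
    exists_linearIndependent F (Set.range (fun i : Fin m₁ => B i))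
  have hbfin : bset.Finite := (Set.finite_range _).subset hbsub
  haveI := hbfin.fintype
  have hbcard : Fintype.card bset = B.rank := by
    calc Fintype.card bset = bset.toFinset.card := (Set.toFinset_card _).symm
      _ = finrank F (Submodule.span F bset) := (finrank_span_set_eq_card hbli).symm
      _ = finrank F (Submodule.span F (Set.range (fun i : Fin m₁ => B i))) := by rw [hbspan]
      _ = B.rank := hrk.symm
  have hechoice : ∀ w : bset, ∃ i : Fin m₁, B i = (w : Fin ℓ₁ → F) := fun w => hbsub w.2
  choose e he using hechoice
  -- the linearly independent family
  set u : (Fin k ⊕ ({i : Fin k // r i ∉ P} ⊕ bset)) → (Fin n → F) := Sum.elim (fun i => M i)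
    (Sum.elim (fun i => N i.1)
      (fun w => M (Fin.castLE hm₁k.le (e w)) - N (Fin.castLE hm₁k.le (e w)))) with hu
  have hLI : LinearIndependent F u := by
    rw [Fintype.linearIndependent_iff]
    intro g hg
    have hgj : ∀ j : Fin n, (∑ i : Fin k, g (Sum.inl i) * M i j)
        + ((∑ i : {i : Fin k // r i ∉ P}, g (Sum.inr (Sum.inl i)) * N i.1 j)
        + (∑ w : bset, g (Sum.inr (Sum.inr w)) *
            (M (Fin.castLE hm₁k.le (e w)) j - N (Fin.castLE hm₁k.le (e w)) j))) = 0 := by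
      intro j
      have h0 := congrFun hg j
      simpa [hu, Fintype.sum_sum_type, Finset.sum_apply, Pi.smul_apply, smul_eq_mul,
        Pi.sub_apply] using h0
    have stepA : ∀ i : Fin k, Low (p i) → g (Sum.inl i) = 0 := by
      intro i hlow
      have hpiC : p i ∉ C := fun h => (hCp _ h).1 i rfl
      have e2 : (∑ i' : {i : Fin k // r i ∉ P}, g (Sum.inr (Sum.inl i')) * N i'.1 (p i)) = 0 := by
        refine Finset.sum_eq_zero fun i' _ => ?_
        obtain ⟨c, hcC, hpc⟩ := hlow
        rw [hN0 _ _ (lt_of_le_of_lt hpc (hhighR i'.1 i'.2 c hcC)), mul_zero]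
      have e3 : (∑ w : bset, g (Sum.inr (Sum.inr w)) *
          (M (Fin.castLE hm₁k.le (e w)) (p i) - N (Fin.castLE hm₁k.le (e w)) (p i))) = 0 := by
        refine Finset.sum_eq_zero fun w _ => ?_
        rw [hMN _ _ hlow hpiC, sub_self, mul_zero]
      have e1 : (∑ i' : Fin k, g (Sum.inl i') * M i' (p i)) = g (Sum.inl i) := by
        rw [Finset.sum_eq_single i (fun i' _ hne => by rw [hMc i' i hne, mul_zero])
          (fun h => absurd (Finset.mem_univ i) h), hM1, mul_one]
      have h0 := hgj (p i)
      rw [e1, e2, e3, add_zero, add_zero] at h0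
      exact h0
    have stepB : ∀ w : bset, g (Sum.inr (Sum.inr w)) = 0 := by
      have hsum : ∑ w : bset, g (Sum.inr (Sum.inr w)) • (w : Fin ℓ₁ → F) = 0 := by
        funext cc
        have hcC : emb cc ∈ C := hembC cc
        have e1 : (∑ i' : Fin k, g (Sum.inl i') * M i' (emb cc)) = 0 := by
          refine Finset.sum_eq_zero fun i' _ => ?_
          by_cases hlow : Low (p i')
          · rw [stepA i' hlow, zero_mul]
          · rw [hM0 i' (emb cc) ((hNotLow _).mp hlow (emb cc) hcC), mul_zero]
        have e2 : (∑ i' : {i : Fin k // r i ∉ P},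
            g (Sum.inr (Sum.inl i')) * N i'.1 (emb cc)) = 0 := by
          refine Finset.sum_eq_zero fun i' _ => ?_
          rw [hN0 _ _ (hhighR i'.1 i'.2 (emb cc) hcC), mul_zero]
        have hterm : ∀ w : bset,
            M (Fin.castLE hm₁k.le (e w)) (emb cc) - N (Fin.castLE hm₁k.le (e w)) (emb cc)
              = (w : Fin ℓ₁ → F) cc := by
          intro w
          rw [← hBdef (e w) cc]
          exact congrFun (he w) cc
        have h0 := hgj (emb cc)
        rw [e1, e2, zero_add, zero_add] at h0
        rw [Finset.sum_congr rfl (fun w _ => by rw [hterm w])] at h0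
        simpa [Finset.sum_apply, Pi.smul_apply, smul_eq_mul] using h0
      exact Fintype.linearIndependent_iff.mp hbli (fun w => g (Sum.inr (Sum.inr w))) hsum
    have stepC : ∀ jv : ℕ, (∀ i : Fin k, (p i : ℕ) = jv → g (Sum.inl i) = 0) ∧
        (∀ i : {i : Fin k // r i ∉ P}, (r i.1 : ℕ) = jv → g (Sum.inr (Sum.inl i)) = 0) := by
      intro jv
      induction jv using Nat.strong_induction_on with
      | _ jv IH =>
        constructor
        · intro i hpi
          have e3 : (∑ w : bset, g (Sum.inr (Sum.inr w)) *
              (M (Fin.castLE hm₁k.le (e w)) (p i) - N (Fin.castLE hm₁k.le (e w)) (p i))) = 0 :=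
            Finset.sum_eq_zero fun w _ => by rw [stepB w, zero_mul]
          have e2 : (∑ i' : {i : Fin k // r i ∉ P},
              g (Sum.inr (Sum.inl i')) * N i'.1 (p i)) = 0 := by
            refine Finset.sum_eq_zero fun i' _ => ?_
            rcases lt_trichotomy (r i'.1) (p i) with h | h | h
            · rw [(IH (r i'.1 : ℕ) (by rw [← hpi]; exact h)).2 i' rfl, zero_mul]
            · exact absurd (h ▸ (Finset.mem_image.mpr ⟨i, Finset.mem_univ i, rfl⟩ : p i ∈ P))
                i'.2
            · rw [hN0 _ _ h, mul_zero]
          have e1 : (∑ i' : Fin k, g (Sum.inl i') * M i' (p i)) = g (Sum.inl i) := by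
            rw [Finset.sum_eq_single i ?h1 (fun h => absurd (Finset.mem_univ i) h), hM1, mul_one]
            case h1 =>
              intro i' _ hne
              rcases lt_trichotomy (p i') (p i) with h | h | h
              · rw [(IH (p i' : ℕ) (by rw [← hpi]; exact h)).1 i' rfl, zero_mul]
              · exact absurd (hpinj h) hne
              · rw [hM0 _ _ h, mul_zero]
          have h0 := hgj (p i)
          rw [e1, e2, e3, add_zero, add_zero] at h0
          exact h0
        · intro i hri
          have e3 : (∑ w : bset, g (Sum.inr (Sum.inr w)) *
              (M (Fin.castLE hm₁k.le (e w)) (r i.1) - N (Fin.castLE hm₁k.le (e w)) (r i.1))) = 0 :=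
            Finset.sum_eq_zero fun w _ => by rw [stepB w, zero_mul]
          have e1 : (∑ i' : Fin k, g (Sum.inl i') * M i' (r i.1)) = 0 := by
            refine Finset.sum_eq_zero fun i' _ => ?_
            rcases lt_trichotomy (p i') (r i.1) with h | h | h
            · rw [(IH (p i' : ℕ) (by rw [← hri]; exact h)).1 i' rfl, zero_mul]
            · exact absurd (h ▸ (Finset.mem_image.mpr ⟨i', Finset.mem_univ i', rfl⟩ : p i' ∈ P))
                i.2
            · rw [hM0 _ _ h, mul_zero]
          have e2 : (∑ i' : {i : Fin k // r i ∉ P},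
              g (Sum.inr (Sum.inl i')) * N i'.1 (r i.1)) = g (Sum.inr (Sum.inl i)) := by
            rw [Finset.sum_eq_single i ?h1 (fun h => absurd (Finset.mem_univ i) h), hN1, mul_one]
            case h1 =>
              intro i' _ hne
              rcases lt_trichotomy (r i'.1) (r i.1) with h | h | h
              · rw [(IH (r i'.1 : ℕ) (by rw [← hri]; exact h)).2 i' rfl, zero_mul]
              · exact absurd (Subtype.ext (hrinj h)) hne
              · rw [hN0 _ _ h, mul_zero]
          have h0 := hgj (r i.1)
          rw [e1, e2, e3, zero_add, add_zero] at h0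
          exact h0
    rintro (i | i' | w)
    · exact (stepC (p i : ℕ)).1 i rfl
    · exact (stepC (r i'.1 : ℕ)).2 i' rfl
    · exact stepB w
  -- the family lives in `X ⊔ Y`
  have hsub : Submodule.span F (Set.range u) ≤ X ⊔ Y := by
    rw [Submodule.span_le]
    rintro v ⟨x, rfl⟩
    rcases x with i | i' | w
    · exact Submodule.mem_sup_left (hXM ▸ Submodule.subset_span (Set.mem_range_self i))
    · exact Submodule.mem_sup_right (hYN ▸ Submodule.subset_span (Set.mem_range_self i'.1))
    · exact sub_mem
        (Submodule.mem_sup_left (hXM ▸ Submodule.subset_span (Set.mem_range_self _)))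
        (Submodule.mem_sup_right (hYN ▸ Submodule.subset_span (Set.mem_range_self _)))
  -- cardinality of the index type
  have hfiltd : (Finset.univ.filter fun i : Fin k => r i ∉ P).card = d := by
    have himg : Finset.image r (Finset.univ.filter fun i : Fin k => r i ∉ P) = R \ P := by
      ext j
      simp only [Finset.mem_image, Finset.mem_filter, Finset.mem_univ, true_and,
        Finset.mem_sdiff, hR]
      constructor
      · rintro ⟨i, hi, rfl⟩; exact ⟨⟨i, rfl⟩, hi⟩
      · rintro ⟨⟨i, rfl⟩, hjP⟩; exact ⟨i, hjP, rfl⟩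
    rw [← hdRP, ← himg, Finset.card_image_of_injective _ hrinj]
  have hcard : Fintype.card (Fin k ⊕ ({i : Fin k // r i ∉ P} ⊕ bset)) = k + (d + B.rank) := by
    rw [Fintype.card_sum, Fintype.card_sum, Fintype.card_fin, hbcard]
    congr 1
    congr 1
    rw [Fintype.card_subtype, hfiltd]
  -- dimension count
  have hrank_sup : k + (d + B.rank) ≤ finrank F ↥(X ⊔ Y) := by
    calc k + (d + B.rank) = Fintype.card (Fin k ⊕ ({i : Fin k // r i ∉ P} ⊕ bset)) := hcard.symm
      _ = finrank F ↥(Submodule.span F (Set.range u)) := (finrank_span_eq_card hLI).symm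
      _ ≤ finrank F ↥(X ⊔ Y) := Submodule.finrank_mono hsub
  have hdim : finrank F ↥(X ⊔ Y) + finrank F ↥(X ⊓ Y) = k + k := by
    rw [Submodule.finrank_sup_add_finrank_inf_eq, hXk, hYk]
  constructor
  · simp only [dI, hXk, hYk, max_self]
    omega
  · simp only [dS, hXk, hYk]
    omega

/-- **Pending-block theorem.** Let `X, Y ∈ G_q(k,n)`, given by their reduced row echelon
form matrices `M = RE(X)` and `N = RE(Y)` with pivot maps `p` and `r`.  Suppose `RE(X)`
and `RE(Y)` have a quasi-pending block of size `m₁ × ℓ₁` in the same position, given by a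
set `C` of `ℓ₁` columns: the columns of `C` are the `ℓ₁` leftmost columns of both Ferrers
diagrams, the pivot columns lying to the left of the block coincide, and in both diagrams
the `(m₁+1)`-st row has fewer dots than the `m₁`-th row and at most `m - ℓ₁` dots (where
`m` is the number of dots of the rightmost column).  If the Hamming distance of the
identifying vectors is `2d`, then, denoting by `B_X` and `B_Y` the `m₁ × ℓ₁` submatrices
of the Ferrers tableaux forms corresponding to the blocks,
`d_I(X,Y) ≥ d + rank (B_X - B_Y)` and `d_S(X,Y) ≥ 2d + 2 rank (B_X - B_Y)`. -/
theorem statement3 (q n k d m₁ ℓ₁ : ℕ) (hq : IsPrimePow q)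
    (F : Type*) [Field F] [Fintype F] (hF : Fintype.card F = q)
    (hk : 0 < k)
    (X Y : Submodule F (Fin n → F))
    (M N : Matrix (Fin k) (Fin n) F) (p r : Fin k → Fin n)
    -- `M` is in RREF with pivot map `p`, and its rows form a basis of `X`
    (hpmono : StrictMono p) (hM1 : ∀ i, M i (p i) = 1)
    (hM0 : ∀ i j, j < p i → M i j = 0) (hMc : ∀ i i', i ≠ i' → M i (p i') = 0)
    (hXM : Submodule.span F (Set.range M) = X) (hXk : finrank F X = k)
    -- `N` is in RREF with pivot map `r`, and its rows form a basis of `Y`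
    (hrmono : StrictMono r) (hN1 : ∀ i, N i (r i) = 1)
    (hN0 : ∀ i j, j < r i → N i j = 0) (hNc : ∀ i i', i ≠ i' → N i (r i') = 0)
    (hYN : Submodule.span F (Set.range N) = Y) (hYk : finrank F Y = k)
    -- the Hamming distance of the identifying vectors is `2d`
    (hHam : (symmDiff (Finset.image p Finset.univ) (Finset.image r Finset.univ)).card = 2 * d)
    -- `C` is the set of the `ℓ₁` block columns
    (C : Finset (Fin n)) (hCcard : C.card = ℓ₁)
    -- block columns are non-pivot columns to the right of the first pivot, for both matrices
    (hCp : ∀ c ∈ C, (∀ i, p i ≠ c) ∧ p ⟨0, hk⟩ < c)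
    (hCr : ∀ c ∈ C, (∀ i, r i ≠ c) ∧ r ⟨0, hk⟩ < c)
    -- they are the leftmost such columns, i.e. the leftmost `ℓ₁` columns of both diagrams
    (hCleftP : ∀ j : Fin n, (∀ i, p i ≠ j) → p ⟨0, hk⟩ < j → j ∉ C → ∀ c ∈ C, c < j)
    (hCleftR : ∀ j : Fin n, (∀ i, r i ≠ j) → r ⟨0, hk⟩ < j → j ∉ C → ∀ c ∈ C, c < j)
    -- the pivot columns of `RE(X)` and `RE(Y)` lying to the left of the block coincide
    (hPivLeft : ∀ j : Fin n, (∀ c ∈ C, j < c) → ((∃ i, p i = j) ↔ (∃ i, r i = j)))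
    -- quasi-pending block of size `m₁ × ℓ₁`: shape conditions on both Ferrers diagrams
    (hm₁pos : 0 < m₁) (hm₁k : m₁ < k)
    (hm₁P : m₁ < rightColDots p) (hm₁R : m₁ < rightColDots r)
    (hℓ₁P : ℓ₁ < rowDots p ⟨0, hk⟩) (hℓ₁R : ℓ₁ < rowDots r ⟨0, hk⟩)
    (hqpP : rowDots p ⟨m₁, hm₁k⟩ < rowDots p ⟨m₁ - 1, by omega⟩ ∧
      rowDots p ⟨m₁, hm₁k⟩ + ℓ₁ ≤ rightColDots p)
    (hqpR : rowDots r ⟨m₁, hm₁k⟩ < rowDots r ⟨m₁ - 1, by omega⟩ ∧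
      rowDots r ⟨m₁, hm₁k⟩ + ℓ₁ ≤ rightColDots r) :
    d + Matrix.rank (Matrix.of fun (i : Fin m₁) (c : Fin ℓ₁) =>
        M (Fin.castLE hm₁k.le i) (C.orderIsoOfFin hCcard c).1
          - N (Fin.castLE hm₁k.le i) (C.orderIsoOfFin hCcard c).1) ≤ dI X Y ∧
    2 * d + 2 * Matrix.rank (Matrix.of fun (i : Fin m₁) (c : Fin ℓ₁) =>
        M (Fin.castLE hm₁k.le i) (C.orderIsoOfFin hCcard c).1
          - N (Fin.castLE hm₁k.le i) (C.orderIsoOfFin hCcard c).1) ≤ dS X Y := by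
  exact statement3_aux hk hm₁k X Y M N p r hpmono hM1 hM0 hMc hXM hXk
    hrmono hN1 hN0 hNc hYN hYk hHam C hCp hCr hCleftP hCleftR hPivLeft
    (fun c => (C.orderIsoOfFin hCcard c).1) (fun c => (C.orderIsoOfFin hCcard c).2)
    _ (fun i c => rfl)
end

section
/- Let k ≥ 3 and let n, n₁ be integers with k−2 ≤ n₁ ≤ n−k−2. Let v ∈ {0,1}^n have weight k with exactly k−2 ones among its first n₁ coordinates. Then each of the first k−2 rows of the Ferrers diagram F_v contains at least as many dots as the rightmost column of F_v; moreover, for the quantities w_i (0 ≤ i ≤ k−2) defined as the number of dots of F_v contained neither in the first i rows nor in the rightmost k−2−i columns, one has min_{0 ≤ i ≤ k−2} w_i = w_{k−2}, i.e., the upper bound min_i w_i on the dimension of a Ferrers diagram rank-metric code in F_v with minimum rank distance k−1 equals the number of dots in the bottom two rows of F_v. -/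
/-- Number of dots in row `i` (0-indexed from the top) of the Ferrers diagram `F_v` of a
weight-`k` binary vector of length `n` whose ones are at the positions given by the
strictly increasing map `p : Fin k → Fin n`: row `i` has `n - p i - 1 - (k - 1 - i)`
dots, computed without truncation as `(n + i) - (k + p i)`. -/
def rowLen {n k : ℕ} (p : Fin k → Fin n) (i : Fin k) : ℕ :=
  (n + i.val) - (k + (p i).val)

/-- `wdots p i` is the number of dots of the Ferrers diagram `F_v` contained neither in
the first `i` rows nor in the rightmost `k - 2 - i` columns (the quantity `w_i` for
minimum rank distance `k - 1`). -/
def wdots {n : ℕ} (k : ℕ) (p : Fin k → Fin n) (i : ℕ) : ℕ :=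
  ∑ j ∈ Finset.univ.filter (fun j : Fin k => i ≤ (j : ℕ)), (rowLen p j - (k - 2 - i))

lemma sm_add {n k : ℕ} {p : Fin k → Fin n} (hp : StrictMono p) :
    ∀ (d : ℕ) (a b : Fin k), a.val + d = b.val → (p a).val + d ≤ (p b).val := by
  intro d
  induction d with
  | zero =>
    intro a b h
    have hab : a = b := Fin.ext (by omega)
    rw [hab]
    omega
  | succ m ih =>
    intro a b h
    have hb : a.val + m < k := by omega
    have h1 := ih a ⟨a.val + m, hb⟩ rfl
    have h2 : (p ⟨a.val + m, hb⟩ : Fin n) < p b := hp (by simp [Fin.lt_def]; omega)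
    have := Fin.lt_def.mp h2
    omega


/-- Let `k ≥ 3`, `k - 2 ≤ n₁` and `n₁ + k + 2 ≤ n` (i.e. `n₁ ≤ n - k - 2`), and let `v`
be a weight-`k` binary vector of length `n` (with ones at positions `p 0 < … < p (k-1)`)
having exactly `k - 2` ones among its first `n₁` coordinates.  Then every one of the
first `k - 2` rows of the Ferrers diagram `F_v` has at least as many dots as the
rightmost column, and the minimum of the quantities `w_i` (`0 ≤ i ≤ k - 2`) is attained
at `i = k - 2`, where it equals the number of dots in the bottom two rows. -/
theorem statement4 (n n₁ k : ℕ) (hk : 3 ≤ k)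
    (hn₁l : k - 2 ≤ n₁) (hn₁u : n₁ + k + 2 ≤ n)
    (p : Fin k → Fin n) (hp : StrictMono p)
    (hones : (Finset.univ.filter fun i : Fin k => (p i : ℕ) < n₁).card = k - 2) :
    (∀ i : Fin k, (i : ℕ) < k - 2 →
      (Finset.univ.filter fun j : Fin k => 1 ≤ rowLen p j).card ≤ rowLen p i) ∧
    (∀ i : ℕ, i ≤ k - 2 → wdots k p (k - 2) ≤ wdots k p i) ∧
    wdots k p (k - 2) = rowLen p ⟨k - 2, by omega⟩ + rowLen p ⟨k - 1, by omega⟩ := by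
  -- Step 1: positions with p j < n₁ are exactly j < k-2
  have hlt : ∀ j : Fin k, j.val < k - 2 → (p j).val < n₁ := by
    intro j hj
    by_contra hge
    push_neg at hge
    have hsub : (Finset.univ.filter fun i : Fin k => (p i : ℕ) < n₁) ⊆ Finset.Iio j := by
      intro x hx
      simp only [Finset.mem_filter, Finset.mem_univ, true_and] at hx
      rw [Finset.mem_Iio]
      by_contra hxj
      push_neg at hxj
      have := Fin.le_def.mp (hp.monotone hxj)
      omega
    have := Finset.card_le_card hsub
    rw [hones, Fin.card_Iio] at this
    omega
  -- Step 2: refined bound for rows above k-2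
  have hbound : ∀ j : Fin k, j.val < k - 2 → (p j).val + k ≤ n₁ + j.val + 2 := by
    intro j hj
    have hb : k - 3 < k := by omega
    have h1 := sm_add hp (k - 3 - j.val) j ⟨k - 3, hb⟩ (by simp; omega)
    have h2 := hlt ⟨k - 3, hb⟩ (by simp; omega)
    omega
  have hrow : ∀ j : Fin k, j.val < k - 2 → k ≤ rowLen p j := by
    intro j hj
    have := hbound j hj
    unfold rowLen
    omega
  refine ⟨?_, ?_, ?_⟩
  · intro i hi
    calc (Finset.univ.filter fun j : Fin k => 1 ≤ rowLen p j).card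
        ≤ Finset.univ.card := Finset.card_filter_le _ _
      _ = k := by simp
      _ ≤ rowLen p i := hrow i hi
  · intro i hi
    have hk2 : k - 2 < k := by omega
    have hk1 : k - 1 < k := by omega
    have hpairsum : ∀ c : ℕ,
        ∑ j ∈ Finset.univ.filter (fun j : Fin k => k - 2 ≤ (j : ℕ)), (rowLen p j - c)
          = (rowLen p ⟨k - 2, hk2⟩ - c) + (rowLen p ⟨k - 1, hk1⟩ - c) := by
      intro c
      have hset : (Finset.univ.filter (fun j : Fin k => k - 2 ≤ (j : ℕ)))
          = {(⟨k - 2, hk2⟩ : Fin k), ⟨k - 1, hk1⟩} := by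
        ext x
        simp only [Finset.mem_filter, Finset.mem_univ, true_and, Finset.mem_insert,
          Finset.mem_singleton, Fin.ext_iff]
        constructor
        · intro hx; have := x.isLt; omega
        · intro hx; omega
      rw [hset, Finset.sum_pair (by simp [Fin.ext_iff]; omega)]
    -- split the filter
    have hsplit : (Finset.univ.filter (fun j : Fin k => i ≤ (j : ℕ)))
        = (Finset.univ.filter (fun j : Fin k => i ≤ (j : ℕ) ∧ (j : ℕ) < k - 2))
          ∪ (Finset.univ.filter (fun j : Fin k => k - 2 ≤ (j : ℕ))) := by
      ext x
      simp only [Finset.mem_union, Finset.mem_filter, Finset.mem_univ, true_and]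
      omega
    have hdisj : Disjoint (Finset.univ.filter (fun j : Fin k => i ≤ (j : ℕ) ∧ (j : ℕ) < k - 2))
        (Finset.univ.filter (fun j : Fin k => k - 2 ≤ (j : ℕ))) := by
      rw [Finset.disjoint_left]
      intro x hx hx'
      simp only [Finset.mem_filter, Finset.mem_univ, true_and] at hx hx'
      omega
    have hwi : wdots k p i
        = (∑ j ∈ Finset.univ.filter (fun j : Fin k => i ≤ (j : ℕ) ∧ (j : ℕ) < k - 2),
            (rowLen p j - (k - 2 - i)))
          + (∑ j ∈ Finset.univ.filter (fun j : Fin k => k - 2 ≤ (j : ℕ)),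
            (rowLen p j - (k - 2 - i))) := by
      rw [wdots, hsplit, Finset.sum_union hdisj]
    -- the middle-rows sum is at least 2 * (k - 2 - i)
    have hcardmid : (Finset.univ.filter (fun j : Fin k => i ≤ (j : ℕ) ∧ (j : ℕ) < k - 2)).card
        = k - 2 - i := by
      have : (Finset.univ.filter (fun j : Fin k => i ≤ (j : ℕ) ∧ (j : ℕ) < k - 2))
          = Finset.Ico (⟨i, by omega⟩ : Fin k) ⟨k - 2, hk2⟩ := by
        ext x
        simp only [Finset.mem_filter, Finset.mem_univ, true_and, Finset.mem_Ico,
          Fin.le_def, Fin.lt_def]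
      rw [this, Fin.card_Ico]
    have hmid : 2 * (k - 2 - i)
        ≤ ∑ j ∈ Finset.univ.filter (fun j : Fin k => i ≤ (j : ℕ) ∧ (j : ℕ) < k - 2),
            (rowLen p j - (k - 2 - i)) := by
      calc 2 * (k - 2 - i)
          = ∑ _j ∈ Finset.univ.filter (fun j : Fin k => i ≤ (j : ℕ) ∧ (j : ℕ) < k - 2), 2 := by
            rw [Finset.sum_const, hcardmid]; ring
        _ ≤ _ := by
            apply Finset.sum_le_sum
            intro j hj
            simp only [Finset.mem_filter, Finset.mem_univ, true_and] at hj
            have := hrow j hj.2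
            omega
    have hw2 : wdots k p (k - 2) = rowLen p ⟨k - 2, hk2⟩ + rowLen p ⟨k - 1, hk1⟩ := by
      rw [wdots, hpairsum]
      omega
    rw [hw2, hwi, hpairsum]
    have h1 : rowLen p ⟨k - 2, hk2⟩ ≤ (rowLen p ⟨k - 2, hk2⟩ - (k - 2 - i)) + (k - 2 - i) := by
      omega
    omega
  · have hk2 : k - 2 < k := by omega
    have hk1 : k - 1 < k := by omega
    have hset : (Finset.univ.filter (fun j : Fin k => k - 2 ≤ (j : ℕ)))
        = {(⟨k - 2, hk2⟩ : Fin k), ⟨k - 1, hk1⟩} := by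
      ext x
      simp only [Finset.mem_filter, Finset.mem_univ, true_and, Finset.mem_insert,
        Finset.mem_singleton, Fin.ext_iff]
      constructor
      · intro hx; have := x.isLt; omega
      · intro hx; omega
    rw [wdots, hset, Finset.sum_pair (by simp [Fin.ext_iff]; omega)]
    omega
end

section
/- Let F be a Ferrers diagram with m rows of lengths len_1 ≥ … ≥ len_m (right-justified, top-aligned, the top row having ℓ = len_1 dots), and let x ≥ 1 be an integer such that len_j ≥ len_{j+1} + x for all 1 ≤ j ≤ m−1 and len_m = x. Then there exists an F_q-linear subspace C of the m×ℓ matrices over F_q of dimension x (cardinality q^x), all of whose elements are supported on the dots of F, such that every nonzero element of C has rank exactly m; i.e., there exists an [F, x, m] Ferrers diagram maximum rank distance code with minimum rank distance m and cardinality q^x. -/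
open Module

/-- **A Ferrers diagram maximum rank distance code of distance `m` and cardinality `q^x`.**
Let `F` be a Ferrers diagram with `m` rows of lengths `len 0 ≥ … ≥ len (m-1)`
(right-justified, top-aligned, with `ℓ = len 0` dots in the top row), such that each row
has at least `x` more dots than the next one and the bottom row has exactly `x` dots.
Then there is an `F_q`-linear space of `m × ℓ` matrices, of dimension `x` (hence of
cardinality `q^x`), supported on the dots of `F`, in which every nonzero matrix has rank
exactly `m`. -/
theorem statement5 (q m ℓ x : ℕ) (hq : IsPrimePow q)
    (F : Type*) [Field F] [Fintype F] (hF : Fintype.card F = q)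
    (hm : 0 < m) (hx : 1 ≤ x)
    (len : Fin m → ℕ) (hℓ : len ⟨0, hm⟩ = ℓ)
    (hstep : ∀ (j : ℕ) (h : j + 1 < m), len ⟨j + 1, h⟩ + x ≤ len ⟨j, by omega⟩)
    (hlast : len ⟨m - 1, by omega⟩ = x) :
    ∃ C : Submodule F (Matrix (Fin m) (Fin ℓ) F),
      finrank F C = x ∧ Nat.card C = q ^ x ∧
      (∀ A ∈ C, ∀ (i : Fin m) (j : Fin ℓ), (j : ℕ) < ℓ - len i → A i j = 0) ∧
      (∀ A ∈ C, A ≠ 0 → Matrix.rank A = m) := by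
  -- monotonicity with gaps
  have mono : ∀ (d i : ℕ) (h : i + d < m), len ⟨i + d, h⟩ + d * x ≤ len ⟨i, by omega⟩ := by
    intro d
    induction d with
    | zero => intro i h; simp
    | succ n ih =>
      intro i h
      have h1 := hstep (i + n) (by omega)
      have h2 := ih i (by omega)
      calc len ⟨i + (n+1), h⟩ + (n+1) * x
          = (len ⟨i + n + 1, by omega⟩ + x) + n * x := by ring_nf
        _ ≤ len ⟨i + n, by omega⟩ + n * x := by omega
        _ ≤ len ⟨i, by omega⟩ := h2
  have hxle : ∀ i : Fin m, x ≤ len i := by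
    intro i
    have h := mono (m - 1 - i) i (by omega)
    have : (⟨(i : ℕ) + (m - 1 - i), by omega⟩ : Fin m) = ⟨m - 1, by omega⟩ := by
      ext; simp; omega
    rw [this, hlast] at h
    have : (⟨(i : ℕ), by omega⟩ : Fin m) = i := by ext; rfl
    rw [this] at h
    omega
  have hlenℓ : ∀ i : Fin m, len i ≤ ℓ := by
    intro i
    have h := mono i 0 (by omega)
    have e1 : (⟨0 + (i:ℕ), by omega⟩ : Fin m) = i := by ext; simp
    have e2 : (⟨0, by omega⟩ : Fin m) = ⟨0, hm⟩ := rfl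
    rw [e1, e2, hℓ] at h
    omega
  have hdisj : ∀ i i' : Fin m, (i : ℕ) < (i' : ℕ) → len i' + x ≤ len i := by
    intro i i' hii
    have h := mono ((i' : ℕ) - i) i (by omega)
    have e1 : (⟨(i:ℕ) + ((i':ℕ) - i), by omega⟩ : Fin m) = i' := by ext; simp; omega
    have e2 : (⟨(i : ℕ), by omega⟩ : Fin m) = i := by ext; rfl
    rw [e1, e2] at h
    have hdx : x ≤ ((i':ℕ) - i) * x := Nat.le_mul_of_pos_left x (by omega)
    omega
  -- the linear map
  let φ : (Fin x → F) →ₗ[F] Matrix (Fin m) (Fin ℓ) F :=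
  { toFun := fun a => Matrix.of fun i j =>
      if h : ℓ - len i ≤ (j : ℕ) ∧ (j : ℕ) < ℓ - len i + x then
        a ⟨(j : ℕ) - (ℓ - len i), by omega⟩ else 0
    map_add' := by
      intro a b
      ext i j
      simp only [Matrix.of_apply, Matrix.add_apply]
      split <;> simp
    map_smul' := by
      intro r a
      ext i j
      simp only [Matrix.of_apply, Matrix.smul_apply, RingHom.id_apply, smul_eq_mul]
      split <;> simp }
  have hxℓ : x ≤ ℓ := by
    have := hxle ⟨0, hm⟩; omega
  have pf : m - 1 < m := by omega
  have hl' : len ⟨m - 1, pf⟩ = x := hlast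
  have heval : ∀ (b : Fin x → F) (k : Fin x),
      φ b ⟨m - 1, pf⟩ ⟨ℓ - x + (k : ℕ), by omega⟩ = b k := by
    intro b k
    simp only [φ, LinearMap.coe_mk, AddHom.coe_mk, Matrix.of_apply]
    rw [dif_pos ⟨by simp only [hl']; omega, by simp only [hl']; omega⟩]
    congr 1
    apply Fin.ext
    simp only [hl']
    omega
  have hinj : Function.Injective φ := by
    intro a b hab
    funext k
    rw [← heval a k, ← heval b k, hab]
  refine ⟨LinearMap.range φ, ?_, ?_, ?_, ?_⟩
  · rw [LinearMap.finrank_range_of_inj hinj]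
    simp
  · have e := (LinearEquiv.ofInjective φ hinj).toEquiv
    rw [← Nat.card_congr e, Nat.card_eq_fintype_card, Fintype.card_fun]
    simp [hF]
  · rintro A ⟨a, rfl⟩ i j hj
    simp only [φ, LinearMap.coe_mk, AddHom.coe_mk, Matrix.of_apply]
    rw [dif_neg (by omega)]
  · rintro A ⟨a, rfl⟩ hA0
    have ha : a ≠ 0 := by rintro rfl; simp at hA0
    obtain ⟨k0, hk0⟩ := Function.ne_iff.mp ha
    simp only [Pi.zero_apply] at hk0
    set A := φ a with hAdef
    have hinjv : Function.Injective (Matrix.mulVecLin A.transpose) := by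
      rw [← LinearMap.ker_eq_bot, LinearMap.ker_eq_bot']
      intro v hv
      funext i
      have hcol : ℓ - len i + (k0 : ℕ) < ℓ := by
        have := hxle i; have := hlenℓ i; omega
      have hvj := congrFun hv ⟨ℓ - len i + k0, hcol⟩
      simp only [Matrix.mulVecLin_apply, Matrix.mulVec, dotProduct,
        Matrix.transpose_apply, Pi.zero_apply] at hvj
      have hsingle : ∀ i' : Fin m, i' ≠ i →
          A i' ⟨ℓ - len i + k0, hcol⟩ * v i' = 0 := by
        intro i' hne
        have : A i' ⟨ℓ - len i + k0, hcol⟩ = 0 := by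
          simp only [A, φ, LinearMap.coe_mk, AddHom.coe_mk, Matrix.of_apply]
          rcases lt_or_gt_of_ne (fun h => hne (Fin.ext h) : (i' : ℕ) ≠ i) with h | h
          · have := hdisj i' i h
            have := hlenℓ i'
            rw [dif_neg (by omega)]
          · have := hdisj i i' h
            have := hlenℓ i
            rw [dif_neg (by omega)]
        rw [this, zero_mul]
      rw [Finset.sum_eq_single i (fun i' _ hne => hsingle i' hne)
        (fun h => absurd (Finset.mem_univ i) h)] at hvj
      have hAii : A i ⟨ℓ - len i + k0, hcol⟩ = a k0 := by
        simp only [A, φ, LinearMap.coe_mk, AddHom.coe_mk, Matrix.of_apply]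
        rw [dif_pos (by constructor <;> omega)]
        congr 1
        ext; simp
      rw [hAii] at hvj
      exact (mul_eq_zero.mp hvj).resolve_left hk0
    have hrt : A.transpose.rank = m := by
      rw [Matrix.rank]
      rw [LinearMap.finrank_range_of_inj hinjv]
      simp
    rw [← Matrix.rank_transpose, hrt]
end

section
/- Let q be a prime power, k ≥ 4, and n ≥ 2k+2. Then A_q(n,2,k) ≥ q^{(k−1)(n−k)} + A_q(n−k,2,k) + ( Σ_{i=0}^{⌊(k−3)/2⌋} q^{(k−3)(n−k)−4i} + ε(k−1)·q^{(k−3)(n−k−2)} ) · Σ_{i=0}^{⌊(n−k)/2⌋−1} q^{2(2i+ε(n−k))}, where ε(x) = 1 if x is odd and ε(x) = 0 if x is even. -/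
open Module Finset Polynomial

namespace Stmt9

variable {F : Type*} [Field F] {n : ℕ}

/-- Submodule of vectors whose coordinates below `t` vanish. -/
def Vlow (F : Type*) [Field F] (n t : ℕ) : Submodule F (Fin n → F) where
  carrier := {v | ∀ j : Fin n, (j : ℕ) < t → v j = 0}
  add_mem' := by intro a b ha hb j hj; simp only [Pi.add_apply, ha j hj, hb j hj, add_zero]
  zero_mem' := by intro j hj; rfl
  smul_mem' := by intro c a ha j hj; simp only [Pi.smul_apply, ha j hj, smul_zero]

lemma mem_Vlow {t : ℕ} {v : Fin n → F} :
    v ∈ Vlow F n t ↔ ∀ j : Fin n, (j : ℕ) < t → v j = 0 := Iff.rfl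

lemma Vlow_zero : Vlow F n 0 = ⊤ := by
  ext v; simp [mem_Vlow]

private lemma aux_filt (Z : Submodule F (Fin n → F)) (S : Finset (Fin n))
    (h : ∀ w ∈ Z, ∀ c : Fin n, (∀ j : Fin n, j < c → w j = 0) → w c ≠ 0 → c ∈ S) :
    ∀ d t, n ≤ t + d →
      finrank F ↥(Z ⊓ Vlow F n t) ≤ (S.filter (fun c : Fin n => t ≤ (c : ℕ))).card := by
  intro d
  induction d with
  | zero =>
      intro t ht
      have hbot : Z ⊓ Vlow F n t = ⊥ := by
        rw [eq_bot_iff]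
        rintro v ⟨-, hv⟩
        have : v = 0 := by
          funext j
          exact hv j (lt_of_lt_of_le j.isLt (by omega))
        simp [this]
      rw [hbot, finrank_bot]
      exact Nat.zero_le _
  | succ d ih =>
      intro t ht
      by_cases hnt : n ≤ t
      · have hbot : Z ⊓ Vlow F n t = ⊥ := by
          rw [eq_bot_iff]
          rintro v ⟨-, hv⟩
          have : v = 0 := by
            funext j
            exact hv j (lt_of_lt_of_le j.isLt hnt)
          simp [this]
        rw [hbot, finrank_bot]
        exact Nat.zero_le _
      · push_neg at hnt
        set ct : Fin n := ⟨t, hnt⟩ with hct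
        have hctv : (ct : ℕ) = t := rfl
        have hstep : Z ⊓ Vlow F n (t+1) ≤ Z ⊓ Vlow F n t := by
          refine inf_le_inf le_rfl ?_
          intro v hv j hj
          exact hv j (by omega)
        by_cases hex : ∃ v ∈ Z ⊓ Vlow F n t, v ct ≠ 0
        · -- pivot case
          obtain ⟨v₀, hv₀, hv₀t⟩ := hex
          have hctS : ct ∈ S := by
            refine h v₀ hv₀.1 ct ?_ hv₀t
            intro j hj
            exact hv₀.2 j hj
          -- rank step
          set φ : ↥(Z ⊓ Vlow F n t) →ₗ[F] F :=
            (LinearMap.proj ct) ∘ₗ (Z ⊓ Vlow F n t).subtype with hφ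
          have hker : finrank F ↥(LinearMap.ker φ) ≤ finrank F ↥(Z ⊓ Vlow F n (t+1)) := by
            have hmem : ∀ x : ↥(LinearMap.ker φ), (x : ↥(Z ⊓ Vlow F n t)).1 ∈
                Z ⊓ Vlow F n (t+1) := by
              rintro ⟨⟨v, hv⟩, hvk⟩
              refine ⟨hv.1, ?_⟩
              intro j hj
              rcases Nat.lt_or_ge (j : ℕ) t with hj' | hj'
              · exact hv.2 j hj'
              · have hjt : j = ct := by
                  apply Fin.ext; omega
                have : φ ⟨v, hv⟩ = 0 := hvk
                simpa [hφ, hjt] using this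
            set incl : ↥(LinearMap.ker φ) →ₗ[F] ↥(Z ⊓ Vlow F n (t+1)) :=
              LinearMap.codRestrict _ (((Z ⊓ Vlow F n t).subtype) ∘ₗ
                (LinearMap.ker φ).subtype) hmem with hincl
            have hinj : Function.Injective incl := by
              intro a b hab
              have h2 : (incl a : Fin n → F) = (incl b : Fin n → F) := by
                exact congrArg (fun x : ↥(Z ⊓ Vlow F n (t+1)) => (x : Fin n → F)) hab
              apply Subtype.ext
              apply Subtype.ext
              exact h2
            exact LinearMap.finrank_le_finrank_of_injective hinj
          have hrange : finrank F ↥(LinearMap.range φ) ≤ 1 := by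
            simpa using Submodule.finrank_le (LinearMap.range φ)
          have hrn := LinearMap.finrank_range_add_finrank_ker φ
          have hfilter : (S.filter (fun c : Fin n => t ≤ (c : ℕ))).card
              = (S.filter (fun c : Fin n => t + 1 ≤ (c : ℕ))).card + 1 := by
            have hins : S.filter (fun c : Fin n => t ≤ (c : ℕ))
                = insert ct (S.filter (fun c : Fin n => t + 1 ≤ (c : ℕ))) := by
              ext c
              simp only [mem_filter, mem_insert]
              constructor
              · rintro ⟨hc, hct'⟩
                rcases Nat.eq_or_lt_of_le hct' with he | hl
                · exact Or.inl (by apply Fin.ext; omega)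
                · exact Or.inr ⟨hc, by omega⟩
              · rintro (rfl | ⟨hc, hc'⟩)
                · exact ⟨hctS, le_rfl⟩
                · exact ⟨hc, by omega⟩
            rw [hins, card_insert_of_notMem]
            simp only [mem_filter, not_and]
            intro _
            omega
          have hle : finrank F ↥(Z ⊓ Vlow F n t)
              ≤ finrank F ↥(Z ⊓ Vlow F n (t+1)) + 1 := by omega
          have := ih (t+1) (by omega)
          omega
        · -- no pivot at t
          push_neg at hex
          have heq : Z ⊓ Vlow F n t = Z ⊓ Vlow F n (t+1) := by
            apply le_antisymm
            · rintro v hv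
              refine ⟨hv.1, ?_⟩
              intro j hj
              rcases Nat.lt_or_ge (j : ℕ) t with hj' | hj'
              · exact hv.2 j hj'
              · have hjt : j = ct := by apply Fin.ext; omega
                rw [hjt]
                exact hex v hv
            · exact hstep
          rw [heq]
          refine le_trans (ih (t+1) (by omega)) (card_le_card ?_)
          intro c hc
          simp only [mem_filter] at hc ⊢
          exact ⟨hc.1, by omega⟩

/-- If every nonzero vector of `Z` has its leading coordinate in `S`, then `dim Z ≤ |S|`. -/
lemma finrank_le_card_pivots (Z : Submodule F (Fin n → F)) (S : Finset (Fin n))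
    (h : ∀ w ∈ Z, ∀ c : Fin n, (∀ j : Fin n, j < c → w j = 0) → w c ≠ 0 → c ∈ S) :
    finrank F ↥Z ≤ S.card := by
  have := aux_filt Z S h n 0 (by omega)
  have hZ : Z ⊓ Vlow F n 0 = Z := by rw [Vlow_zero, inf_top_eq]
  rw [hZ] at this
  refine le_trans this (le_of_eq ?_)
  congr 1
  apply filter_true_of_mem
  intro c _
  exact Nat.zero_le _

variable (F : Type*) [Field F] [Fintype F]

/-- An extension of the finite field `F` of degree `d` (for `d ≠ 0`). -/
noncomputable def ExtK (d : ℕ) : Type _ :=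
  (X ^ (Fintype.card F) ^ d - X : F[X]).SplittingField

noncomputable instance : Field (ExtK F d) :=
  inferInstanceAs (Field (SplittingField _))

noncomputable instance : Algebra F (ExtK F d) :=
  inferInstanceAs (Algebra F (SplittingField _))

instance : FiniteDimensional F (ExtK F d) :=
  inferInstanceAs (FiniteDimensional F (SplittingField _))

instance : Finite (ExtK F d) := Module.finite_of_finite F

lemma finrank_ExtK {d : ℕ} (hd : d ≠ 0) : finrank F (ExtK F d) = d := by
  classical
  set q := Fintype.card F with hq
  have hq1 : 1 < q := Fintype.one_lt_card
  obtain ⟨p, hpC⟩ := CharP.exists F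
  haveI := hpC
  obtain ⟨e, hpprime, hcard⟩ := FiniteField.card F p
  haveI : Fact p.Prime := ⟨hpprime⟩
  set g : F[X] := X ^ q ^ d - X with hg
  letI : Fintype (ExtK F d) := Fintype.ofFinite _
  set K := ExtK F d with hK
  haveI : CharP K p := charP_of_injective_algebraMap (algebraMap F K).injective p
  have hpq : p ∣ q := by
    rw [hq, hcard]
    exact dvd_pow_self p (by exact_mod_cast e.ne_zero)
  have hsep : Separable g := galois_poly_separable p (q ^ d) (dvd_pow hpq hd)
  have hgne : g ≠ 0 := FiniteField.X_pow_card_pow_sub_X_ne_zero (K' := F) hd hq1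
  have hndeg : g.natDegree = q ^ d :=
    FiniteField.X_pow_card_pow_sub_X_natDegree_eq (K' := F) hd hq1
  have hsplits : Splits (g.map (algebraMap F K)) := SplittingField.splits g
  -- every element of K is a root of g
  have hroot : ∀ x : K, x ^ q ^ d = x := by
    have hQ : q ^ d = p ^ ((e : ℕ) * d) := by
      rw [hq, hcard]
      exact (pow_mul p (e : ℕ) d).symm
    let S : Subalgebra F K :=
      { carrier := {x : K | x ^ q ^ d = x}
        mul_mem' := by
          intro a b ha hb
          simp only [Set.mem_setOf_eq] at *
          rw [mul_pow, ha, hb]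
        one_mem' := by simp
        zero_mem' := by
          simp only [Set.mem_setOf_eq]
          exact zero_pow (by positivity)
        add_mem' := by
          intro a b ha hb
          simp only [Set.mem_setOf_eq] at *
          rw [hQ] at ha hb ⊢
          rw [add_pow_char_pow, ha, hb]
        algebraMap_mem' := by
          intro r
          simp only [Set.mem_setOf_eq, ← map_pow]
          rw [show r ^ q ^ d = r from by rw [hq]; exact FiniteField.pow_card_pow d r] }
    have htop : (⊤ : Subalgebra F K) ≤ S := by
      have hadj : Algebra.adjoin F (g.rootSet K) = ⊤ := Polynomial.SplittingField.adjoin_rootSet g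
      rw [← hadj, Algebra.adjoin_le_iff]
      intro x hx
      rw [Polynomial.mem_rootSet_of_ne hgne] at hx
      have hxx : x ^ q ^ d - x = 0 := by
        simpa [hg, map_sub, map_pow, aeval_X] using hx
      show x ^ q ^ d = x
      linear_combination hxx
    intro x
    have hx : x ∈ S := htop Algebra.mem_top
    exact hx
  have huniv : g.rootSet K = Set.univ := by
    apply Set.eq_univ_iff_forall.mpr
    intro x
    rw [Polynomial.mem_rootSet_of_ne hgne]
    show aeval x g = 0
    simp only [hg, map_sub, map_pow, aeval_X]
    rw [hroot x, sub_self]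
  have key : Fintype.card (g.rootSet K) = q ^ d := by
    rw [card_rootSet_eq_natDegree hsep hsplits, hndeg]
  have e1 : ↥(g.rootSet K) ≃ K := (Equiv.setCongr huniv).trans (Equiv.Set.univ K)
  have hcardK : Fintype.card K = q ^ d := by
    rw [← Fintype.card_congr e1, key]
  have h2 := card_eq_pow_finrank (K := F) (V := K)
  rw [hcardK, ← hq] at h2
  exact Nat.pow_right_injective hq1 h2.symm

set_option maxHeartbeats 1000000 in
/-- Core construction: an echelon "lifted Gabidulin" family of `k`-dimensional subspaces
with prescribed pivot set `P`, window `W` and forbidden entries `bad`. -/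
lemma fam_exists (F : Type*) [Field F] [Fintype F]
    (K : Type*) [Field K] [Algebra F K] [Fintype K]
    (n k dK : ℕ) (hk2 : 2 ≤ k) (hkd : k ≤ dK) (hKr : finrank F K = dK)
    (P W : Finset (Fin n)) (hPk : P.card = k) (hWd : W.card = dK)
    (hPW : Disjoint P W)
    (bad : Finset (Fin n × Fin n))
    (hech : ∀ p ∈ P, ∀ c ∈ W, (p, c) ∉ bad → (p : ℕ) < (c : ℕ)) :
    ∃ 𝒮 : Finset (Submodule F (Fin n → F)),
      (Fintype.card F) ^ ((k - 1) * dK - bad.card) ≤ 𝒮.card ∧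
      (∀ X ∈ 𝒮, finrank F ↥X = k) ∧
      (∀ X ∈ 𝒮, ∀ w ∈ X, ∀ c : Fin n, (∀ j : Fin n, j < c → w j = 0) → w c ≠ 0 → c ∈ P) ∧
      (∀ X ∈ 𝒮, ∀ Y ∈ 𝒮, X ≠ Y → finrank F ↥(X ⊓ Y) ≤ k - 2) := by
  classical
  set q := Fintype.card F with hq
  have hq1 : 1 < q := Fintype.one_lt_card
  obtain ⟨p, hpC⟩ := CharP.exists F
  haveI := hpC
  obtain ⟨e, hpp, hcard⟩ := FiniteField.card F p
  haveI : Fact p.Prime := ⟨hpp⟩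
  haveI : CharP K p := charP_of_injective_algebraMap (algebraMap F K).injective p
  have hqpow : ∀ t : ℕ, q ^ t = p ^ ((e : ℕ) * t) := by
    intro t
    rw [hq, hcard]
    exact (pow_mul p (e : ℕ) t).symm
  -- the `t`-fold `q`-power Frobenius, as an `F`-linear map on `K`
  have hfrobadd : ∀ (t : ℕ) (x y : K), (x + y) ^ q ^ t = x ^ q ^ t + y ^ q ^ t := by
    intro t x y
    rw [hqpow t]
    exact add_pow_char_pow x y p ((e : ℕ) * t)
  have hfrobsmul : ∀ (t : ℕ) (r : F) (x : K), (r • x) ^ q ^ t = r • x ^ q ^ t := by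
    intro t r x
    rw [Algebra.smul_def, mul_pow, ← map_pow,
      show r ^ q ^ t = r from by rw [hq]; exact FiniteField.pow_card_pow t r,
      Algebra.smul_def]
  set powq : ℕ → (K →ₗ[F] K) := fun t =>
    { toFun := fun x => x ^ q ^ t
      map_add' := hfrobadd t
      map_smul' := hfrobsmul t } with hpowq
  -- the Gabidulin (linearized-polynomial) map attached to coefficients `a`
  set LinGabL : (Fin (k-1) → K) → (K →ₗ[F] K) := fun a => ∑ t : Fin (k-1), a t • powq (t : ℕ)
    with hLinGabL
  have hLG_apply : ∀ (a : Fin (k-1) → K) (x : K),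
      LinGabL a x = ∑ t : Fin (k-1), a t * x ^ q ^ (t : ℕ) := by
    intro a x
    rw [hLinGabL]
    simp [LinearMap.sum_apply, LinearMap.smul_apply, hpowq, smul_eq_mul]
  have hLG_sub : ∀ a b : Fin (k-1) → K, LinGabL (a - b) = LinGabL a - LinGabL b := by
    intro a b
    rw [hLinGabL]
    simp only [Pi.sub_apply, sub_smul]
    rw [← Finset.sum_sub_distrib]
    exact Finset.sum_congr rfl fun t _ => sub_smul (a t) (b t) (powq (t : ℕ))
  -- kernel bound via root counting
  have hker_bound : ∀ a : Fin (k-1) → K, a ≠ 0 →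
      finrank F ↥(LinearMap.ker (LinGabL a)) ≤ k - 2 := by
    intro a ha
    set pg : K[X] := ∑ t : Fin (k-1), C (a t) * X ^ (q ^ (t : ℕ)) with hpg
    obtain ⟨t0, ht0⟩ : ∃ t0, a t0 ≠ 0 := Function.ne_iff.mp ha
    have hpgne : pg ≠ 0 := by
      intro h0
      have hcoeff : pg.coeff (q ^ (t0 : ℕ)) = a t0 := by
        rw [hpg, Polynomial.finset_sum_coeff]
        rw [Finset.sum_eq_single t0]
        · simp [Polynomial.coeff_C_mul, Polynomial.coeff_X_pow]
        · intro t _ htne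
          simp only [Polynomial.coeff_C_mul, Polynomial.coeff_X_pow]
          rw [if_neg, mul_zero]
          intro heq
          exact htne (Fin.ext (Nat.pow_right_injective hq1 heq.symm))
        · intro h
          exact absurd (Finset.mem_univ t0) h
      rw [h0] at hcoeff
      simp only [Polynomial.coeff_zero] at hcoeff
      exact ht0 hcoeff.symm
    have hdeg : pg.natDegree ≤ q ^ (k - 2) := by
      rw [hpg]
      apply Polynomial.natDegree_sum_le_of_forall_le
      intro t _
      refine le_trans (Polynomial.natDegree_C_mul_le _ _) ?_
      rw [Polynomial.natDegree_X_pow]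
      exact Nat.pow_le_pow_right (le_of_lt hq1) (by omega)
    have heval : ∀ x : K, Polynomial.eval x pg = LinGabL a x := by
      intro x
      rw [hpg, Polynomial.eval_finset_sum, hLG_apply]
      simp [Polynomial.eval_mul, Polynomial.eval_pow]
    letI instKer : Fintype ↥(LinearMap.ker (LinGabL a)) := Fintype.ofFinite _
    have hcardle : Fintype.card ↥(LinearMap.ker (LinGabL a)) ≤ q ^ (k - 2) := by
      have hsub : ∀ x : K, x ∈ LinearMap.ker (LinGabL a) → x ∈ pg.roots.toFinset := by
        intro x hx
        rw [Multiset.mem_toFinset, Polynomial.mem_roots']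
        refine ⟨hpgne, ?_⟩
        rw [Polynomial.IsRoot.def, heval]
        exact hx
      have hinj : Fintype.card ↥(LinearMap.ker (LinGabL a)) ≤ pg.roots.toFinset.card := by
        have := Fintype.card_le_of_injective
          (fun x : ↥(LinearMap.ker (LinGabL a)) =>
            (⟨x.1, hsub x.1 x.2⟩ : ↥(pg.roots.toFinset)))
          (by
            intro x y hxy
            exact Subtype.ext (congrArg (fun z : ↥(pg.roots.toFinset) => z.val) hxy))
        rwa [Fintype.card_coe] at this
      refine le_trans hinj (le_trans (Multiset.toFinset_card_le _) ?_)
      exact le_trans (Polynomial.card_roots' pg) hdeg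
    have hcardeq : Fintype.card ↥(LinearMap.ker (LinGabL a))
        = q ^ finrank F ↥(LinearMap.ker (LinGabL a)) := card_eq_pow_finrank (K := F)
    rw [hcardeq] at hcardle
    exact (Nat.pow_le_pow_iff_right hq1).mp hcardle
  -- basis and embeddings
  have hfd : FiniteDimensional F K := Module.Finite.of_finite
  set bK : Basis (Fin dK) F K := finBasisOfFinrankEq F K hKr with hbK
  set eP : Fin k ≃o ↥P := P.orderIsoOfFin hPk with heP
  set eW : Fin dK ≃o ↥W := W.orderIsoOfFin hWd with heW
  set ιK : (↥P → F) →ₗ[F] K :=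
    ∑ s : Fin k, (LinearMap.proj (eP s)).smulRight (bK (Fin.castLE hkd s)) with hιK
  have hι_apply : ∀ x : ↥P → F, ιK x = ∑ s : Fin k, x (eP s) • bK (Fin.castLE hkd s) := by
    intro x
    rw [hιK]
    simp [LinearMap.sum_apply, LinearMap.smulRight_apply]
  have hι_ker : ∀ x : ↥P → F, ιK x = 0 → x = 0 := by
    intro x hx
    have hli : LinearIndependent F (fun s : Fin k => bK (Fin.castLE hkd s)) :=
      bK.linearIndependent.comp _ (Fin.castLE_injective hkd)
    rw [Fintype.linearIndependent_iff] at hli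
    have h0 := hli (fun s => x (eP s)) (by rw [← hι_apply]; exact hx)
    funext pp
    obtain ⟨s, rfl⟩ := eP.surjective pp
    exact h0 s
  have hι_inj : Function.Injective ιK := by
    intro x y hxy
    have : ιK (x - y) = 0 := by rw [map_sub, hxy, sub_self]
    have := hι_ker _ this
    rwa [sub_eq_zero] at this
  -- evaluation at a fixed point, linear in the coefficients
  set evalAt : K → ((Fin (k-1) → K) →ₗ[F] K) := fun z =>
    ∑ t : Fin (k-1), (LinearMap.mulRight F (z ^ q ^ (t : ℕ))).comp (LinearMap.proj t)
    with hevalAt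
  have hevalAt_apply : ∀ (z : K) (a : Fin (k-1) → K), evalAt z a = LinGabL a z := by
    intro z a
    rw [hevalAt, hLG_apply]
    simp [LinearMap.sum_apply, LinearMap.mulRight_apply]
  -- the constraint map
  set conFn : Fin n → Fin n → ((Fin (k-1) → K) →ₗ[F] F) := fun pr c =>
    if hp : pr ∈ P then
      if hc : c ∈ W then
        (bK.coord (eW.symm ⟨c, hc⟩)).comp
          (evalAt (bK (Fin.castLE hkd (eP.symm ⟨pr, hp⟩))))
      else 0
    else 0
    with hconFn
  have hconFn_eval : ∀ (pp : ↥P) (c : Fin n) (hc : c ∈ W) (aa : Fin (k-1) → K),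
      conFn (pp : Fin n) c aa
      = bK.coord (eW.symm ⟨c, hc⟩) (LinGabL aa (bK (Fin.castLE hkd (eP.symm pp)))) := by
    intro pp c hc aa
    simp only [hconFn]
    rw [dif_pos pp.2, dif_pos hc]
    simp only [LinearMap.comp_apply, hevalAt_apply]
  set Con : (Fin (k-1) → K) →ₗ[F] (↥bad → F) :=
    LinearMap.pi (fun pcs : ↥bad => conFn pcs.1.1 pcs.1.2) with hCon
  set CK := LinearMap.ker Con with hCK
  have hCK_rank : (k - 1) * dK - bad.card ≤ finrank F ↥CK := by
    have h1 : finrank F (Fin (k-1) → K) = (k - 1) * dK := by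
      rw [Module.finrank_pi_fintype, Finset.sum_const, Finset.card_univ, Fintype.card_fin,
        smul_eq_mul, hKr]
    have h2 := LinearMap.finrank_range_add_finrank_ker Con
    have h3 : finrank F ↥(LinearMap.range Con) ≤ bad.card := by
      refine le_trans (Submodule.finrank_le _) ?_
      rw [Module.finrank_pi, Fintype.card_coe]
    rw [h1, ← hCK] at h2
    omega
  -- the graph subspaces
  set Φ : (Fin (k-1) → K) → ((↥P → F) →ₗ[F] (Fin n → F)) := fun a =>
    LinearMap.pi (fun c : Fin n =>
      if hc : c ∈ P then LinearMap.proj (⟨c, hc⟩ : ↥P)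
      else if hw : c ∈ W then (bK.coord (eW.symm ⟨c, hw⟩)).comp ((LinGabL a).comp ιK)
      else 0)
    with hΦ
  have hΦP : ∀ a x (c : Fin n) (hc : c ∈ P), Φ a x c = x ⟨c, hc⟩ := by
    intro a x c hc
    rw [hΦ]
    simp [LinearMap.pi_apply, dif_pos hc]
  have hΦW : ∀ a x (c : Fin n) (hc : c ∉ P) (hw : c ∈ W),
      Φ a x c = bK.coord (eW.symm ⟨c, hw⟩) (LinGabL a (ιK x)) := by
    intro a x c hc hw
    rw [hΦ]
    simp [LinearMap.pi_apply, dif_neg hc, dif_pos hw]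
  have hΦ0 : ∀ a x (c : Fin n), c ∉ P → c ∉ W → Φ a x c = 0 := by
    intro a x c hc hw
    rw [hΦ]
    simp [LinearMap.pi_apply, dif_neg hc, dif_neg hw]
  set ρ0 : (Fin n → F) →ₗ[F] (↥P → F) :=
    LinearMap.pi (fun pp : ↥P => LinearMap.proj (pp : Fin n)) with hρ0
  have hρΦ : ∀ a x, ρ0 (Φ a x) = x := by
    intro a x
    funext pp
    rw [hρ0]
    simp only [LinearMap.pi_apply, LinearMap.proj_apply]
    rw [hΦP a x pp.1 pp.2]
  have hΦ_inj : ∀ a, Function.Injective (Φ a) := by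
    intro a x y hxy
    have := congrArg ρ0 hxy
    rwa [hρΦ, hρΦ] at this
  set U : (Fin (k-1) → K) → Submodule F (Fin n → F) := fun a => LinearMap.range (Φ a)
    with hU
  have hUrank : ∀ a, finrank F ↥(U a) = k := by
    intro a
    have h2 := LinearMap.finrank_range_add_finrank_ker (Φ a)
    rw [LinearMap.ker_eq_bot.mpr (hΦ_inj a), finrank_bot, add_zero] at h2
    rw [hU]
    rw [h2, Module.finrank_pi, Fintype.card_coe, hPk]
  -- pivot condition, for coefficients satisfying the constraints
  have hUpiv : ∀ a ∈ CK, ∀ w ∈ U a, ∀ c : Fin n,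
      (∀ j : Fin n, j < c → w j = 0) → w c ≠ 0 → c ∈ P := by
    intro a haC w hw c hlead hc0
    obtain ⟨x, rfl⟩ := hw
    by_contra hcP
    by_cases hcw : c ∈ W
    · rw [hΦW a x c hcP hcw] at hc0
      apply hc0
      rw [hι_apply, map_sum]
      simp only [map_smul]
      rw [map_sum]
      simp only [map_smul]
      apply Finset.sum_eq_zero
      intro s _
      by_cases hbad : ((eP s : Fin n), c) ∈ bad
      · have hzero : conFn (eP s : Fin n) c a = 0 := by
          have := congrFun (LinearMap.mem_ker.mp haC) (⟨((eP s : Fin n), c), hbad⟩ : ↥bad)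
          simpa [hCon, LinearMap.pi_apply] using this
        rw [hconFn_eval (eP s) c hcw a] at hzero
        rw [OrderIso.symm_apply_apply] at hzero
        rw [Basis.coord_apply] at hzero ⊢
        rw [hzero, smul_zero]
      · have hlt : ((eP s : Fin n) : ℕ) < (c : ℕ) := hech (eP s) (eP s).2 c hcw hbad
        have hx0 : x (eP s) = 0 := by
          have := hlead (eP s : Fin n) (by rwa [Fin.lt_def])
          rwa [hΦP a x (eP s : Fin n) (eP s).2] at this
        rw [hx0, zero_smul]
    · exact hc0 (hΦ0 a x c hcP hcw)
  -- intersections within the family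
  have hUinf : ∀ a b, a ≠ b → finrank F ↥(U a ⊓ U b) ≤ k - 2 := by
    intro a b hab
    set κ : (↥P → F) →ₗ[F] K := (LinGabL (a - b)).comp ιK with hκ
    have hmemker : ∀ w ∈ U a ⊓ U b, κ (ρ0 w) = 0 := by
      rintro w ⟨hwa, hwb⟩
      obtain ⟨x, hx⟩ := hwa
      obtain ⟨y, hy⟩ := hwb
      have hxy : x = y := by
        rw [← hρΦ a x, hx, ← hy, hρΦ]
      subst hxy
      have hxw : ρ0 w = x := by rw [← hx, hρΦ]
      rw [hxw, hκ, LinearMap.comp_apply, hLG_sub, LinearMap.sub_apply, sub_eq_zero]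
      have hz : LinGabL a (ιK x) = LinGabL b (ιK x) := by
        apply bK.repr.injective
        ext idx
        have hcW : ((eW idx : ↥W) : Fin n) ∈ W := (eW idx).2
        have hcP' : ((eW idx : ↥W) : Fin n) ∉ P := fun hmem =>
          (Finset.disjoint_left.mp hPW) hmem hcW
        have h1 := hΦW a x _ hcP' hcW
        have h2 := hΦW b x _ hcP' hcW
        rw [hx] at h1
        rw [hy] at h2
        have := h1.symm.trans h2
        have hidx : eW.symm ⟨((eW idx : ↥W) : Fin n), hcW⟩ = idx := by
          have h3 : (⟨((eW idx : ↥W) : Fin n), hcW⟩ : ↥W) = eW idx := rfl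
          rw [h3, OrderIso.symm_apply_apply]
        rw [hidx] at this
        rw [Basis.coord_apply, Basis.coord_apply] at this
        exact this
      exact hz
    have hback : ∀ w ∈ U a ⊓ U b, w = Φ a (ρ0 w) := by
      rintro w ⟨hwa, -⟩
      obtain ⟨x, hx⟩ := hwa
      rw [← hx, hρΦ]
    set τ : ↥(U a ⊓ U b) →ₗ[F] ↥(LinearMap.ker κ) :=
      LinearMap.codRestrict _ (ρ0.comp (U a ⊓ U b).subtype)
        (fun w => LinearMap.mem_ker.mpr (hmemker w.1 w.2)) with hτ
    have hτinj : Function.Injective τ := by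
      intro w w' hww
      have h1 : ρ0 (w : Fin n → F) = ρ0 (w' : Fin n → F) :=
        congrArg (fun z : ↥(LinearMap.ker κ) => (z : ↥P → F)) hww
      apply Subtype.ext
      calc (w : Fin n → F) = Φ a (ρ0 (w : Fin n → F)) := hback w.1 w.2
        _ = Φ a (ρ0 (w' : Fin n → F)) := by rw [h1]
        _ = (w' : Fin n → F) := (hback w'.1 w'.2).symm
    have h1 : finrank F ↥(U a ⊓ U b) ≤ finrank F ↥(LinearMap.ker κ) :=
      LinearMap.finrank_le_finrank_of_injective hτinj
    have h2 : finrank F ↥(LinearMap.ker κ) ≤ finrank F ↥(LinearMap.ker (LinGabL (a - b))) := by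
      set σ : ↥(LinearMap.ker κ) →ₗ[F] ↥(LinearMap.ker (LinGabL (a - b))) :=
        LinearMap.codRestrict _ (ιK.comp (LinearMap.ker κ).subtype)
          (fun x => x.2) with hσ
      have hσinj : Function.Injective σ := by
        intro x y hxy
        have h3 : ιK (x : ↥P → F) = ιK (y : ↥P → F) :=
          congrArg (fun z : ↥(LinearMap.ker (LinGabL (a - b))) => (z : K)) hxy
        exact Subtype.ext (hι_inj h3)
      exact LinearMap.finrank_le_finrank_of_injective hσinj
    refine le_trans h1 (le_trans h2 (hker_bound _ ?_))
    exact sub_ne_zero.mpr hab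
  -- build the finset
  letI instCK : Fintype ↥CK := Fintype.ofFinite _
  set S0 : Finset (Fin (k-1) → K) := Set.toFinset (CK : Set (Fin (k-1) → K)) with hS0
  have hS0card : S0.card = q ^ finrank F ↥CK := by
    rw [hS0, Set.toFinset_card]
    exact card_eq_pow_finrank (K := F)
  have hUS0inj : Set.InjOn U ↑S0 := by
    intro a ha b hb hUab
    by_contra hne
    have := hUinf a b hne
    rw [hUab, inf_idem] at this
    rw [hUrank b] at this
    omega
  refine ⟨S0.image U, ?_, ?_, ?_, ?_⟩
  · rw [Finset.card_image_of_injOn hUS0inj, hS0card]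
    exact Nat.pow_le_pow_right (by omega) hCK_rank
  · intro X hX
    obtain ⟨a, -, rfl⟩ := Finset.mem_image.mp hX
    exact hUrank a
  · intro X hX
    obtain ⟨a, haS, rfl⟩ := Finset.mem_image.mp hX
    have haC : a ∈ CK := by
      rw [hS0] at haS
      exact Set.mem_toFinset.mp haS
    exact hUpiv a haC
  · intro X hX Y hY hXY
    obtain ⟨a, -, rfl⟩ := Finset.mem_image.mp hX
    obtain ⟨b, -, rfl⟩ := Finset.mem_image.mp hY
    exact hUinf a b (fun h => hXY (by rw [h]))

lemma attachFin_inter {n : ℕ} (s t : Finset ℕ) (hs : ∀ m ∈ s, m < n) (ht : ∀ m ∈ t, m < n) :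
    (s.attachFin hs) ∩ (t.attachFin ht)
      = (s ∩ t).attachFin (fun m hm => hs m (Finset.mem_inter.mp hm).1) := by
  ext c
  simp [Finset.mem_attachFin, Finset.mem_inter]

lemma attachFin_disjoint {n : ℕ} (s t : Finset ℕ) (hs : ∀ m ∈ s, m < n) (ht : ∀ m ∈ t, m < n)
    (h : Disjoint s t) : Disjoint (s.attachFin hs) (t.attachFin ht) := by
  rw [Finset.disjoint_left] at h ⊢
  intro a ha hb
  exact h (Finset.mem_attachFin _ |>.mp ha) (Finset.mem_attachFin _ |>.mp hb)

/-- Intersection bound for pivot sets of the split form `Q ∪ pr` with `Q` in the first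
block and `pr` in the second block. -/
lemma inter_split_card_le {k : ℕ} (Q Q' pr pr' : Finset ℕ)
    (hQ : ∀ x ∈ Q, x < k) (hQ' : ∀ x ∈ Q', x < k)
    (hpr : ∀ x ∈ pr, k ≤ x) (hpr' : ∀ x ∈ pr', k ≤ x) :
    ((Q ∪ pr) ∩ (Q' ∪ pr')).card ≤ (Q ∩ Q').card + (pr ∩ pr').card := by
  refine le_trans (Finset.card_le_card ?_) (Finset.card_union_le _ _)
  intro x hx
  rw [Finset.mem_inter] at hx
  obtain ⟨hx1, hx2⟩ := hx
  rw [Finset.mem_union] at hx1 hx2 ⊢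
  rcases hx1 with h1 | h1 <;> rcases hx2 with h2 | h2
  · exact Or.inl (Finset.mem_inter.mpr ⟨h1, h2⟩)
  · exact absurd (hpr' x h2) (by have := hQ x h1; omega)
  · exact absurd (hpr x h1) (by have := hQ' x h2; omega)
  · exact Or.inr (Finset.mem_inter.mpr ⟨h1, h2⟩)

/-! ### ℕ-level pivot-set combinatorics -/

def QN (k i : ℕ) : Finset ℕ := Finset.range (k-2-2*i) ∪ Finset.Ico (k-2*i) k

def TL (n k j : ℕ) : ℕ := 2*j + (n-k) % 2

def prN (n k j : ℕ) : Finset ℕ := {n - 2 - TL n k j, n - 1 - TL n k j}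

lemma mem_QN {k i x : ℕ} : x ∈ QN k i ↔ (x < k-2-2*i ∨ (k-2*i ≤ x ∧ x < k)) := by
  simp [QN]

lemma mem_prN {n k j x : ℕ} : x ∈ prN n k j ↔ (x = n - 2 - TL n k j ∨ x = n - 1 - TL n k j) := by
  simp [prN]

lemma card_QN {k i : ℕ} (h : 2*i + 3 ≤ k) : (QN k i).card = k - 2 := by
  rw [QN, card_union_of_disjoint, Finset.card_range, Nat.card_Ico]
  · omega
  · rw [Finset.disjoint_left]
    intro x hx hy
    rw [Finset.mem_range] at hx
    rw [Finset.mem_Ico] at hy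
    omega

lemma card_prN {n k j : ℕ} (hk : 4 ≤ k) (hn : 2*k+2 ≤ n) (hTL : TL n k j + 2 ≤ n - k) :
    (prN n k j).card = 2 := by
  rw [prN, card_insert_of_notMem, card_singleton]
  rw [Finset.mem_singleton]
  omega

lemma card_prN_le {n k j : ℕ} : (prN n k j).card ≤ 2 := by
  refine le_trans (card_insert_le _ _) ?_
  simp

lemma prN_lb {n k j x : ℕ} (hk : 4 ≤ k) (hn : 2*k+2 ≤ n) (hTL : TL n k j + 2 ≤ n - k)
    (hx : x ∈ prN n k j) : k ≤ x ∧ x < n := by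
  rw [mem_prN] at hx
  omega

lemma prN_disjoint {n k j j' : ℕ} (hk : 4 ≤ k) (hn : 2*k+2 ≤ n) (hj : j ≠ j')
    (hTL : TL n k j + 2 ≤ n - k) (hTL' : TL n k j' + 2 ≤ n - k) :
    prN n k j ∩ prN n k j' = ∅ := by
  rw [Finset.eq_empty_iff_forall_notMem]
  intro x hx
  rw [Finset.mem_inter, mem_prN, mem_prN] at hx
  rw [TL] at hx hTL hTL'
  rw [TL] at hx  -- ensure unfold
  omega

lemma QN_lt {k i x : ℕ} (hx : x ∈ QN k i) : x < k := by
  rw [mem_QN] at hx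
  omega

lemma QN_inter_card {k i i' : ℕ} (hk : 4 ≤ k) (hi : 2*i + 3 ≤ k) (hi' : 2*i' + 3 ≤ k)
    (hne : i ≠ i') : (QN k i ∩ QN k i').card ≤ k - 4 := by
  have hsub : QN k i ∩ QN k i' ⊆
      (Finset.range k) \ ({k-2-2*i, k-1-2*i, k-2-2*i', k-1-2*i'} : Finset ℕ) := by
    intro x hx
    rw [Finset.mem_inter, mem_QN, mem_QN] at hx
    rw [Finset.mem_sdiff, Finset.mem_range]
    constructor
    · omega
    · simp only [Finset.mem_insert, Finset.mem_singleton]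
      omega
  refine le_trans (Finset.card_le_card hsub) ?_
  rw [Finset.card_sdiff_of_subset]
  · have hc : ({k-2-2*i, k-1-2*i, k-2-2*i', k-1-2*i'} : Finset ℕ).card = 4 := by
      rw [card_insert_of_notMem, card_insert_of_notMem, card_insert_of_notMem,
        card_singleton]
      · rw [Finset.mem_singleton]; omega
      · simp only [Finset.mem_insert, Finset.mem_singleton]; omega
      · simp only [Finset.mem_insert, Finset.mem_singleton]; omega
    rw [hc, Finset.card_range]
  · intro x hx
    simp only [Finset.mem_insert, Finset.mem_singleton] at hx
    rw [Finset.mem_range]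
    omega

lemma QN_inter_Ico2_card {k i : ℕ} (hk : 4 ≤ k) (hkeven : k % 2 = 0) (hi : 2*i + 3 ≤ k) :
    (QN k i ∩ Finset.Ico 2 k).card ≤ k - 4 := by
  have hi4 : 2*i + 4 ≤ k := by omega
  have hsub : QN k i ∩ Finset.Ico 2 k ⊆
      (Finset.range k) \ ({0, 1, k-2-2*i, k-1-2*i} : Finset ℕ) := by
    intro x hx
    rw [Finset.mem_inter, mem_QN, Finset.mem_Ico] at hx
    rw [Finset.mem_sdiff, Finset.mem_range]
    constructor
    · omega
    · simp only [Finset.mem_insert, Finset.mem_singleton]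
      omega
  refine le_trans (Finset.card_le_card hsub) ?_
  rw [Finset.card_sdiff_of_subset]
  · have hc : ({0, 1, k-2-2*i, k-1-2*i} : Finset ℕ).card = 4 := by
      rw [card_insert_of_notMem, card_insert_of_notMem, card_insert_of_notMem,
        card_singleton]
      · rw [Finset.mem_singleton]; omega
      · simp only [Finset.mem_insert, Finset.mem_singleton]; omega
      · simp only [Finset.mem_insert, Finset.mem_singleton]; omega
    rw [hc, Finset.card_range]
  · intro x hx
    simp only [Finset.mem_insert, Finset.mem_singleton] at hx
    rw [Finset.mem_range]
    omega


/-! ### Fin-level sets -/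

def finOf (n : ℕ) (s : Finset ℕ) : Finset (Fin n) :=
  Finset.univ.filter (fun c : Fin n => (c : ℕ) ∈ s)

lemma mem_finOf {n : ℕ} {s : Finset ℕ} {c : Fin n} : c ∈ finOf n s ↔ (c : ℕ) ∈ s := by
  simp [finOf]

lemma finOf_inter {n : ℕ} (s t : Finset ℕ) : finOf n s ∩ finOf n t = finOf n (s ∩ t) := by
  ext c
  simp [mem_finOf, Finset.mem_inter]

lemma card_finOf {n : ℕ} {s : Finset ℕ} (h : ∀ x ∈ s, x < n) : (finOf n s).card = s.card := by
  have : finOf n s = s.attachFin h := by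
    ext c
    simp [finOf, Finset.mem_attachFin]
  rw [this, Finset.card_attachFin]

lemma card_finOf_le {n : ℕ} (s t : Finset ℕ) (h : ∀ x ∈ s, x ∈ t → x < n) (b : ℕ)
    (hb : (s ∩ t).card ≤ b) : (finOf n s ∩ finOf n t).card ≤ b := by
  rw [finOf_inter]
  refine le_trans (le_of_eq (card_finOf ?_)) hb
  intro x hx
  rw [Finset.mem_inter] at hx
  exact h x hx.1 hx.2

lemma finOf_disjoint {n : ℕ} {s t : Finset ℕ} (h : ∀ x ∈ s, x ∉ t) :
    Disjoint (finOf n s) (finOf n t) := by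
  rw [Finset.disjoint_left]
  intro c hc hc'
  exact h _ (mem_finOf.mp hc) (mem_finOf.mp hc')

/-- pivot-support predicate -/
def Piv (F : Type*) [Field F] {n : ℕ} (X : Submodule F (Fin n → F))
    (S : Finset (Fin n)) : Prop :=
  ∀ w ∈ X, ∀ c : Fin n, (∀ l : Fin n, l < c → w l = 0) → w c ≠ 0 → c ∈ S

end Stmt9

open Module

/-- `A_q(n,d,k)`: the maximum cardinality of a set of `k`-dimensional subspaces of `F^n`
(`F` a field with `q` elements) in which any two distinct subspaces have injection
distance at least `d`. -/
noncomputable def maxCode (F : Type*) [Field F] [Fintype F] (n d k : ℕ) : ℕ :=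
  sSup {M : ℕ | ∃ C : Finset (Submodule F (Fin n → F)),
    C.card = M ∧ (∀ X ∈ C, finrank F X = k) ∧
    ∀ X ∈ C, ∀ Y ∈ C, X ≠ Y →
      d ≤ max (finrank F X) (finrank F Y) - finrank F ↥(X ⊓ Y)}

namespace Stmt9

open Finset




lemma maxCode_bddAbove (F : Type*) [Field F] [Fintype F] (n d k : ℕ) :
    BddAbove {M : ℕ | ∃ C : Finset (Submodule F (Fin n → F)),
      C.card = M ∧ (∀ X ∈ C, finrank F X = k) ∧
      ∀ X ∈ C, ∀ Y ∈ C, X ≠ Y →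
        d ≤ max (finrank F X) (finrank F Y) - finrank F ↥(X ⊓ Y)} := by
  classical
  haveI : Finite (Submodule F (Fin n → F)) :=
    Finite.of_injective (fun X : Submodule F (Fin n → F) => (X : Set (Fin n → F)))
      SetLike.coe_injective
  letI : Fintype (Submodule F (Fin n → F)) := Fintype.ofFinite _
  refine ⟨Fintype.card (Submodule F (Fin n → F)), ?_⟩
  rintro M ⟨C, rfl, -⟩
  exact Finset.card_le_univ C

lemma maxCode_le (F : Type*) [Field F] [Fintype F] (n d k : ℕ)
    (C : Finset (Submodule F (Fin n → F)))
    (h1 : ∀ X ∈ C, finrank F X = k)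
    (h2 : ∀ X ∈ C, ∀ Y ∈ C, X ≠ Y →
      d ≤ max (finrank F X) (finrank F Y) - finrank F ↥(X ⊓ Y)) :
    C.card ≤ maxCode F n d k :=
  le_csSup (maxCode_bddAbove F n d k) ⟨C, rfl, h1, h2⟩

/-- A family realizing `maxCode F (n-k) 2 k`, embedded into the last `n - k`
coordinates of `F^n`. -/
lemma rec_family (F : Type*) [Field F] [Fintype F] (k n : ℕ) (hk : 1 ≤ k) (hkn : k ≤ n) :
    ∃ R : Finset (Submodule F (Fin n → F)),
      R.card = maxCode F (n - k) 2 k ∧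
      (∀ X ∈ R, finrank F ↥X = k) ∧
      (∀ X ∈ R, ∀ w ∈ X, ∀ c : Fin n, w c ≠ 0 → k ≤ (c : ℕ)) ∧
      (∀ X ∈ R, ∀ Y ∈ R, X ≠ Y → finrank F ↥(X ⊓ Y) + 2 ≤ k) := by
  classical
  have hmem : maxCode F (n - k) 2 k ∈ {M : ℕ | ∃ C : Finset (Submodule F (Fin (n-k) → F)),
      C.card = M ∧ (∀ X ∈ C, finrank F X = k) ∧
      ∀ X ∈ C, ∀ Y ∈ C, X ≠ Y →
        2 ≤ max (finrank F X) (finrank F Y) - finrank F ↥(X ⊓ Y)} := by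
    apply Nat.sSup_mem
    · exact ⟨0, ∅, by simp⟩
    · exact maxCode_bddAbove F (n-k) 2 k
  obtain ⟨C, hCcard, hCrank, hCdist⟩ := hmem
  set emb : (Fin (n-k) → F) →ₗ[F] (Fin n → F) :=
    LinearMap.pi (fun c : Fin n =>
      if h : k ≤ (c : ℕ) then LinearMap.proj (⟨(c : ℕ) - k, by omega⟩ : Fin (n - k)) else 0)
    with hemb
  have hemb_lo : ∀ (v : Fin (n-k) → F) (c : Fin n), (c : ℕ) < k → emb v c = 0 := by
    intro v c hc
    simp only [hemb, LinearMap.pi_apply]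
    rw [dif_neg (by omega)]
    rfl
  have hemb_hi : ∀ (v : Fin (n-k) → F) (c : Fin n) (hc : k ≤ (c : ℕ)),
      emb v c = v ⟨(c : ℕ) - k, by omega⟩ := by
    intro v c hc
    simp only [hemb, LinearMap.pi_apply]
    rw [dif_pos hc]
    rfl
  have hinj : Function.Injective emb := by
    intro v w hvw
    funext s
    have hs : (k + (s : ℕ)) < n := by omega
    have h1 := congrFun hvw ⟨k + (s : ℕ), hs⟩
    rw [hemb_hi v _ (by simp), hemb_hi w _ (by simp)] at h1
    have hidx : (⟨((⟨k + (s : ℕ), hs⟩ : Fin n) : ℕ) - k, by omega⟩ : Fin (n - k)) = s := by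
      apply Fin.ext
      simp
    rwa [hidx] at h1
  refine ⟨C.image (Submodule.map emb), ?_, ?_, ?_, ?_⟩
  · rw [Finset.card_image_of_injective _ (Submodule.map_injective_of_injective hinj), hCcard]
  · intro X hX
    obtain ⟨Y, hY, rfl⟩ := Finset.mem_image.mp hX
    rw [← LinearEquiv.finrank_eq (Submodule.equivMapOfInjective emb hinj Y)]
    exact hCrank Y hY
  · intro X hX w hw c hc
    obtain ⟨Y, hY, rfl⟩ := Finset.mem_image.mp hX
    obtain ⟨v, hv, rfl⟩ := Submodule.mem_map.mp hw
    by_contra hlt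
    exact hc (hemb_lo v c (by omega))
  · intro X hX Y hY hXY
    obtain ⟨X', hX', rfl⟩ := Finset.mem_image.mp hX
    obtain ⟨Y', hY', rfl⟩ := Finset.mem_image.mp hY
    have hne : X' ≠ Y' := fun h => hXY (by rw [h])
    have hd := hCdist X' hX' Y' hY' hne
    rw [hCrank X' hX', hCrank Y' hY', max_self] at hd
    have hinf : Submodule.map emb X' ⊓ Submodule.map emb Y' = Submodule.map emb (X' ⊓ Y') :=
      (Submodule.map_inf emb hinj).symm
    rw [hinf, ← LinearEquiv.finrank_eq (Submodule.equivMapOfInjective emb hinj (X' ⊓ Y'))]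
    omega

lemma fam0_exists (F : Type*) [Field F] [Fintype F]
    (K : Type*) [Field K] [Algebra F K] [Fintype K]
    (k n : ℕ) (hk : 4 ≤ k) (hn : 2*k+2 ≤ n) (hKr : finrank F K = n - k) :
    ∃ 𝒮 : Finset (Submodule F (Fin n → F)),
      (Fintype.card F) ^ ((k-1)*(n-k)) ≤ 𝒮.card ∧
      (∀ X ∈ 𝒮, finrank F ↥X = k) ∧
      (∀ X ∈ 𝒮, Piv F X (finOf n (Finset.range k))) ∧
      (∀ X ∈ 𝒮, ∀ Y ∈ 𝒮, X ≠ Y → finrank F ↥(X ⊓ Y) ≤ k - 2) := by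
  have hPcard : (finOf n (Finset.range k)).card = k := by
    rw [card_finOf (fun x hx => by rw [Finset.mem_range] at hx; omega), Finset.card_range]
  have hWcard : (finOf n (Finset.Ico k n)).card = n - k := by
    rw [card_finOf (fun x hx => by rw [Finset.mem_Ico] at hx; omega), Nat.card_Ico]
  have hPW : Disjoint (finOf n (Finset.range k)) (finOf n (Finset.Ico k n)) := by
    apply finOf_disjoint
    intro x hx hx'
    rw [Finset.mem_range] at hx
    rw [Finset.mem_Ico] at hx'
    omega
  obtain ⟨𝒮, h1, h2, h3, h4⟩ := fam_exists F K n k (n-k) (by omega) (by omega) hKr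
    (finOf n (Finset.range k)) (finOf n (Finset.Ico k n)) hPcard hWcard hPW ∅
    (by
      intro p hp c hc _
      rw [mem_finOf, Finset.mem_range] at hp
      rw [mem_finOf, Finset.mem_Ico] at hc
      omega)
  refine ⟨𝒮, ?_, h2, h3, h4⟩
  rwa [Finset.card_empty, Nat.sub_zero] at h1

lemma famF_exists (F : Type*) [Field F] [Fintype F]
    (K : Type*) [Field K] [Algebra F K] [Fintype K]
    (k n i j : ℕ) (hk : 4 ≤ k) (hn : 2*k+2 ≤ n)
    (hKr : finrank F K = n - k) (hi : 2*i + 3 ≤ k) (hj : TL n k j + 2 ≤ n - k) :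
    ∃ 𝒮 : Finset (Submodule F (Fin n → F)),
      (Fintype.card F) ^ (((k-3)*(n-k) - 4*i) + 2 * TL n k j) ≤ 𝒮.card ∧
      (∀ X ∈ 𝒮, finrank F ↥X = k) ∧
      (∀ X ∈ 𝒮, Piv F X (finOf n (QN k i ∪ prN n k j))) ∧
      (∀ X ∈ 𝒮, ∀ Y ∈ 𝒮, X ≠ Y → finrank F ↥(X ⊓ Y) ≤ k - 2) := by
  have hQdisj : Disjoint (QN k i) (prN n k j) := by
    rw [Finset.disjoint_left]
    intro x hx hx'
    have h1 := QN_lt hx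
    have h2 := (prN_lb hk hn hj hx').1
    omega
  have hPcard : (finOf n (QN k i ∪ prN n k j)).card = k := by
    rw [card_finOf (fun x hx => by
      rw [Finset.mem_union] at hx
      rcases hx with hx | hx
      · have := QN_lt hx; omega
      · exact (prN_lb hk hn hj hx).2)]
    rw [card_union_of_disjoint hQdisj, card_QN (by omega), card_prN hk hn hj]
    omega
  have hprsub : prN n k j ⊆ Finset.Ico k n := by
    intro x hx
    rw [Finset.mem_Ico]
    exact prN_lb hk hn hj hx
  have hWcard : (finOf n ({k-2-2*i, k-1-2*i} ∪ (Finset.Ico k n \ prN n k j))).card = n - k := by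
    rw [card_finOf (fun x hx => by
      rw [Finset.mem_union] at hx
      rcases hx with hx | hx
      · simp only [Finset.mem_insert, Finset.mem_singleton] at hx; omega
      · rw [Finset.mem_sdiff, Finset.mem_Ico] at hx; omega)]
    rw [card_union_of_disjoint (by
      rw [Finset.disjoint_left]
      intro x hx hx'
      simp only [Finset.mem_insert, Finset.mem_singleton] at hx
      rw [Finset.mem_sdiff, Finset.mem_Ico] at hx'
      omega)]
    rw [Finset.card_sdiff_of_subset hprsub, Nat.card_Ico, card_prN hk hn hj]
    rw [card_insert_of_notMem (by rw [Finset.mem_singleton]; omega), Finset.card_singleton]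
    omega
  have hPW : Disjoint (finOf n (QN k i ∪ prN n k j))
      (finOf n ({k-2-2*i, k-1-2*i} ∪ (Finset.Ico k n \ prN n k j))) := by
    apply finOf_disjoint
    intro x hx hx'
    rw [Finset.mem_union, mem_QN, mem_prN] at hx
    rw [Finset.mem_union, Finset.mem_insert, Finset.mem_singleton, Finset.mem_sdiff,
      Finset.mem_Ico, mem_prN] at hx'
    omega
  have hbaddisj : Disjoint
      (finOf n (Finset.Ico (k-2*i) k) ×ˢ finOf n ({k-2-2*i, k-1-2*i} : Finset ℕ))
      (finOf n (prN n k j) ×ˢ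
        finOf n (({k-2-2*i, k-1-2*i} : Finset ℕ) ∪ Finset.Ico k (n-2-TL n k j))) := by
    rw [Finset.disjoint_left]
    intro pc h1 h2
    rw [Finset.mem_product] at h1 h2
    have ha := mem_finOf.mp h1.1
    have hb := mem_finOf.mp h2.1
    rw [Finset.mem_Ico] at ha
    rw [mem_prN] at hb
    omega
  obtain ⟨𝒮, h1, h2, h3, h4⟩ := fam_exists F K n k (n-k) (by omega) (by omega) hKr
    (finOf n (QN k i ∪ prN n k j))
    (finOf n ({k-2-2*i, k-1-2*i} ∪ (Finset.Ico k n \ prN n k j)))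
    hPcard hWcard hPW
    ((finOf n (Finset.Ico (k-2*i) k) ×ˢ finOf n ({k-2-2*i, k-1-2*i} : Finset ℕ)) ∪
      (finOf n (prN n k j) ×ˢ
        finOf n (({k-2-2*i, k-1-2*i} : Finset ℕ) ∪ Finset.Ico k (n-2-TL n k j))))
    (by
      intro p hp c hc hbad
      rw [mem_finOf, Finset.mem_union, mem_QN, mem_prN] at hp
      rw [mem_finOf, Finset.mem_union, Finset.mem_insert, Finset.mem_singleton,
        Finset.mem_sdiff, Finset.mem_Ico, mem_prN] at hc
      rw [Finset.mem_union, Finset.mem_product, Finset.mem_product] at hbad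
      push_neg at hbad
      obtain ⟨hbad1, hbad2⟩ := hbad
      simp only [mem_finOf, Finset.mem_Ico, Finset.mem_insert, Finset.mem_singleton,
        Finset.mem_union, mem_prN] at hbad1 hbad2
      omega)
  have hbadcard : ((finOf n (Finset.Ico (k-2*i) k) ×ˢ finOf n ({k-2-2*i, k-1-2*i} : Finset ℕ)) ∪
      (finOf n (prN n k j) ×ˢ
        finOf n (({k-2-2*i, k-1-2*i} : Finset ℕ) ∪ Finset.Ico k (n-2-TL n k j)))).card
      = 4*i + 2*((n-k) - TL n k j) := by
    rw [card_union_of_disjoint hbaddisj, Finset.card_product, Finset.card_product]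
    rw [card_finOf (fun x hx => by rw [Finset.mem_Ico] at hx; omega), Nat.card_Ico]
    rw [card_finOf (fun x hx => by
      simp only [Finset.mem_insert, Finset.mem_singleton] at hx; omega)]
    rw [card_finOf (fun x hx => (prN_lb hk hn hj hx).2)]
    rw [card_finOf (fun x hx => by
      rw [Finset.mem_union, Finset.mem_insert, Finset.mem_singleton, Finset.mem_Ico] at hx
      omega)]
    rw [card_prN hk hn hj]
    rw [card_union_of_disjoint (by
      rw [Finset.disjoint_left]
      intro x hx hx'
      simp only [Finset.mem_insert, Finset.mem_singleton] at hx
      rw [Finset.mem_Ico] at hx'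
      omega)]
    rw [Nat.card_Ico]
    rw [card_insert_of_notMem (by rw [Finset.mem_singleton]; omega), Finset.card_singleton]
    omega
  refine ⟨𝒮, ?_, h2, h3, h4⟩
  rw [hbadcard] at h1
  have hexp : (k-1)*(n-k) - (4*i + 2*((n-k) - TL n k j))
      = ((k-3)*(n-k) - 4*i) + 2 * TL n k j := by
    have h1' : (k-1)*(n-k) = (k-3)*(n-k) + 2*(n-k) := by
      have hh : k - 1 = (k-3) + 2 := by omega
      rw [hh, add_mul]
    have h2' : 4*i ≤ (k-3)*(n-k) := by
      calc 4*i ≤ (k-3)*2 := by omega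
        _ ≤ (k-3)*(n-k) := Nat.mul_le_mul_left _ (by omega)
    omega
  rwa [hexp] at h1

lemma famS_exists (F : Type*) [Field F] [Fintype F]
    (K : Type*) [Field K] [Algebra F K] [Fintype K]
    (k n j : ℕ) (hk : 4 ≤ k) (hn : 2*k+2 ≤ n)
    (hKr : finrank F K = n - k - 2) (hj : TL n k j + 2 ≤ n - k) :
    ∃ 𝒮 : Finset (Submodule F (Fin n → F)),
      (Fintype.card F) ^ ((k-3)*(n-k-2) + 2 * TL n k j) ≤ 𝒮.card ∧
      (∀ X ∈ 𝒮, finrank F ↥X = k) ∧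
      (∀ X ∈ 𝒮, Piv F X (finOf n (Finset.Ico 2 k ∪ prN n k j))) ∧
      (∀ X ∈ 𝒮, ∀ Y ∈ 𝒮, X ≠ Y → finrank F ↥(X ⊓ Y) ≤ k - 2) := by
  have hprsub : prN n k j ⊆ Finset.Ico k n := by
    intro x hx
    rw [Finset.mem_Ico]
    exact prN_lb hk hn hj hx
  have hPcard : (finOf n (Finset.Ico 2 k ∪ prN n k j)).card = k := by
    rw [card_finOf (fun x hx => by
      rw [Finset.mem_union] at hx
      rcases hx with hx | hx
      · rw [Finset.mem_Ico] at hx; omega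
      · exact (prN_lb hk hn hj hx).2)]
    rw [card_union_of_disjoint (by
      rw [Finset.disjoint_left]
      intro x hx hx'
      rw [Finset.mem_Ico] at hx
      have := (prN_lb hk hn hj hx').1
      omega)]
    rw [Nat.card_Ico, card_prN hk hn hj]
    omega
  have hWcard : (finOf n (Finset.Ico k n \ prN n k j)).card = n - k - 2 := by
    rw [card_finOf (fun x hx => by rw [Finset.mem_sdiff, Finset.mem_Ico] at hx; omega)]
    rw [Finset.card_sdiff_of_subset hprsub, Nat.card_Ico, card_prN hk hn hj]
  have hPW : Disjoint (finOf n (Finset.Ico 2 k ∪ prN n k j))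
      (finOf n (Finset.Ico k n \ prN n k j)) := by
    apply finOf_disjoint
    intro x hx hx'
    rw [Finset.mem_union, Finset.mem_Ico, mem_prN] at hx
    rw [Finset.mem_sdiff, Finset.mem_Ico, mem_prN] at hx'
    omega
  obtain ⟨𝒮, h1, h2, h3, h4⟩ := fam_exists F K n k (n-k-2) (by omega) (by omega) hKr
    (finOf n (Finset.Ico 2 k ∪ prN n k j))
    (finOf n (Finset.Ico k n \ prN n k j))
    hPcard hWcard hPW
    (finOf n (prN n k j) ×ˢ finOf n (Finset.Ico k (n-2-TL n k j)))
    (by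
      intro p hp c hc hbad
      rw [mem_finOf, Finset.mem_union, Finset.mem_Ico, mem_prN] at hp
      rw [mem_finOf, Finset.mem_sdiff, Finset.mem_Ico, mem_prN] at hc
      rw [Finset.mem_product] at hbad
      push_neg at hbad
      simp only [mem_finOf, Finset.mem_Ico, mem_prN] at hbad
      omega)
  have hbadcard : ((finOf n (prN n k j)) ×ˢ finOf n (Finset.Ico k (n-2-TL n k j))).card
      = 2*((n-k-2) - TL n k j) := by
    rw [Finset.card_product]
    rw [card_finOf (fun x hx => (prN_lb hk hn hj hx).2)]
    rw [card_finOf (fun x hx => by rw [Finset.mem_Ico] at hx; omega)]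
    rw [card_prN hk hn hj, Nat.card_Ico]
    omega
  refine ⟨𝒮, ?_, h2, h3, h4⟩
  rw [hbadcard] at h1
  have hexp : (k-1)*(n-k-2) - 2*((n-k-2) - TL n k j) = (k-3)*(n-k-2) + 2 * TL n k j := by
    have h1' : (k-1)*(n-k-2) = (k-3)*(n-k-2) + 2*(n-k-2) := by
      have hh : k - 1 = (k-3) + 2 := by omega
      rw [hh, add_mul]
    omega
  rwa [hexp] at h1


end Stmt9

open Finset Module

/-- **Construction B bound.** Let `q` be a prime power, `k ≥ 4` and `n ≥ 2k+2`.  Then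
`A_q(n,2,k) ≥ q^{(k-1)(n-k)} + A_q(n-k,2,k)
  + (Σ_{i=0}^{⌊(k-3)/2⌋} q^{(k-3)(n-k)-4i} + ε(k-1)·q^{(k-3)(n-k-2)})
    · Σ_{i=0}^{⌊(n-k)/2⌋-1} q^{2(2i+ε(n-k))}`,
where `ε(x) = x % 2` is `1` if `x` is odd and `0` if `x` is even. -/
theorem statement9 (q k n : ℕ) (hq : IsPrimePow q) (hk : 4 ≤ k) (hn : 2 * k + 2 ≤ n)
    (F : Type*) [Field F] [Fintype F] (hF : Fintype.card F = q) :
    q ^ ((k - 1) * (n - k)) + maxCode F (n - k) 2 k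
      + ((∑ i ∈ Finset.range ((k - 3) / 2 + 1), q ^ ((k - 3) * (n - k) - 4 * i))
          + ((k - 1) % 2) * q ^ ((k - 3) * (n - k - 2)))
        * (∑ i ∈ Finset.range ((n - k) / 2), q ^ (2 * (2 * i + (n - k) % 2)))
    ≤ maxCode F n 2 k := by
  classical
  subst hF
  have hq1 : 1 < Fintype.card F := Fintype.one_lt_card
  -- extension fields
  letI : Fintype (Stmt9.ExtK F (n-k)) := Fintype.ofFinite _
  letI : Fintype (Stmt9.ExtK F (n-k-2)) := Fintype.ofFinite _
  have hKm : finrank F (Stmt9.ExtK F (n-k)) = n - k := Stmt9.finrank_ExtK F (by omega)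
  have hKs : finrank F (Stmt9.ExtK F (n-k-2)) = n - k - 2 := Stmt9.finrank_ExtK F (by omega)
  -- index bounds
  set I : ℕ := (k-3)/2 + 1 with hI
  set J : ℕ := (n-k)/2 with hJ
  have hiv : ∀ i : Fin I, 2*(i:ℕ) + 3 ≤ k := by
    intro i
    have := i.isLt
    omega
  have hjv : ∀ j : Fin J, Stmt9.TL n k (j:ℕ) + 2 ≤ n - k := by
    intro j
    have := j.isLt
    simp only [Stmt9.TL]
    omega
  -- the four families
  obtain ⟨C0, hC0c, hC0r, hC0p, hC0d⟩ := Stmt9.fam0_exists F (Stmt9.ExtK F (n-k)) k n hk hn hKm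
  obtain ⟨CR, hCRc, hCRr, hCRp', hCRd⟩ := Stmt9.rec_family F k n (by omega) (by omega)
  have hCRp : ∀ X ∈ CR, Stmt9.Piv F X (Stmt9.finOf n (Finset.Ico k n)) := by
    intro X hX w hw c hlead hc
    rw [Stmt9.mem_finOf, Finset.mem_Ico]
    exact ⟨hCRp' X hX w hw c hc, c.isLt⟩
  have hfamF : ∀ ij : Fin I × Fin J, ∃ 𝒮 : Finset (Submodule F (Fin n → F)),
      (Fintype.card F) ^ (((k-3)*(n-k) - 4*(ij.1:ℕ)) + 2 * Stmt9.TL n k (ij.2:ℕ)) ≤ 𝒮.card ∧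
      (∀ X ∈ 𝒮, finrank F ↥X = k) ∧
      (∀ X ∈ 𝒮, Stmt9.Piv F X (Stmt9.finOf n (Stmt9.QN k (ij.1:ℕ) ∪ Stmt9.prN n k (ij.2:ℕ)))) ∧
      (∀ X ∈ 𝒮, ∀ Y ∈ 𝒮, X ≠ Y → finrank F ↥(X ⊓ Y) ≤ k - 2) :=
    fun ij => Stmt9.famF_exists F (Stmt9.ExtK F (n-k)) k n ij.1 ij.2 hk hn hKm
      (hiv ij.1) (hjv ij.2)
  choose famF hfamFc hfamFr hfamFp hfamFd using hfamF
  have hfamS : ∀ j : Fin J, ∃ 𝒮 : Finset (Submodule F (Fin n → F)),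
      (Fintype.card F) ^ ((k-3)*(n-k-2) + 2 * Stmt9.TL n k (j:ℕ)) ≤ 𝒮.card ∧
      (∀ X ∈ 𝒮, finrank F ↥X = k) ∧
      (∀ X ∈ 𝒮, Stmt9.Piv F X (Stmt9.finOf n (Finset.Ico 2 k ∪ Stmt9.prN n k (j:ℕ)))) ∧
      (∀ X ∈ 𝒮, ∀ Y ∈ 𝒮, X ≠ Y → finrank F ↥(X ⊓ Y) ≤ k - 2) :=
    fun j => Stmt9.famS_exists F (Stmt9.ExtK F (n-k-2)) k n j hk hn hKs (hjv j)
  choose famS hfamSc hfamSr hfamSp hfamSd using hfamS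
  -- cross bounds from pivots
  have hcross : ∀ (X Y : Submodule F (Fin n → F)) (SX SY : Finset (Fin n)),
      Stmt9.Piv F X SX → Stmt9.Piv F Y SY → finrank F ↥(X ⊓ Y) ≤ (SX ∩ SY).card := by
    intro X Y SX SY hX hY
    apply Stmt9.finrank_le_card_pivots
    intro w hw c hlead hc
    rw [Finset.mem_inter]
    exact ⟨hX w (Submodule.mem_inf.mp hw).1 c hlead hc,
      hY w (Submodule.mem_inf.mp hw).2 c hlead hc⟩
  have hfar : ∀ (X Y : Submodule F (Fin n → F)) (SX SY : Finset (Fin n)),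
      Stmt9.Piv F X SX → Stmt9.Piv F Y SY → (SX ∩ SY).card ≤ k - 2 →
      finrank F ↥(X ⊓ Y) ≤ k - 2 :=
    fun X Y SX SY hX hY hb => le_trans (hcross X Y SX SY hX hY) hb
  have hne : ∀ (X Y : Submodule F (Fin n → F)) (SX SY : Finset (Fin n)),
      Stmt9.Piv F X SX → Stmt9.Piv F Y SY → (SX ∩ SY).card ≤ k - 2 →
      finrank F ↥X = k → X ≠ Y := by
    intro X Y SX SY hX hY hb hXr heq
    subst heq
    have h2 := hfar X X SX SY hX hY hb
    rw [inf_idem, hXr] at h2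
    omega
  -- ℕ-level membership bound helper
  have hbnd : ∀ x : ℕ, x ∈ Finset.range k → x < n := by
    intro x hx
    rw [Finset.mem_range] at hx
    omega
  -- intersection card bounds
  have b01 : (Stmt9.finOf n (Finset.range k) ∩ Stmt9.finOf n (Finset.Ico k n)).card ≤ k - 2 := by
    apply Stmt9.card_finOf_le _ _ (fun x hx _ => hbnd x hx)
    have : Finset.range k ∩ Finset.Ico k n = ∅ := by
      rw [Finset.eq_empty_iff_forall_notMem]
      intro x hx
      rw [Finset.mem_inter, Finset.mem_range, Finset.mem_Ico] at hx
      omega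
    rw [this, Finset.card_empty]
    omega
  have b02 : ∀ (i : Fin I) (j : Fin J),
      (Stmt9.finOf n (Finset.range k) ∩
        Stmt9.finOf n (Stmt9.QN k (i:ℕ) ∪ Stmt9.prN n k (j:ℕ))).card ≤ k - 2 := by
    intro i j
    apply Stmt9.card_finOf_le _ _ (fun x hx _ => hbnd x hx)
    have hsub : Finset.range k ∩ (Stmt9.QN k (i:ℕ) ∪ Stmt9.prN n k (j:ℕ)) ⊆ Stmt9.QN k (i:ℕ) := by
      intro x hx
      rw [Finset.mem_inter, Finset.mem_range, Finset.mem_union, Stmt9.mem_prN] at hx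
      rcases hx.2 with h | h
      · exact h
      · exfalso
        have := hjv j
        simp only [Stmt9.TL] at this h
        omega
    exact le_trans (Finset.card_le_card hsub) (le_of_eq (Stmt9.card_QN (hiv i)))
  have b03 : ∀ (j : Fin J),
      (Stmt9.finOf n (Finset.range k) ∩
        Stmt9.finOf n (Finset.Ico 2 k ∪ Stmt9.prN n k (j:ℕ))).card ≤ k - 2 := by
    intro j
    apply Stmt9.card_finOf_le _ _ (fun x hx _ => hbnd x hx)
    have hsub : Finset.range k ∩ (Finset.Ico 2 k ∪ Stmt9.prN n k (j:ℕ)) ⊆ Finset.Ico 2 k := by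
      intro x hx
      rw [Finset.mem_inter, Finset.mem_range, Finset.mem_union, Stmt9.mem_prN] at hx
      rcases hx.2 with h | h
      · exact h
      · exfalso
        have := hjv j
        simp only [Stmt9.TL] at this h
        omega
    refine le_trans (Finset.card_le_card hsub) ?_
    rw [Nat.card_Ico]
  have b12 : ∀ (i : Fin I) (j : Fin J),
      (Stmt9.finOf n (Finset.Ico k n) ∩
        Stmt9.finOf n (Stmt9.QN k (i:ℕ) ∪ Stmt9.prN n k (j:ℕ))).card ≤ k - 2 := by
    intro i j
    apply Stmt9.card_finOf_le _ _ (fun x hx _ => by rw [Finset.mem_Ico] at hx; omega)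
    have hsub : Finset.Ico k n ∩ (Stmt9.QN k (i:ℕ) ∪ Stmt9.prN n k (j:ℕ))
        ⊆ Stmt9.prN n k (j:ℕ) := by
      intro x hx
      rw [Finset.mem_inter, Finset.mem_Ico, Finset.mem_union] at hx
      rcases hx.2 with h | h
      · exfalso
        have := Stmt9.QN_lt h
        omega
      · exact h
    refine le_trans (Finset.card_le_card hsub) (le_trans Stmt9.card_prN_le (by omega))
  have b13 : ∀ (j : Fin J),
      (Stmt9.finOf n (Finset.Ico k n) ∩
        Stmt9.finOf n (Finset.Ico 2 k ∪ Stmt9.prN n k (j:ℕ))).card ≤ k - 2 := by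
    intro j
    apply Stmt9.card_finOf_le _ _ (fun x hx _ => by rw [Finset.mem_Ico] at hx; omega)
    have hsub : Finset.Ico k n ∩ (Finset.Ico 2 k ∪ Stmt9.prN n k (j:ℕ))
        ⊆ Stmt9.prN n k (j:ℕ) := by
      intro x hx
      rw [Finset.mem_inter, Finset.mem_Ico, Finset.mem_union, Finset.mem_Ico] at hx
      rcases hx.2 with h | h
      · omega
      · exact h
    refine le_trans (Finset.card_le_card hsub) (le_trans Stmt9.card_prN_le (by omega))
  have b22 : ∀ (ij ij' : Fin I × Fin J), ij ≠ ij' →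
      (Stmt9.finOf n (Stmt9.QN k (ij.1:ℕ) ∪ Stmt9.prN n k (ij.2:ℕ)) ∩
        Stmt9.finOf n (Stmt9.QN k (ij'.1:ℕ) ∪ Stmt9.prN n k (ij'.2:ℕ))).card ≤ k - 2 := by
    intro ij ij' hij
    apply Stmt9.card_finOf_le _ _ (fun x hx _ => by
      rw [Finset.mem_union] at hx
      rcases hx with h | h
      · have := Stmt9.QN_lt h; omega
      · exact (Stmt9.prN_lb hk hn (hjv ij.2) h).2)
    refine le_trans (Stmt9.inter_split_card_le _ _ _ _
      (fun x hx => Stmt9.QN_lt hx) (fun x hx => Stmt9.QN_lt hx)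
      (fun x hx => (Stmt9.prN_lb hk hn (hjv ij.2) hx).1)
      (fun x hx => (Stmt9.prN_lb hk hn (hjv ij'.2) hx).1)) ?_
    by_cases hii : ij.1 = ij'.1
    · have hjj : (ij.2 : ℕ) ≠ (ij'.2 : ℕ) := by
        intro h
        exact hij (Prod.ext hii (Fin.ext h))
      rw [hii, Finset.inter_self, Stmt9.card_QN (hiv ij'.1)]
      rw [Stmt9.prN_disjoint hk hn hjj (hjv ij.2) (hjv ij'.2), Finset.card_empty]
      omega
    · have hii' : (ij.1 : ℕ) ≠ (ij'.1 : ℕ) := fun h => hii (Fin.ext h)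
      have h1 := Stmt9.QN_inter_card hk (hiv ij.1) (hiv ij'.1) hii'
      have h2 : (Stmt9.prN n k (ij.2:ℕ) ∩ Stmt9.prN n k (ij'.2:ℕ)).card ≤ 2 :=
        le_trans (Finset.card_le_card (Finset.inter_subset_left)) Stmt9.card_prN_le
      omega
  have b23 : (k-1) % 2 = 1 → ∀ (ij : Fin I × Fin J) (j' : Fin J),
      (Stmt9.finOf n (Stmt9.QN k (ij.1:ℕ) ∪ Stmt9.prN n k (ij.2:ℕ)) ∩
        Stmt9.finOf n (Finset.Ico 2 k ∪ Stmt9.prN n k (j':ℕ))).card ≤ k - 2 := by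
    intro hke ij j'
    apply Stmt9.card_finOf_le _ _ (fun x hx _ => by
      rw [Finset.mem_union] at hx
      rcases hx with h | h
      · have := Stmt9.QN_lt h; omega
      · exact (Stmt9.prN_lb hk hn (hjv ij.2) h).2)
    refine le_trans (Stmt9.inter_split_card_le _ _ _ _
      (fun x hx => Stmt9.QN_lt hx) (fun x hx => (Finset.mem_Ico.mp hx).2)
      (fun x hx => (Stmt9.prN_lb hk hn (hjv ij.2) hx).1)
      (fun x hx => (Stmt9.prN_lb hk hn (hjv j') hx).1)) ?_
    have h1 := Stmt9.QN_inter_Ico2_card hk (by omega) (hiv ij.1)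
    have h2 : (Stmt9.prN n k (ij.2:ℕ) ∩ Stmt9.prN n k (j':ℕ)).card ≤ 2 :=
      le_trans (Finset.card_le_card (Finset.inter_subset_left)) Stmt9.card_prN_le
    omega
  have b33 : ∀ (j j' : Fin J), j ≠ j' →
      (Stmt9.finOf n (Finset.Ico 2 k ∪ Stmt9.prN n k (j:ℕ)) ∩
        Stmt9.finOf n (Finset.Ico 2 k ∪ Stmt9.prN n k (j':ℕ))).card ≤ k - 2 := by
    intro j j' hjj
    apply Stmt9.card_finOf_le _ _ (fun x hx _ => by
      rw [Finset.mem_union] at hx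
      rcases hx with h | h
      · have := (Finset.mem_Ico.mp h).2; omega
      · exact (Stmt9.prN_lb hk hn (hjv j) h).2)
    refine le_trans (Stmt9.inter_split_card_le _ _ _ _
      (fun x hx => (Finset.mem_Ico.mp hx).2) (fun x hx => (Finset.mem_Ico.mp hx).2)
      (fun x hx => (Stmt9.prN_lb hk hn (hjv j) hx).1)
      (fun x hx => (Stmt9.prN_lb hk hn (hjv j') hx).1)) ?_
    have hjj' : (j : ℕ) ≠ (j' : ℕ) := fun h => hjj (Fin.ext h)
    rw [Finset.inter_self, Nat.card_Ico,
      Stmt9.prN_disjoint hk hn hjj' (hjv j) (hjv j'), Finset.card_empty]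
    omega
    -- the four family finsets and the full code
  set CF : Finset (Submodule F (Fin n → F)) :=
    Finset.univ.biUnion (fun ij : Fin I × Fin J => famF ij) with hCF
  set CS : Finset (Submodule F (Fin n → F)) :=
    (if (k-1) % 2 = 1 then Finset.univ.biUnion (fun j : Fin J => famS j) else ∅) with hCS
  set CB : Finset (Submodule F (Fin n → F)) := ((C0 ∪ CR) ∪ CF) ∪ CS with hCB
  have hmemCF : ∀ X, X ∈ CF ↔ ∃ ij : Fin I × Fin J, X ∈ famF ij := by
    intro X
    rw [hCF, Finset.mem_biUnion]
    constructor
    · rintro ⟨ij, -, h⟩; exact ⟨ij, h⟩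
    · rintro ⟨ij, h⟩; exact ⟨ij, Finset.mem_univ ij, h⟩
  have hmemCS : ∀ X, X ∈ CS ↔ ((k-1) % 2 = 1 ∧ ∃ j : Fin J, X ∈ famS j) := by
    intro X
    rw [hCS]
    by_cases hke : (k-1) % 2 = 1
    · rw [if_pos hke, Finset.mem_biUnion]
      constructor
      · rintro ⟨j, -, h⟩; exact ⟨hke, j, h⟩
      · rintro ⟨-, j, h⟩; exact ⟨j, Finset.mem_univ j, h⟩
    · rw [if_neg hke]
      simp only [Finset.notMem_empty, false_iff]
      rintro ⟨h, -⟩; exact hke h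
  have hmem_cases : ∀ X ∈ CB, X ∈ C0 ∨ X ∈ CR ∨ (∃ ij : Fin I × Fin J, X ∈ famF ij) ∨
      ((k-1) % 2 = 1 ∧ ∃ j : Fin J, X ∈ famS j) := by
    intro X hX
    rw [hCB] at hX
    rcases Finset.mem_union.mp hX with h | h
    · rcases Finset.mem_union.mp h with h' | h'
      · rcases Finset.mem_union.mp h' with h'' | h''
        · exact Or.inl h''
        · exact Or.inr (Or.inl h'')
      · exact Or.inr (Or.inr (Or.inl ((hmemCF X).mp h')))
    · exact Or.inr (Or.inr (Or.inr ((hmemCS X).mp h)))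
  have hrankAll : ∀ X ∈ CB, finrank F ↥X = k := by
    intro X hX
    rcases hmem_cases X hX with h | h | ⟨ij, h⟩ | ⟨-, j, h⟩
    · exact hC0r X h
    · exact hCRr X h
    · exact hfamFr ij X h
    · exact hfamSr j X h
  have hdistAll : ∀ X ∈ CB, ∀ Y ∈ CB, X ≠ Y → finrank F ↥(X ⊓ Y) ≤ k - 2 := by
    intro X hX Y hY hXY
    rcases hmem_cases X hX with hx | hx | ⟨ij, hx⟩ | ⟨hke, jx, hx⟩ <;>
      rcases hmem_cases Y hY with hy | hy | ⟨ij', hy⟩ | ⟨hke', jy, hy⟩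
    · exact hC0d X hx Y hy hXY
    · exact hfar X Y _ _ (hC0p X hx) (hCRp Y hy) b01
    · exact hfar X Y _ _ (hC0p X hx) (hfamFp ij' Y hy) (b02 ij'.1 ij'.2)
    · exact hfar X Y _ _ (hC0p X hx) (hfamSp jy Y hy) (b03 jy)
    · exact hfar X Y _ _ (hCRp X hx) (hC0p Y hy) (by rw [Finset.inter_comm]; exact b01)
    · have := hCRd X hx Y hy hXY
      omega
    · exact hfar X Y _ _ (hCRp X hx) (hfamFp ij' Y hy) (b12 ij'.1 ij'.2)
    · exact hfar X Y _ _ (hCRp X hx) (hfamSp jy Y hy) (b13 jy)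
    · exact hfar X Y _ _ (hfamFp ij X hx) (hC0p Y hy)
        (by rw [Finset.inter_comm]; exact b02 ij.1 ij.2)
    · exact hfar X Y _ _ (hfamFp ij X hx) (hCRp Y hy)
        (by rw [Finset.inter_comm]; exact b12 ij.1 ij.2)
    · by_cases hij : ij = ij'
      · subst hij
        exact hfamFd ij X hx Y hy hXY
      · exact hfar X Y _ _ (hfamFp ij X hx) (hfamFp ij' Y hy) (b22 ij ij' hij)
    · exact hfar X Y _ _ (hfamFp ij X hx) (hfamSp jy Y hy) (b23 hke' ij jy)
    · exact hfar X Y _ _ (hfamSp jx X hx) (hC0p Y hy)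
        (by rw [Finset.inter_comm]; exact b03 jx)
    · exact hfar X Y _ _ (hfamSp jx X hx) (hCRp Y hy)
        (by rw [Finset.inter_comm]; exact b13 jx)
    · exact hfar X Y _ _ (hfamSp jx X hx) (hfamFp ij' Y hy)
        (by rw [Finset.inter_comm]; exact b23 hke ij' jx)
    · by_cases hjj : jx = jy
      · subst hjj
        exact hfamSd jx X hx Y hy hXY
      · exact hfar X Y _ _ (hfamSp jx X hx) (hfamSp jy Y hy) (b33 jx jy hjj)
  -- pairwise disjointness of the four blocks
  have hd0R : Disjoint C0 CR := by
    rw [Finset.disjoint_left]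
    intro X h0 hR
    exact hne X X _ _ (hC0p X h0) (hCRp X hR) b01 (hC0r X h0) rfl
  have hd0F : Disjoint C0 CF := by
    rw [Finset.disjoint_left]
    intro X h0 hF'
    obtain ⟨ij, hij⟩ := (hmemCF X).mp hF'
    exact hne X X _ _ (hC0p X h0) (hfamFp ij X hij) (b02 ij.1 ij.2) (hC0r X h0) rfl
  have hdRF : Disjoint CR CF := by
    rw [Finset.disjoint_left]
    intro X hR hF'
    obtain ⟨ij, hij⟩ := (hmemCF X).mp hF'
    exact hne X X _ _ (hCRp X hR) (hfamFp ij X hij) (b12 ij.1 ij.2) (hCRr X hR) rfl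
  have hd0S : Disjoint C0 CS := by
    rw [Finset.disjoint_left]
    intro X h0 hS'
    obtain ⟨-, j, hj⟩ := (hmemCS X).mp hS'
    exact hne X X _ _ (hC0p X h0) (hfamSp j X hj) (b03 j) (hC0r X h0) rfl
  have hdRS : Disjoint CR CS := by
    rw [Finset.disjoint_left]
    intro X hR hS'
    obtain ⟨-, j, hj⟩ := (hmemCS X).mp hS'
    exact hne X X _ _ (hCRp X hR) (hfamSp j X hj) (b13 j) (hCRr X hR) rfl
  have hdFS : Disjoint CF CS := by
    rw [Finset.disjoint_left]
    intro X hF' hS'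
    obtain ⟨ij, hij⟩ := (hmemCF X).mp hF'
    obtain ⟨hke, j, hj⟩ := (hmemCS X).mp hS'
    exact hne X X _ _ (hfamFp ij X hij) (hfamSp j X hj) (b23 hke ij j)
      (hfamFr ij X hij) rfl
  -- cardinalities
  have hCFcard : CF.card = ∑ ij : Fin I × Fin J, (famF ij).card := by
    rw [hCF]
    apply Finset.card_biUnion
    intro ij _ ij' _ hij
    rw [Function.onFun, Finset.disjoint_left]
    intro X hx hx'
    exact hne X X _ _ (hfamFp ij X hx) (hfamFp ij' X hx') (b22 ij ij' hij)
      (hfamFr ij X hx) rfl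
  have hCScard : ((k-1) % 2) * ((Fintype.card F) ^ ((k-3)*(n-k-2))
      * ∑ j : Fin J, (Fintype.card F) ^ (2 * Stmt9.TL n k (j:ℕ))) ≤ CS.card := by
    rw [hCS]
    by_cases hke : (k-1) % 2 = 1
    · rw [if_pos hke, hke, one_mul]
      have hcb : (Finset.univ.biUnion (fun j : Fin J => famS j)).card
          = ∑ j : Fin J, (famS j).card := by
        apply Finset.card_biUnion
        intro j _ j' _ hjj
        rw [Function.onFun, Finset.disjoint_left]
        intro X hx hx'
        exact hne X X _ _ (hfamSp j X hx) (hfamSp j' X hx') (b33 j j' hjj)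
          (hfamSr j X hx) rfl
      rw [hcb, Finset.mul_sum]
      refine Finset.sum_le_sum ?_
      intro j _
      rw [← pow_add]
      exact hfamSc j
    · have hke0 : (k-1) % 2 = 0 := by omega
      rw [hke0, zero_mul]
      exact Nat.zero_le _
  have hdisj1 : Disjoint (C0 ∪ CR) CF := Finset.disjoint_union_left.mpr ⟨hd0F, hdRF⟩
  have hdisj2 : Disjoint ((C0 ∪ CR) ∪ CF) CS :=
    Finset.disjoint_union_left.mpr ⟨Finset.disjoint_union_left.mpr ⟨hd0S, hdRS⟩, hdFS⟩
  have hCBcard : CB.card = C0.card + CR.card + CF.card + CS.card := by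
    rw [hCB, Finset.card_union_of_disjoint hdisj2, Finset.card_union_of_disjoint hdisj1,
      Finset.card_union_of_disjoint hd0R]
  have hCFlow : (∑ i ∈ Finset.range I, (Fintype.card F) ^ ((k-3)*(n-k) - 4*i))
      * (∑ j ∈ Finset.range J, (Fintype.card F) ^ (2*(2*j + (n-k) % 2))) ≤ CF.card := by
    rw [hCFcard]
    have hfac : (∑ i ∈ Finset.range I, (Fintype.card F) ^ ((k-3)*(n-k) - 4*i))
        * (∑ j ∈ Finset.range J, (Fintype.card F) ^ (2*(2*j + (n-k) % 2)))
        = ∑ ij : Fin I × Fin J,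
            (Fintype.card F) ^ (((k-3)*(n-k) - 4*(ij.1:ℕ)) + 2 * Stmt9.TL n k (ij.2:ℕ)) := by
      rw [← Fin.sum_univ_eq_sum_range (fun i => (Fintype.card F) ^ ((k-3)*(n-k) - 4*i)) I,
        ← Fin.sum_univ_eq_sum_range (fun j => (Fintype.card F) ^ (2*(2*j + (n-k) % 2))) J]
      rw [Finset.sum_mul_sum]
      rw [Fintype.sum_prod_type]
      apply Finset.sum_congr rfl
      intro i _
      apply Finset.sum_congr rfl
      intro j _
      rw [← pow_add]
      congr 1
    rw [hfac]
    exact Finset.sum_le_sum (fun ij _ => hfamFc ij)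
  have hCseq : (∑ j : Fin J, (Fintype.card F) ^ (2 * Stmt9.TL n k (j:ℕ)))
      = ∑ j ∈ Finset.range J, (Fintype.card F) ^ (2*(2*j + (n-k) % 2)) := by
    rw [← Fin.sum_univ_eq_sum_range (fun j => (Fintype.card F) ^ (2*(2*j + (n-k) % 2))) J]
    apply Finset.sum_congr rfl
    intro j _
    congr 1
  have hCBin : CB.card ≤ maxCode F n 2 k := by
    apply Stmt9.maxCode_le
    · exact fun X hX => hrankAll X hX
    · intro X hX Y hY hXY
      rw [hrankAll X hX, hrankAll Y hY, max_self]
      have := hdistAll X hX Y hY hXY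
      omega
  refine le_trans ?_ hCBin
  rw [hCBcard, add_mul]
  have eS : (((k-1) % 2) * (Fintype.card F) ^ ((k-3)*(n-k-2)))
      * (∑ j ∈ Finset.range J, (Fintype.card F) ^ (2*(2*j + (n-k) % 2))) ≤ CS.card := by
    rw [mul_assoc, ← hCseq]
    exact hCScard
  have eF := hCFlow
  have e0 := hC0c
  have eR := hCRc
  omega
end

section
/- Let q ≥ 2 be an integer and n' ≥ 4. For integers 1 ≤ a < b ≤ n' set δ(a,b) = 2n' − a − b − 1. (i) Suppose n' is even. For 1 ≤ i ≤ n'−1 let P_i consist of the pair {i, n'} together with all pairs {a,b} with 1 ≤ a < b ≤ n'−1 and a+b ≡ 2i (mod n'−1) (P_i is a perfect matching of the complete graph on {1,…,n'}). Then Σ_{{a,b}∈P_i, a<b} q^{δ(a,b)} = (n'/2 − i)·q^{n'−2i} + (i−1)·q^{2(n'−i)−1} + q^{n'−i−1} if i ≤ n'/2, and = (i − n'/2)·q^{3n'−2(i+1)} + (n'−i−1)·q^{2(n'−i)−1} + q^{n'−i−1} if i > n'/2. (ii) Suppose n' is odd. For 1 ≤ i ≤ n' let P_i consist of all pairs {a,b}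 with 1 ≤ a < b ≤ n' and a+b ≡ 2i (mod n') (P_i is a nearly perfect matching of the complete graph on {1,…,n'} missing node i). Then Σ_{{a,b}∈P_i, a<b} q^{δ(a,b)} = ((n'+1)/2 − i)·q^{n'−2i−1} + (i−1)·q^{2(n'−i)−1} if i ≤ (n'+1)/2, and = (i − (n'+1)/2)·q^{3n'−2i−1} + (n'−i)·q^{2(n'−i)−1} if i > (n'+1)/2. -/
private lemma mod_val' {n x : ℕ} (hn : 0 < n) (hx : x ≤ 2*n) :
    x % n = if x < n then x else if x < 2*n then x - n else 0 := by
  split_ifs with h1 h2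
  · exact Nat.mod_eq_of_lt h1
  · rw [Nat.mod_eq_sub_mod (by omega)]
    exact Nat.mod_eq_of_lt (by omega)
  · obtain rfl : x = 2*n := by omega
    simp [Nat.mul_mod_right]

private lemma mod_eq_cases' {n x y : ℕ} (hn : 0 < n) (hx : x ≤ 2*n) (hy : y ≤ 2*n)
    (h : x % n = y % n) :
    x = y ∨ x + n = y ∨ x = y + n ∨ x + 2*n = y ∨ x = y + 2*n := by
  rw [mod_val' hn hx, mod_val' hn hy] at h
  split_ifs at h <;> omega

private lemma mod_eq_of' (n x y : ℕ) (h : x = y ∨ x = y + n ∨ x + n = y) :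
    x % n = y % n := by
  rcases h with rfl | rfl | h
  · rfl
  · exact Nat.add_mod_right y n
  · subst h
    exact (Nat.add_mod_right x n).symm

private lemma sum_img' (q T m l u : ℕ) (h : l ≤ u → u ≤ m ∧ m ≤ T) :
    ∑ ab ∈ (Finset.Icc l u).image (fun a => (a, m - a)), q ^ (T - ab.1 - ab.2)
      = (u + 1 - l) * q ^ (T - m) := by
  rcases le_or_gt l u with hlu | hlu
  · obtain ⟨h1, h2⟩ := h hlu
    rw [Finset.sum_image (by intro x _ y _ hxy; exact congrArg Prod.fst hxy)]
    calc ∑ a ∈ Finset.Icc l u, q ^ (T - a - (m - a))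
        = ∑ _a ∈ Finset.Icc l u, q ^ (T - m) := by
          refine Finset.sum_congr rfl fun a ha => ?_
          have := Finset.mem_Icc.mp ha
          congr 1
          omega
      _ = _ := by rw [Finset.sum_const, Nat.card_Icc, smul_eq_mul]
  · rw [Finset.Icc_eq_empty (by omega)]
    have h0 : u + 1 - l = 0 := by omega
    simp [h0]

private lemma core' (q T n i k : ℕ) (hn : n = 2*k+1) (hk : 1 ≤ k) (hT : 2*n ≤ T + 1)
    (hi1 : 1 ≤ i) (hi2 : i ≤ n) :
    (∑ ab ∈ (Finset.Icc 1 n ×ˢ Finset.Icc 1 n).filter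
        (fun ab => ab.1 < ab.2 ∧ (ab.1 + ab.2) % n = (2 * i) % n),
      q ^ (T - ab.1 - ab.2)) =
    if i ≤ k + 1 then (k + 1 - i) * q ^ (T - 2*i - n) + (i - 1) * q ^ (T - 2*i)
    else (i - (k + 1)) * q ^ (T + n - 2*i) + (n - i) * q ^ (T - 2*i) := by
  by_cases hcase : i ≤ k + 1
  · rw [if_pos hcase]
    have hset : (Finset.Icc 1 n ×ˢ Finset.Icc 1 n).filter
        (fun ab => ab.1 < ab.2 ∧ (ab.1 + ab.2) % n = (2 * i) % n) =
        ((Finset.Icc 1 (i-1)).image fun a => (a, 2*i - a)) ∪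
        ((Finset.Icc (2*i) (i+k)).image fun a => (a, 2*i + n - a)) := by
      ext ⟨a, b⟩
      simp only [Finset.mem_filter, Finset.mem_product, Finset.mem_Icc, Finset.mem_union,
        Finset.mem_image, Prod.mk.injEq]
      constructor
      · rintro ⟨⟨⟨ha1, ha2⟩, hb1, hb2⟩, hab, hmod⟩
        rcases mod_eq_cases' (by omega) (by omega) (by omega) hmod with
          h | h | h | h | h
        · exact Or.inl ⟨a, ⟨by omega, by omega⟩, rfl, by omega⟩
        · exact absurd h (by omega)
        · exact Or.inr ⟨a, ⟨by omega, by omega⟩, rfl, by omega⟩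
        · exact absurd h (by omega)
        · exact absurd h (by omega)
      · rintro (⟨x, ⟨hx1, hx2⟩, rfl, rfl⟩ | ⟨x, ⟨hx1, hx2⟩, rfl, rfl⟩)
        · exact ⟨⟨⟨by omega, by omega⟩, by omega, by omega⟩, by omega,
            mod_eq_of' _ _ _ (by omega)⟩
        · exact ⟨⟨⟨by omega, by omega⟩, by omega, by omega⟩, by omega,
            mod_eq_of' _ _ _ (by omega)⟩
    have hd : Disjoint ((Finset.Icc 1 (i-1)).image fun a => (a, 2*i - a))
        ((Finset.Icc (2*i) (i+k)).image fun a => (a, 2*i + n - a)) := by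
      rw [Finset.disjoint_left]
      rintro ⟨a, b⟩ h1 h2
      simp only [Finset.mem_image, Finset.mem_Icc, Prod.mk.injEq] at h1 h2
      obtain ⟨x, ⟨hx1, hx2⟩, rfl, rfl⟩ := h1
      obtain ⟨y, ⟨hy1, hy2⟩, hy3, hy4⟩ := h2
      omega
    rw [hset, Finset.sum_union hd,
      sum_img' q T (2*i) 1 (i-1) (by intro hlu; constructor <;> omega),
      sum_img' q T (2*i+n) (2*i) (i+k) (by intro hlu; constructor <;> omega)]
    rw [show T - (2*i+n) = T - 2*i - n from by omega,
      show i - 1 + 1 - 1 = i - 1 from by omega,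
      show i + k + 1 - 2*i = k + 1 - i from by omega]
    ring
  · rw [if_neg hcase]
    have hset : (Finset.Icc 1 n ×ˢ Finset.Icc 1 n).filter
        (fun ab => ab.1 < ab.2 ∧ (ab.1 + ab.2) % n = (2 * i) % n) =
        ((Finset.Icc 1 (i-(k+1))).image fun a => (a, 2*i - n - a)) ∪
        ((Finset.Icc (2*i-n) (i-1)).image fun a => (a, 2*i - a)) := by
      ext ⟨a, b⟩
      simp only [Finset.mem_filter, Finset.mem_product, Finset.mem_Icc, Finset.mem_union,
        Finset.mem_image, Prod.mk.injEq]
      constructor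
      · rintro ⟨⟨⟨ha1, ha2⟩, hb1, hb2⟩, hab, hmod⟩
        rcases mod_eq_cases' (by omega) (by omega) (by omega) hmod with
          h | h | h | h | h
        · exact Or.inr ⟨a, ⟨by omega, by omega⟩, rfl, by omega⟩
        · exact Or.inl ⟨a, ⟨by omega, by omega⟩, rfl, by omega⟩
        · exact absurd h (by omega)
        · exact absurd h (by omega)
        · exact absurd h (by omega)
      · rintro (⟨x, ⟨hx1, hx2⟩, rfl, rfl⟩ | ⟨x, ⟨hx1, hx2⟩, rfl, rfl⟩)
        · exact ⟨⟨⟨by omega, by omega⟩, by omega, by omega⟩, by omega,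
            mod_eq_of' _ _ _ (by omega)⟩
        · exact ⟨⟨⟨by omega, by omega⟩, by omega, by omega⟩, by omega,
            mod_eq_of' _ _ _ (by omega)⟩
    have hd : Disjoint ((Finset.Icc 1 (i-(k+1))).image fun a => (a, 2*i - n - a))
        ((Finset.Icc (2*i-n) (i-1)).image fun a => (a, 2*i - a)) := by
      rw [Finset.disjoint_left]
      rintro ⟨a, b⟩ h1 h2
      simp only [Finset.mem_image, Finset.mem_Icc, Prod.mk.injEq] at h1 h2
      obtain ⟨x, ⟨hx1, hx2⟩, rfl, rfl⟩ := h1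
      obtain ⟨y, ⟨hy1, hy2⟩, hy3, hy4⟩ := h2
      omega
    rw [hset, Finset.sum_union hd,
      sum_img' q T (2*i-n) 1 (i-(k+1)) (by intro hlu; constructor <;> omega),
      sum_img' q T (2*i) (2*i-n) (i-1) (by intro hlu; constructor <;> omega)]
    rw [show T - (2*i-n) = T + n - 2*i from by omega,
      show i - (k+1) + 1 - 1 = i - (k+1) from by omega,
      show i - 1 + 1 - (2*i-n) = n - i from by omega]

/-- **Sizes of the Ferrers diagram codes of the matchings `P_i`.**
For integers `1 ≤ a < b ≤ n'`, `δ(a,b) = 2n' - a - b - 1` is the number of dots of the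
Ferrers diagram of the weight-2 vector with ones at `a` and `b`, so `q^{δ(a,b)}` is the
size of the corresponding rank-distance-1 Ferrers diagram code.
(i) If `n'` is even and `1 ≤ i ≤ n'-1`, the perfect matching `P_i` consists of `{i,n'}`
together with all `{a,b}`, `a < b ≤ n'-1`, with `a + b ≡ 2i (mod n'-1)`, and
`Σ_{{a,b}∈P_i} q^{δ(a,b)}` equals the stated formula (two cases according to `i ≤ n'/2`).
(ii) If `n'` is odd and `1 ≤ i ≤ n'`, the nearly perfect matching `P_i` consists of all
`{a,b}`, `a < b ≤ n'`, with `a + b ≡ 2i (mod n')`, and `Σ_{{a,b}∈P_i} q^{δ(a,b)}` equals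
the stated formula (two cases according to `i ≤ (n'+1)/2`). -/
theorem statement11 (q n' : ℕ) (hq : 2 ≤ q) (hn' : 4 ≤ n') :
    (Even n' → ∀ i : ℕ, 1 ≤ i → i ≤ n' - 1 →
      (∑ ab ∈ (Finset.Icc 1 n' ×ˢ Finset.Icc 1 n').filter fun ab =>
          ab.1 < ab.2 ∧ ((ab.2 = n' ∧ ab.1 = i) ∨
            (ab.2 ≤ n' - 1 ∧ (ab.1 + ab.2) % (n' - 1) = (2 * i) % (n' - 1))),
        q ^ (2 * n' - ab.1 - ab.2 - 1)) =
      if i ≤ n' / 2 then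
        (n' / 2 - i) * q ^ (n' - 2 * i) + (i - 1) * q ^ (2 * (n' - i) - 1)
          + q ^ (n' - i - 1)
      else
        (i - n' / 2) * q ^ (3 * n' - 2 * (i + 1)) + (n' - i - 1) * q ^ (2 * (n' - i) - 1)
          + q ^ (n' - i - 1)) ∧
    (Odd n' → ∀ i : ℕ, 1 ≤ i → i ≤ n' →
      (∑ ab ∈ (Finset.Icc 1 n' ×ˢ Finset.Icc 1 n').filter fun ab =>
          ab.1 < ab.2 ∧ (ab.1 + ab.2) % n' = (2 * i) % n',
        q ^ (2 * n' - ab.1 - ab.2 - 1)) =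
      if i ≤ (n' + 1) / 2 then
        ((n' + 1) / 2 - i) * q ^ (n' - 2 * i - 1) + (i - 1) * q ^ (2 * (n' - i) - 1)
      else
        (i - (n' + 1) / 2) * q ^ (3 * n' - 2 * i - 1) + (n' - i) * q ^ (2 * (n' - i) - 1)) := by
  constructor
  · intro he i hi1 hi2
    obtain ⟨m, hm⟩ := he
    have hk' : ∃ k, n' = 2*k+2 := ⟨m - 1, by omega⟩
    obtain ⟨k, hk⟩ := hk'
    have hset : ((Finset.Icc 1 n' ×ˢ Finset.Icc 1 n').filter fun ab =>
          ab.1 < ab.2 ∧ ((ab.2 = n' ∧ ab.1 = i) ∨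
            (ab.2 ≤ n' - 1 ∧ (ab.1 + ab.2) % (n' - 1) = (2 * i) % (n' - 1)))) =
        {(i, n')} ∪ (Finset.Icc 1 (n'-1) ×ˢ Finset.Icc 1 (n'-1)).filter
          (fun ab => ab.1 < ab.2 ∧ (ab.1 + ab.2) % (n' - 1) = (2 * i) % (n' - 1)) := by
      ext ⟨a, b⟩
      simp only [Finset.mem_filter, Finset.mem_product, Finset.mem_Icc, Finset.mem_union,
        Finset.mem_singleton, Prod.mk.injEq]
      constructor
      · rintro ⟨⟨⟨ha1, ha2⟩, hb1, hb2⟩, hab, ⟨rfl, rfl⟩ | ⟨hble, hmod⟩⟩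
        · exact Or.inl ⟨rfl, rfl⟩
        · exact Or.inr ⟨⟨⟨ha1, by omega⟩, hb1, hble⟩, hab, hmod⟩
      · rintro (⟨rfl, rfl⟩ | ⟨⟨⟨ha1, ha2⟩, hb1, hb2⟩, hab, hmod⟩)
        · exact ⟨⟨⟨hi1, by omega⟩, by omega, by omega⟩, by omega, Or.inl ⟨rfl, rfl⟩⟩
        · exact ⟨⟨⟨ha1, by omega⟩, hb1, by omega⟩, hab, Or.inr ⟨hb2, hmod⟩⟩
    have hd : Disjoint ({(i, n')} : Finset (ℕ × ℕ))
        ((Finset.Icc 1 (n'-1) ×ˢ Finset.Icc 1 (n'-1)).filter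
          (fun ab => ab.1 < ab.2 ∧ (ab.1 + ab.2) % (n' - 1) = (2 * i) % (n' - 1))) := by
      rw [Finset.disjoint_singleton_left]
      simp only [Finset.mem_filter, Finset.mem_product, Finset.mem_Icc]
      rintro ⟨⟨⟨_, _⟩, _, hle⟩, _⟩
      omega
    rw [hset, Finset.sum_union hd, Finset.sum_singleton]
    have hexp : ∀ ab ∈ (Finset.Icc 1 (n'-1) ×ˢ Finset.Icc 1 (n'-1)).filter
          (fun ab => ab.1 < ab.2 ∧ (ab.1 + ab.2) % (n' - 1) = (2 * i) % (n' - 1)),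
        q ^ (2 * n' - ab.1 - ab.2 - 1) = q ^ (2 * n' - 1 - ab.1 - ab.2) := by
      intro ab _
      congr 1
      omega
    rw [Finset.sum_congr rfl hexp,
      core' q (2*n'-1) (n'-1) i k (by omega) (by omega) (by omega) hi1 (by omega),
      show n' / 2 = k + 1 from by omega]
    split_ifs with hif
    · rw [show 2*n' - i - n' - 1 = n' - i - 1 from by omega,
        show 2*n'-1 - 2*i - (n'-1) = n' - 2*i from by omega,
        show 2*n'-1 - 2*i = 2*(n'-i) - 1 from by omega]
      ring
    · rw [show 2*n' - i - n' - 1 = n' - i - 1 from by omega,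
        show 2*n'-1 + (n'-1) - 2*i = 3*n' - 2*(i+1) from by omega,
        show n'-1 - i = n' - i - 1 from by omega,
        show 2*n'-1 - 2*i = 2*(n'-i) - 1 from by omega]
      ring
  · intro ho i hi1 hi2
    obtain ⟨k, hk⟩ := ho
    have hexp : ∀ ab ∈ (Finset.Icc 1 n' ×ˢ Finset.Icc 1 n').filter
          (fun ab => ab.1 < ab.2 ∧ (ab.1 + ab.2) % n' = (2 * i) % n'),
        q ^ (2 * n' - ab.1 - ab.2 - 1) = q ^ (2 * n' - 1 - ab.1 - ab.2) := by
      intro ab _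
      congr 1
      omega
    rw [Finset.sum_congr rfl hexp,
      core' q (2*n'-1) n' i k (by omega) (by omega) (by omega) hi1 hi2,
      show (n' + 1) / 2 = k + 1 from by omega]
    split_ifs with hif
    · rw [show 2*n'-1 - 2*i - n' = n' - 2*i - 1 from by omega,
        show 2*n'-1 - 2*i = 2*(n'-i) - 1 from by omega]
    · rw [show 2*n'-1 + n' - 2*i = 3*n' - 2*i - 1 from by omega,
        show 2*n'-1 - 2*i = 2*(n'-i) - 1 from by omega]
end

section
/- Let C ⊆ G_q(k,n) be a constant dimension code with |C| = M and d_I(X,Y) ≥ d for all distinct X, Y ∈ C. Let Δ ≥ k be an integer and let 𝒞 be an F_q-linear space of k×Δ matrices over F_q with |𝒞| = q^{Δ(k−d+1)} in which every nonzero matrix has rank at least d (an MRD code with minimum rank distance d). Define C' = { row space of [RE(X) | A] : X ∈ C, A ∈ 𝒞 } ⊆ G_q(k, n+Δ), where [RE(X) | A] denotes the k×(n+Δ) matrix obtained by appending A to the right of RE(X). Then |C'| = M·q^{Δ(k−d+1)} and d_I(X',Y') ≥ d for all distinct X', Y' ∈ C'; i.e., C' is an (n+Δ, M·q^{Δ(k−d+1)},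 d, k)_q constant dimension code. -/
open Module

section Aux

variable {F : Type*} [Field F]

lemma isRREF_linearIndependent {k n : ℕ} {M : Matrix (Fin k) (Fin n) F}
    (h : IsRREF M) : LinearIndependent F M := by
  obtain ⟨p, -, h1, -, h4⟩ := h
  apply Fintype.linearIndependent_iff.mpr
  intro g hg i
  have hgi := congrFun hg (p i)
  simp only [Finset.sum_apply, Pi.smul_apply, smul_eq_mul, Pi.zero_apply] at hgi
  rwa [Finset.sum_eq_single i (fun j _ hj => by rw [h4 j i hj, mul_zero])
      (fun hi => absurd (Finset.mem_univ i) hi), h1 i, mul_one] at hgi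

lemma li_coeff_eq {ι V : Type*} [Fintype ι] [AddCommGroup V] [Module F V] {w : ι → V}
    (h : LinearIndependent F w) {c c' : ι → F}
    (hs : ∑ j, c j • w j = ∑ j, c' j • w j) : c = c' := by
  funext j
  have hz : ∑ j, (c j - c' j) • w j = 0 := by
    simp [sub_smul, Finset.sum_sub_distrib, hs]
  exact sub_eq_zero.mp (Fintype.linearIndependent_iff.mp h _ hz j)

lemma sum_single_smul {ι V : Type*} [Fintype ι] [DecidableEq ι] [AddCommGroup V] [Module F V]
    (w : ι → V) (i : ι) : ∑ j, (Pi.single i (1 : F) : ι → F) j • w j = w i := by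
  rw [Finset.sum_eq_single i]
  · simp
  · intro j _ hj; simp [Pi.single_apply, hj]
  · intro hi; exact absurd (Finset.mem_univ i) hi

lemma exists_coords {k : ℕ} {V : Type*} [AddCommGroup V] [Module F V] {w : Fin k → V}
    (h : LinearIndependent F w) :
    ∃ φ : ↥(Submodule.span F (Set.range w)) →ₗ[F] (Fin k → F),
      Function.Injective φ ∧ ∀ v, ∑ j, φ v j • w j = (v : V) := by
  classical
  let b := Basis.span h
  refine ⟨(Finsupp.linearEquivFunOnFinite F F (Fin k)).toLinearMap ∘ₗ b.repr.toLinearMap,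
    ?_, ?_⟩
  · exact (Finsupp.linearEquivFunOnFinite F F (Fin k)).injective.comp b.repr.injective
  · intro v
    have h1 := congrArg ((Submodule.span F (Set.range w)).subtype) (b.sum_repr v)
    rw [map_sum] at h1
    simp only [map_smul, Submodule.subtype_apply] at h1
    calc ∑ j, ((Finsupp.linearEquivFunOnFinite F F (Fin k)).toLinearMap ∘ₗ
            b.repr.toLinearMap) v j • w j
        = ∑ j, b.repr v j • ((b j : V)) := by
          refine Finset.sum_congr rfl fun j _ => ?_
          rw [Basis.span_apply]
          rfl
      _ = ↑v := h1

end Aux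

/-- **Construction D.** Let `C ⊆ G_q(k,n)` be a constant dimension code of cardinality `M`
with minimum injection distance `d`, `Δ ≥ k`, and let `𝒞` be a linear MRD code of `k × Δ`
matrices over `F_q`, of cardinality `q^{Δ(k-d+1)}`, in which every nonzero matrix has rank
at least `d`.  For each codeword `X`, extend its reduced row echelon form generator matrix
`RE(X)` by a codeword `A ∈ 𝒞` and take the row space.  The resulting set
`C' ⊆ G_q(k, n+Δ)` has cardinality `M·q^{Δ(k-d+1)}` and minimum injection distance `d`. -/
theorem statement14 (q n k d Δ M : ℕ) (hq : IsPrimePow q)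
    (F : Type*) [Field F] [Fintype F] (hF : Fintype.card F = q)
    (hΔ : k ≤ Δ)
    (C : Finset (Submodule F (Fin n → F))) (hM : C.card = M)
    (hCk : ∀ X ∈ C, finrank F X = k)
    (hCd : ∀ X ∈ C, ∀ Y ∈ C, X ≠ Y → d ≤ dI X Y)
    (RE : Submodule F (Fin n → F) → Matrix (Fin k) (Fin n) F)
    (hRE : ∀ X ∈ C, IsRREF (RE X) ∧ Submodule.span F (Set.range (RE X)) = X)
    (𝒞 : Submodule F (Matrix (Fin k) (Fin Δ) F))
    (h𝒞card : Nat.card 𝒞 = q ^ (Δ * (k - d + 1)))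
    (h𝒞rank : ∀ A ∈ 𝒞, A ≠ 0 → d ≤ Matrix.rank A) :
    ∀ C' : Set (Submodule F (Fin (n + Δ) → F)),
      C' = {Z | ∃ X ∈ C, ∃ A ∈ 𝒞,
        Z = Submodule.span F (Set.range fun i : Fin k => Fin.append (RE X i) (A i))} →
      Nat.card C' = M * q ^ (Δ * (k - d + 1)) ∧
      (∀ Z ∈ C', finrank F Z = k) ∧
      (∀ Z ∈ C', ∀ W ∈ C', Z ≠ W → d ≤ dI Z W) := by
  classical
  intro C' hC'
  set πL : (Fin (n + Δ) → F) →ₗ[F] (Fin n → F) := LinearMap.funLeft F F (Fin.castAdd Δ)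
    with hπLdef
  set πR : (Fin (n + Δ) → F) →ₗ[F] (Fin Δ → F) := LinearMap.funLeft F F (Fin.natAdd n)
    with hπRdef
  have hπL : ∀ (u : Fin n → F) (v : Fin Δ → F), πL (Fin.append u v) = u := by
    intro u v; funext j; exact Fin.append_left u v j
  have hπR : ∀ (u : Fin n → F) (v : Fin Δ → F), πR (Fin.append u v) = v := by
    intro u v; funext j; exact Fin.append_right u v j
  have hREli : ∀ X ∈ C, LinearIndependent F (RE X) :=
    fun X hX => isRREF_linearIndependent (hRE X hX).1
  have hcompL : ∀ (X : Submodule F (Fin n → F)) (A : Matrix (Fin k) (Fin Δ) F),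
      ⇑πL ∘ (fun i : Fin k => Fin.append (RE X i) (A i)) = RE X := by
    intro X A; funext i; exact hπL _ _
  have hrowsli : ∀ X ∈ C, ∀ (A : Matrix (Fin k) (Fin Δ) F),
      LinearIndependent F (fun i : Fin k => Fin.append (RE X i) (A i)) :=
    fun X hX A => LinearIndependent.of_comp πL (by rw [hcompL]; exact hREli X hX)
  have hmapL : ∀ X ∈ C, ∀ (A : Matrix (Fin k) (Fin Δ) F),
      Submodule.map πL
        (Submodule.span F (Set.range fun i : Fin k => Fin.append (RE X i) (A i))) = X := by
    intro X hX A
    rw [Submodule.map_span, ← Set.range_comp, hcompL, (hRE X hX).2]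
  -- equality of coefficients across two appended generating families
  have hcoeff : ∀ X ∈ C, ∀ (A B : Matrix (Fin k) (Fin Δ) F) (c c' : Fin k → F),
      (∑ i, c i • Fin.append (RE X i) (A i)) = (∑ i, c' i • Fin.append (RE X i) (B i)) →
      c = c' := by
    intro X hX A B c c' h
    have h2 := congrArg πL h
    simp only [map_sum, map_smul, hπL] at h2
    exact li_coeff_eq (hREli X hX) h2
  -- injectivity of the construction
  have hinj : ∀ X ∈ C, ∀ Y ∈ C, ∀ (A B : Matrix (Fin k) (Fin Δ) F),
      Submodule.span F (Set.range fun i : Fin k => Fin.append (RE X i) (A i)) =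
        Submodule.span F (Set.range fun i : Fin k => Fin.append (RE Y i) (B i)) →
      X = Y ∧ A = B := by
    intro X hX Y hY A B h
    have hXY : X = Y := by rw [← hmapL X hX A, ← hmapL Y hY B, h]
    subst hXY
    refine ⟨rfl, ?_⟩
    have hAB : ∀ i, A i = B i := by
      intro i
      have hmem : (Fin.append (RE X i) (B i)) ∈
          Submodule.span F (Set.range fun i : Fin k => Fin.append (RE X i) (A i)) := by
        rw [h]; exact Submodule.subset_span ⟨i, rfl⟩
      obtain ⟨c, hc⟩ := (Submodule.mem_span_range_iff_exists_fun F).mp hmem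
      have hc2 : ∑ j, c j • Fin.append (RE X j) (A j) =
          ∑ j, (Pi.single i (1 : F) : Fin k → F) j • Fin.append (RE X j) (B j) := by
        rw [hc, sum_single_smul]
      have hcs := hcoeff X hX A B c _ hc2
      have h3 := congrArg πR hc2
      simp only [map_sum, map_smul, hπR] at h3
      rw [hcs] at h3
      exact (sum_single_smul (F := F) (fun j => (A j : Fin Δ → F)) i).symm.trans
        (h3.trans (sum_single_smul (F := F) (fun j => (B j : Fin Δ → F)) i))
    exact Matrix.ext fun i j => congrFun (hAB i) j
  -- injectivity of πL on each codeword subspace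
  have hπLinjZ : ∀ X ∈ C, ∀ (A : Matrix (Fin k) (Fin Δ) F), ∀ v ∈
      Submodule.span F (Set.range fun i : Fin k => Fin.append (RE X i) (A i)),
      πL v = 0 → v = 0 := by
    intro X hX A v hv h0
    obtain ⟨c, hc⟩ := (Submodule.mem_span_range_iff_exists_fun F).mp hv
    have h2 : ∑ j, c j • RE X j = 0 := by
      have h3 := congrArg πL hc
      simp only [map_sum, map_smul, hπL] at h3
      rw [h3, h0]
    have hc0 := Fintype.linearIndependent_iff.mp (hREli X hX) c h2
    rw [← hc]
    exact Finset.sum_eq_zero fun j _ => by rw [hc0 j, zero_smul]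
  -- cardinality
  set f : (↥C × ↥𝒞) → Submodule F (Fin (n + Δ) → F) := fun p =>
    Submodule.span F (Set.range fun i : Fin k =>
      Fin.append (RE (p.1 : Submodule F (Fin n → F)) i)
        ((p.2 : Matrix (Fin k) (Fin Δ) F) i)) with hfdef
  have hfinj : Function.Injective f := by
    rintro ⟨⟨X, hX⟩, ⟨A, hA⟩⟩ ⟨⟨Y, hY⟩, ⟨B, hB⟩⟩ h
    obtain ⟨h1, h2⟩ := hinj X hX Y hY A B h
    simp only [Prod.mk.injEq, Subtype.mk.injEq]
    exact ⟨h1, h2⟩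
  have hrange : C' = Set.range f := by
    rw [hC']
    ext Z
    constructor
    · rintro ⟨X, hX, A, hA, rfl⟩; exact ⟨⟨⟨X, hX⟩, ⟨A, hA⟩⟩, rfl⟩
    · rintro ⟨⟨⟨X, hX⟩, ⟨A, hA⟩⟩, rfl⟩; exact ⟨X, hX, A, hA, rfl⟩
  have hcard : Nat.card C' = M * q ^ (Δ * (k - d + 1)) := by
    rw [hrange, Nat.card_range_of_injective hfinj, Nat.card_prod,
      Nat.card_eq_fintype_card, Fintype.card_coe, hM, h𝒞card]
  -- dimension
  have hfr : ∀ Z ∈ C', finrank F Z = k := by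
    intro Z hZ
    rw [hC'] at hZ
    obtain ⟨X, hX, A, hA, rfl⟩ := hZ
    rw [finrank_span_eq_card (hrowsli X hX A), Fintype.card_fin]
  refine ⟨hcard, hfr, ?_⟩
  -- distance
  intro Z hZ W hW hZW
  have hZ' := hZ; have hW' := hW
  rw [hC'] at hZ' hW'
  obtain ⟨X, hX, A, hA, rfl⟩ := hZ'
  obtain ⟨Y, hY, B, hB, rfl⟩ := hW'
  unfold dI
  rw [hfr _ hZ, hfr _ hW, max_self]
  by_cases hXY : X = Y
  · -- same first block : use the rank distance of the MRD code
    subst hXY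
    have hAB : A ≠ B := by rintro rfl; exact hZW rfl
    have hD𝒞 : A - B ∈ 𝒞 := Submodule.sub_mem _ hA hB
    have hDne : A - B ≠ 0 := sub_ne_zero.mpr hAB
    have hdr : d ≤ (A - B).rank := h𝒞rank _ hD𝒞 hDne
    have hKdim : finrank F ↥(LinearMap.ker (Matrix.vecMulLinear (A - B))) +
        (A - B).rank = k := by
      have h1 : Matrix.vecMulLinear (A - B) = Matrix.mulVecLin ((A - B).transpose) := by
        apply LinearMap.ext; intro x
        rw [Matrix.vecMulLinear_apply, Matrix.mulVecLin_apply, Matrix.mulVec_transpose]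
      have h2 : (A - B).rank =
          finrank F ↥(LinearMap.range (Matrix.vecMulLinear (A - B))) := by
        rw [h1, ← Matrix.rank_transpose (A - B)]
        rfl
      rw [h2, add_comm]
      have h3 := LinearMap.finrank_range_add_finrank_ker (Matrix.vecMulLinear (A - B))
      rwa [Module.finrank_pi, Fintype.card_fin] at h3
    set sZ := Submodule.span F (Set.range fun i : Fin k => Fin.append (RE X i) (A i))
      with hsZ
    set sW := Submodule.span F (Set.range fun i : Fin k => Fin.append (RE X i) (B i))
      with hsW
    obtain ⟨φ, hφinj, hφ⟩ := exists_coords (hrowsli X hX A)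
    set ψ : ↥(sZ ⊓ sW) →ₗ[F] (Fin k → F) :=
      φ ∘ₗ Submodule.inclusion (inf_le_left : sZ ⊓ sW ≤ sZ) with hψdef
    have hψinj : Function.Injective ψ := by
      rw [hψdef, LinearMap.coe_comp]
      exact hφinj.comp (Submodule.inclusion_injective (inf_le_left : sZ ⊓ sW ≤ sZ))
    have hψker : ∀ v : ↥(sZ ⊓ sW), Matrix.vecMulLinear (A - B) (ψ v) = 0 := by
      intro v
      obtain ⟨c', hc'⟩ := (Submodule.mem_span_range_iff_exists_fun F).mp
        ((Submodule.mem_inf.mp v.2).2)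
      have hc : ∑ j, ψ v j • Fin.append (RE X j) (A j) = (v : Fin (n + Δ) → F) := by
        have h := hφ (Submodule.inclusion (inf_le_left : sZ ⊓ sW ≤ sZ) v)
        rw [Submodule.coe_inclusion] at h
        exact h
      have hcc : ψ v = c' := hcoeff X hX A B _ c' (by rw [hc, hc'])
      have h4 := congrArg πR hc
      have h5 := congrArg πR hc'
      simp only [map_sum, map_smul, hπR] at h4 h5
      have h6 : ∑ j, ψ v j • (A - B) j = 0 := by
        have he : ∀ j, ψ v j • (A - B) j = ψ v j • A j - ψ v j • B j :=
          fun j => smul_sub _ _ _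
        calc ∑ j, ψ v j • (A - B) j
            = ∑ j, (ψ v j • A j - ψ v j • B j) := Finset.sum_congr rfl fun j _ => he j
          _ = ∑ j, ψ v j • A j - ∑ j, ψ v j • B j := Finset.sum_sub_distrib _ _
          _ = 0 := by rw [h4, hcc, h5, sub_self]
      rw [Matrix.vecMulLinear_apply]
      funext jj
      have h7 := congrFun h6 jj
      simp only [Finset.sum_apply, Pi.smul_apply, smul_eq_mul, Pi.zero_apply] at h7
      simpa [Matrix.vecMul, dotProduct] using h7
    have hψrange : LinearMap.range ψ ≤ LinearMap.ker (Matrix.vecMulLinear (A - B)) := by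
      rintro x ⟨v, rfl⟩
      exact hψker v
    have hle : finrank F ↥(sZ ⊓ sW) ≤
        finrank F ↥(LinearMap.ker (Matrix.vecMulLinear (A - B))) := by
      rw [← LinearMap.finrank_range_of_inj hψinj]
      exact Submodule.finrank_mono hψrange
    omega
  · -- different first blocks : use the subspace distance of C
    have hdXY := hCd X hX Y hY hXY
    unfold dI at hdXY
    rw [hCk X hX, hCk Y hY, max_self] at hdXY
    set sZ := Submodule.span F (Set.range fun i : Fin k => Fin.append (RE X i) (A i))
      with hsZ
    set sW := Submodule.span F (Set.range fun i : Fin k => Fin.append (RE Y i) (B i))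
      with hsW
    have hle : finrank F ↥(sZ ⊓ sW) ≤ finrank F ↥(X ⊓ Y) := by
      set g := πL.domRestrict (sZ ⊓ sW) with hgdef
      have hginj : Function.Injective g := by
        intro x y hxy
        have hsub : πL ((x : Fin (n + Δ) → F) - (y : Fin (n + Δ) → F)) = 0 := by
          rw [map_sub, sub_eq_zero]; exact hxy
        have hmem : ((x : Fin (n + Δ) → F) - (y : Fin (n + Δ) → F)) ∈ sZ :=
          Submodule.sub_mem _ (Submodule.mem_inf.mp x.2).1 (Submodule.mem_inf.mp y.2).1
        have := hπLinjZ X hX A _ hmem hsub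
        exact Subtype.ext (sub_eq_zero.mp this)
      have hgrange : LinearMap.range g ≤ X ⊓ Y := by
        rintro x ⟨v, rfl⟩
        refine Submodule.mem_inf.mpr ⟨?_, ?_⟩
        · rw [← hmapL X hX A]
          exact Submodule.mem_map_of_mem (Submodule.mem_inf.mp v.2).1
        · rw [← hmapL Y hY B]
          exact Submodule.mem_map_of_mem (Submodule.mem_inf.mp v.2).2
      rw [← LinearMap.finrank_range_of_inj hginj]
      exact Submodule.finrank_mono hgrange
    omega
end

section
/- Let q be a prime power, k ≥ 4, n ≥ (k²+3k−2)/2, s = (k²+k−6)/2 and n' = n−s; assume q²+q+1 ≥ ℓ, where ℓ = n' if n' is odd and ℓ = n'−1 if n' is even. Set M_A = q^{2(n−k)} + Σ_{j=3}^{k−1} q^{2(n − Σ_{i=j}^{k} i)} + [n' choose 2]_q and M_MC = Σ_{i=0}^{⌊(n−2k)/(k−1)⌋} q^{2(n−k−(k−1)i)} + Σ_{i=⌊(n−2k)/(k−1)⌋+1}^{⌊(n−k)/(k−1)⌋} ⌈q^{k(n−k+1−(k−1)(i+1))}⌉ (where the exponent may be negative, in which case the ceiling equals 1). Then M_A − M_MC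 > q^{2n−k²−k+1}. -/
set_option maxHeartbeats 1000000

/-- The Gaussian binomial coefficient `[n choose k]_q = ∏_{i=0}^{k-1} (q^{n-i}-1)/(q^{k-i}-1)`
(the division is exact). -/
def gaussBinom (q n k : ℕ) : ℕ :=
  (∏ i ∈ Finset.range k, (q ^ (n - i) - 1)) / (∏ i ∈ Finset.range k, (q ^ (k - i) - 1))

lemma mygeom_le (q E : ℕ) (hq : 2 ≤ q) : ∑ e ∈ Finset.range (E+1), q ^ e ≤ 2 * q ^ E := by
  induction E with
  | zero => simp
  | succ E ih =>
    rw [Finset.sum_range_succ]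
    have h1 : 2 * q ^ E ≤ q ^ (E+1) := by
      rw [pow_succ]
      calc 2 * q ^ E = q ^ E * 2 := by ring
        _ ≤ q ^ E * q := Nat.mul_le_mul_left _ hq
    have h2 : q ^ (E+1) + q ^ (E+1) = 2 * q ^ (E+1) := by ring
    omega

lemma distinct_pow_sum (q E : ℕ) (hq : 2 ≤ q) (s : Finset ℕ) (f : ℕ → ℕ)
    (hinj : ∀ x ∈ s, ∀ y ∈ s, f x = f y → x = y) (hle : ∀ i ∈ s, f i ≤ E) :
    ∑ i ∈ s, q ^ f i ≤ 2 * q ^ E := by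
  calc ∑ i ∈ s, q ^ f i = ∑ e ∈ s.image f, q ^ e := (Finset.sum_image hinj).symm
    _ ≤ ∑ e ∈ Finset.range (E+1), q ^ e := by
        apply Finset.sum_le_sum_of_subset
        intro e he
        simp only [Finset.mem_image] at he
        obtain ⟨i, hi, rfl⟩ := he
        simp only [Finset.mem_range]
        exact Nat.lt_succ_of_le (hle i hi)
    _ ≤ 2 * q ^ E := mygeom_le q E hq

lemma sigma_eq (j k : ℕ) (hj : j ≤ k + 1) :
    (∑ x ∈ Finset.Icc j k, x) * 2 + j * (j - 1) = (k + 1) * k := by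
  have h := Finset.sum_Ico_consecutive (fun i => i) (Nat.zero_le j) hj
  have h1 : (∑ i ∈ Finset.Ico 0 j, i) * 2 = j * (j - 1) := by
    rw [Nat.Ico_zero_eq_range]; exact Finset.sum_range_id_mul_two j
  have h2 : (∑ i ∈ Finset.Ico 0 (k+1), i) * 2 = (k+1) * k := by
    rw [Nat.Ico_zero_eq_range]
    simpa using Finset.sum_range_id_mul_two (k+1)
  have h3 : Finset.Ico j (k+1) = Finset.Icc j k := Finset.Ico_add_one_right_eq_Icc j k
  rw [h3] at h
  omega

lemma sigma_le (k i : ℕ) (h : i + 4 ≤ k) :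
    (∑ x ∈ Finset.Icc (k-1-i) k, x) ≤ k + (k-1)*(i+1) := by
  have hj : k - 1 - i ≤ k + 1 := by omega
  have heq := sigma_eq (k-1-i) k hj
  have key : (k+1)*k ≤ 2*(k + (k-1)*(i+1)) + (k-1-i)*((k-1-i)-1) := by
    obtain ⟨t, rfl⟩ : ∃ t, k = i + 4 + t := ⟨k - (i+4), by omega⟩
    have e1 : i + 4 + t - 1 - i = 3 + t := by omega
    have e2 : i + 4 + t - 1 = i + 3 + t := by omega
    rw [e1, e2]
    have e3 : 3 + t - 1 = 2 + t := by omega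
    rw [e3]
    nlinarith [sq_nonneg i]
  omega

lemma gauss_lb (q m : ℕ) (hq : 2 ≤ q) (hm : 6 ≤ m) :
    q ^ (2*m-5) + 2 * q ^ (2*m-6) + q ^ (m-2) + 1 < gaussBinom q m 2 := by
  have hq1 : 0 < q := by omega
  unfold gaussBinom
  have hnum : ∏ i ∈ Finset.range 2, (q ^ (m - i) - 1) = (q ^ m - 1) * (q ^ (m-1) - 1) := by
    simp [Finset.prod_range_succ]
  have hden : ∏ i ∈ Finset.range 2, (q ^ (2 - i) - 1) = (q ^ 2 - 1) * (q ^ 1 - 1) := by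
    norm_num [Finset.prod_range_succ]
  rw [hnum, hden]
  have hq2 : 4 ≤ q ^ 2 := by nlinarith
  have hdpos : 0 < (q ^ 2 - 1) * (q ^ 1 - 1) := by
    have : q ^ 1 = q := pow_one q
    apply Nat.mul_pos <;> omega
  have key : (q ^ (2*m-5) + 2 * q ^ (2*m-6) + q ^ (m-2) + 1 + 1) * ((q ^ 2 - 1) * (q ^ 1 - 1))
      ≤ (q ^ m - 1) * (q ^ (m-1) - 1) := by
    have e1 : q ^ (2*m-5) = q ^ (m-3) * q ^ (m-3) * q := by
      rw [← pow_add, ← pow_succ]; congr 1; omega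
    have e2 : q ^ (2*m-6) = q ^ (m-3) * q ^ (m-3) := by
      rw [← pow_add]; congr 1; omega
    have e3 : q ^ (m-2) = q ^ (m-3) * q := by
      rw [← pow_succ]; congr 1; omega
    have e4 : q ^ m = q ^ (m-3) * q ^ 3 := by
      rw [← pow_add]; congr 1; omega
    have e5 : q ^ (m-1) = q ^ (m-3) * q ^ 2 := by
      rw [← pow_add]; congr 1; omega
    rw [e1, e2, e3, e4, e5]
    set t := q ^ (m-3) with ht
    have htq : q ^ 3 ≤ t := by rw [ht]; exact Nat.pow_le_pow_right hq1 (by omega)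
    have hq3 : 8 ≤ q ^ 3 := by nlinarith
    have h1 : 1 ≤ q ^ 2 := by omega
    have h2 : 1 ≤ q ^ 1 := by rw [pow_one]; omega
    have h3 : 1 ≤ t * q ^ 3 := by nlinarith
    have h4 : 1 ≤ t * q ^ 2 := by nlinarith
    zify [h1, h2, h3, h4]
    have H1 : (q:ℤ)^3 ≤ (t:ℤ) := by exact_mod_cast htq
    have H2 : (2:ℤ) ≤ (q:ℤ) := by exact_mod_cast hq
    have P1 : (0:ℤ) ≤ ((q:ℤ)-2) * (t*t*q^4) := mul_nonneg (by linarith) (by positivity)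
    have P2 : (0:ℤ) ≤ ((q:ℤ)^4 - q^3 - 2) * (t*t) := mul_nonneg (by nlinarith) (by positivity)
    have P3 : (0:ℤ) ≤ ((t:ℤ) - q^2) * (t*q^2) := mul_nonneg (by nlinarith) (by positivity)
    have P5 : (0:ℤ) ≤ ((t:ℤ) - 1) * (t*q) := mul_nonneg (by nlinarith) (by positivity)
    have P6 : (0:ℤ) ≤ ((t:ℤ)*t - q) * (q*q) := mul_nonneg (by nlinarith) (by positivity)
    nlinarith [P1, P2, P3, P5, P6, H2, sq_nonneg (q:ℤ)]
  calc q ^ (2*m-5) + 2 * q ^ (2*m-6) + q ^ (m-2) + 1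
      < q ^ (2*m-5) + 2 * q ^ (2*m-6) + q ^ (m-2) + 1 + 1 := Nat.lt_succ_self _
    _ ≤ (q ^ m - 1) * (q ^ (m-1) - 1) / ((q ^ 2 - 1) * (q ^ 1 - 1)) :=
        (Nat.le_div_iff_mul_le hdpos).mpr key

/-- **Construction A beats the multicomponent construction.** Let `q` be a prime power,
`k ≥ 4`, `n ≥ (k²+3k-2)/2`, `s = (k²+k-6)/2`, `n' = n-s`; assume `q²+q+1 ≥ ℓ`, where
`ℓ = n'` if `n'` is odd and `ℓ = n'-1` if `n'` is even.  With
`M_A = q^{2(n-k)} + Σ_{j=3}^{k-1} q^{2(n-Σ_{i=j}^{k} i)} + [n' choose 2]_q` and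
`M_MC = Σ_{i=0}^{⌊(n-2k)/(k-1)⌋} q^{2(n-k-(k-1)i)}
  + Σ_{i=⌊(n-2k)/(k-1)⌋+1}^{⌊(n-k)/(k-1)⌋} ⌈q^{k(n-k+1-(k-1)(i+1))}⌉`
(the ceiling being `1` when the exponent is negative), one has
`M_A - M_MC > q^{2n-k²-k+1}`. -/
theorem statement16 (q k n ℓ : ℕ) (hq : IsPrimePow q) (hk : 4 ≤ k)
    (hn : k ^ 2 + 3 * k - 2 ≤ 2 * n)
    (hℓ : ℓ = if Odd (n - (k ^ 2 + k - 6) / 2) then n - (k ^ 2 + k - 6) / 2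
      else n - (k ^ 2 + k - 6) / 2 - 1)
    (hqℓ : ℓ ≤ q ^ 2 + q + 1) :
    (∑ i ∈ Finset.range ((n - 2 * k) / (k - 1) + 1), q ^ (2 * (n - k - (k - 1) * i)))
      + (∑ i ∈ Finset.Icc ((n - 2 * k) / (k - 1) + 1) ((n - k) / (k - 1)),
          if (k - 1) * (i + 1) ≤ n - k + 1 then q ^ (k * (n - k + 1 - (k - 1) * (i + 1)))
          else 1)
      + q ^ (2 * n - k ^ 2 - k + 1)
    < q ^ (2 * (n - k)) + (∑ j ∈ Finset.Ico 3 k, q ^ (2 * (n - ∑ i ∈ Finset.Icc j k, i)))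
      + gaussBinom q (n - (k ^ 2 + k - 6) / 2) 2 := by
  clear hℓ hqℓ
  have hq2 : 2 ≤ q := hq.two_le
  clear hq
  obtain ⟨c, hc0⟩ : Even (k^2 + k) := by
    have h1 : k^2 + k = k * (k+1) := by ring
    rw [h1]; exact Nat.even_mul_succ_self k
  have hK4 : 4*k ≤ k^2 := by nlinarith
  obtain ⟨K, hK⟩ : ∃ K, k^2 = K := ⟨_, rfl⟩
  rw [hK] at hn hc0 hK4 ⊢
  have hn2 : 2*k + 5 ≤ n := by omega
  have hk1 : 0 < k - 1 := by omega
  have hm5 : 2*n - K - k + 1 = 2*(n - (K+k-6)/2) - 5 := by omega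
  rw [hm5]
  set m := n - (K + k - 6)/2 with hm
  have hm6 : k + 2 ≤ m := by omega
  set I := (n - 2*k)/(k-1) with hI
  set J := (n - k)/(k-1) with hJ
  have hd1 : (k-1) * I ≤ n - 2*k := by
    rw [hI, Nat.mul_comm]; exact Nat.div_mul_le_self _ _
  have hd2 : n - 2*k < (k-1) * (I + 1) := by
    have h := Nat.div_add_mod (n - 2*k) (k-1)
    have h2 : (n - 2*k) % (k-1) < k-1 := Nat.mod_lt _ hk1
    rw [← hI] at h
    calc n - 2*k = (k-1) * I + (n - 2*k) % (k-1) := h.symm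
      _ < (k-1) * I + (k-1) := Nat.add_lt_add_left h2 _
      _ = (k-1) * (I+1) := by ring
  -- Step A: bound on the first sum
  have hA : (∑ i ∈ Finset.range (I + 1), q ^ (2 * (n - k - (k - 1) * i)))
      ≤ q ^ (2 * (n - k)) + (∑ j ∈ Finset.Ico 3 k, q ^ (2 * (n - ∑ i ∈ Finset.Icc j k, i)))
        + 2 * q ^ (2*m-6) := by
    rw [Finset.sum_range_succ']
    have hf0 : 2 * (n - k - (k - 1) * 0) = 2 * (n - k) := by simp
    rw [hf0]
    have hsplit : (∑ i ∈ Finset.range I, q ^ (2 * (n - k - (k - 1) * (i+1))))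
        ≤ (∑ i ∈ Finset.range (k-3), q ^ (2 * (n - k - (k - 1) * (i+1))))
          + (∑ i ∈ Finset.Ico (k-3) I, q ^ (2 * (n - k - (k - 1) * (i+1)))) := by
      rcases le_total I (k-3) with h | h
      · exact le_trans (Finset.sum_le_sum_of_subset (Finset.range_subset_range.2 h))
          (Nat.le_add_right _ _)
      · rw [Finset.range_eq_Ico, Finset.range_eq_Ico, Finset.sum_Ico_consecutive _ (Nat.zero_le (k-3)) h]
    have hB1 : (∑ i ∈ Finset.range (k-3), q ^ (2 * (n - k - (k - 1) * (i+1))))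
        ≤ (∑ j ∈ Finset.Ico 3 k, q ^ (2 * (n - ∑ i ∈ Finset.Icc j k, i))) := by
      have himg : Finset.Ico 3 k = Finset.image (fun i => k - 1 - i) (Finset.range (k-3)) := by
        ext j
        simp only [Finset.mem_Ico, Finset.mem_image, Finset.mem_range]
        constructor
        · rintro ⟨h3, h4⟩; exact ⟨k - 1 - j, by omega, by omega⟩
        · rintro ⟨i, hi, rfl⟩; omega
      rw [himg, Finset.sum_image (by
        intro x hx y hy hxy
        simp only [Finset.mem_coe, Finset.mem_range] at hx hy hxy
        omega)]
      apply Finset.sum_le_sum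
      intro i hi
      simp only [Finset.mem_range] at hi
      apply Nat.pow_le_pow_right (by omega)
      have hσ := sigma_le k i (by omega)
      have h2 : n - k - (k-1)*(i+1) = n - (k + (k-1)*(i+1)) := Nat.sub_sub _ _ _
      rw [h2]
      exact Nat.mul_le_mul_left 2 (Nat.sub_le_sub_left hσ n)
    have hB2 : (∑ i ∈ Finset.Ico (k-3) I, q ^ (2 * (n - k - (k - 1) * (i+1))))
        ≤ 2 * q ^ (2*m-6) := by
      apply distinct_pow_sum q (2*m-6) hq2
      · intro x hx y hy hxy
        simp only [Finset.mem_Ico] at hx hy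
        obtain ⟨a, ha⟩ : ∃ a, (k-1)*(x+1) = a := ⟨_, rfl⟩
        obtain ⟨b, hb⟩ : ∃ b, (k-1)*(y+1) = b := ⟨_, rfl⟩
        have hax : a ≤ n - 2*k := by
          rw [← ha]
          calc (k-1)*(x+1) ≤ (k-1)*I := Nat.mul_le_mul_left _ (by omega)
            _ ≤ n - 2*k := hd1
        have hby : b ≤ n - 2*k := by
          rw [← hb]
          calc (k-1)*(y+1) ≤ (k-1)*I := Nat.mul_le_mul_left _ (by omega)
            _ ≤ n - 2*k := hd1
        rw [ha, hb] at hxy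
        have hab : a = b := by omega
        have hee : (k-1)*(x+1) = (k-1)*(y+1) := by rw [ha, hb, hab]
        have := Nat.eq_of_mul_eq_mul_left hk1 hee
        omega
      · intro i hi
        simp only [Finset.mem_Ico] at hi
        have h1 : (k-1)*(k-2) ≤ (k-1)*(i+1) := Nat.mul_le_mul_left _ (by omega)
        have h2 : n - k - (k-1)*(i+1) ≤ n - k - (k-1)*(k-2) := Nat.sub_le_sub_left h1 _
        obtain ⟨P, hP0⟩ : ∃ P, (k-1)*(k-2) = P := ⟨_, rfl⟩
        have hPk : P + 3*k = K + 2 := by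
          rw [← hP0, ← hK]
          obtain ⟨t, rfl⟩ : ∃ t, k = t + 4 := ⟨k - 4, by omega⟩
          have e1 : t + 4 - 1 = t + 3 := by omega
          have e2 : t + 4 - 2 = t + 2 := by omega
          rw [e1, e2]; ring
        have h5 : 5*k ≤ K + 4 := by
          rw [← hK]; nlinarith [hk, show 1 ≤ k by omega]
        have hP : (K + k - 6)/2 + 3 ≤ k + P := by omega
        have h3 : n - k - (k-1)*(k-2) = n - (k + P) := by rw [hP0]; exact Nat.sub_sub _ _ _
        have h4 : n - (k + P) ≤ n - ((K+k-6)/2 + 3) := Nat.sub_le_sub_left hP n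
        have h6 : n - ((K+k-6)/2 + 3) = m - 3 := by omega
        calc 2 * (n - k - (k-1)*(i+1)) ≤ 2 * (n - k - (k-1)*(k-2)) := Nat.mul_le_mul_left 2 h2
          _ = 2 * (n - (k + P)) := by rw [h3]
          _ ≤ 2 * (n - ((K+k-6)/2 + 3)) := Nat.mul_le_mul_left 2 h4
          _ = 2 * (m - 3) := by rw [h6]
          _ = 2*m - 6 := by omega
    linarith [hsplit, hB1, hB2]
  -- Step B: bound on the second sum
  have hJI : J ≤ I + 2 := by
    have h1 : n - k < (I+3) * (k-1) := by
      calc n - k ≤ (n - 2*k) + k := by omega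
        _ < (k-1)*(I+1) + k := Nat.add_lt_add_right hd2 k
        _ ≤ (k-1)*(I+1) + 2*(k-1) := Nat.add_le_add_left (by omega) _
        _ = (I+3)*(k-1) := by ring
    rw [hJ]
    have := (Nat.div_lt_iff_lt_mul hk1).mpr h1
    omega
  have hnk2 : n - k ≤ (k-1)*(I+2) := by
    obtain ⟨x, hx⟩ : ∃ x, (k-1)*(I+1) = x := ⟨_, rfl⟩
    have e : (k-1)*(I+2) = x + (k-1) := by rw [← hx]; ring
    rw [e]; rw [hx] at hd2; omega
  have hv1 : (if (k-1)*(I+1+1) ≤ n - k + 1 then q ^ (k*(n-k+1-(k-1)*(I+1+1))) else 1)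
      ≤ q ^ k := by
    split
    · apply Nat.pow_le_pow_right (by omega)
      obtain ⟨x, hx⟩ : ∃ x, (k-1)*(I+1+1) = x := ⟨_, rfl⟩
      rw [hx]
      rw [show I+1+1 = I+2 from rfl, hx] at hnk2
      have hle1 : n - k + 1 - x ≤ 1 := by omega
      calc k * (n-k+1-x) ≤ k * 1 := Nat.mul_le_mul_left _ hle1
        _ = k := Nat.mul_one k
    · exact Nat.one_le_pow _ _ (by omega)
  have hv2 : ∀ i, I + 2 ≤ i →
      (if (k-1)*(i+1) ≤ n - k + 1 then q ^ (k*(n-k+1-(k-1)*(i+1))) else 1) = 1 := by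
    intro i hi
    rw [if_neg]
    have h1 : (k-1)*(I+3) ≤ (k-1)*(i+1) := Nat.mul_le_mul_left _ (by omega)
    have h2 : n - k + 1 < (k-1)*(I+3) := by
      obtain ⟨x, hx⟩ : ∃ x, (k-1)*(I+1) = x := ⟨_, rfl⟩
      have e : (k-1)*(I+3) = x + 2*(k-1) := by rw [← hx]; ring
      rw [e]; rw [hx] at hd2; omega
    omega
  have hB : (∑ i ∈ Finset.Icc (I+1) J,
      if (k-1)*(i+1) ≤ n - k + 1 then q ^ (k*(n-k+1-(k-1)*(i+1))) else 1)
      ≤ q ^ (m-2) + 1 := by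
    have hqk : q ^ k ≤ q ^ (m-2) := Nat.pow_le_pow_right (by omega) (by omega)
    rcases lt_or_ge J (I+1) with h | h
    · rw [Finset.Icc_eq_empty (by omega)]
      simp
    · have hJc : J = I + 1 ∨ J = I + 2 := by omega
      rcases hJc with h1 | h1
      · rw [h1, Finset.Icc_self, Finset.sum_singleton]
        exact le_trans (le_trans hv1 hqk) (Nat.le_succ _)
      · rw [h1, show I+2 = (I+1)+1 from rfl, Finset.sum_Icc_succ_top (by omega),
          Finset.Icc_self, Finset.sum_singleton]
        have h3 := hv2 (I+1+1) (by omega)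
        rw [h3]
        exact Nat.add_le_add (le_trans hv1 hqk) le_rfl
  have hgauss := gauss_lb q m hq2 (by omega)
  linarith [hA, hB, hgauss]
end

section
/- Let q ≥ 2, k ≥ 4 and n ≥ 2k+2 be integers, and let ε(x) = 1 if x is odd and ε(x) = 0 if x is even. Then q^{(k−1)(n−k)} + ( Σ_{i=0}^{⌊(k−3)/2⌋} q^{(k−3)(n−k)−4i} + ε(k−1)·q^{(k−3)(n−k−2)} ) · Σ_{i=0}^{⌊(n−k)/2⌋−1} q^{2(2i+ε(n−k))} − Σ_{i=0}^{⌈k/2⌉−1} q^{(k−1)(n−k−2i)} > q^{(k−1)(n−k)−8}. -/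
/-- **Construction B beats the multicomponent construction.** Let `q ≥ 2`, `k ≥ 4`,
`n ≥ 2k+2`, and let `ε(x) = x % 2` (`1` if `x` is odd, `0` if `x` is even).  Then
`q^{(k-1)(n-k)}
  + (Σ_{i=0}^{⌊(k-3)/2⌋} q^{(k-3)(n-k)-4i} + ε(k-1)·q^{(k-3)(n-k-2)})
      · Σ_{i=0}^{⌊(n-k)/2⌋-1} q^{2(2i+ε(n-k))}
  - Σ_{i=0}^{⌈k/2⌉-1} q^{(k-1)(n-k-2i)}  >  q^{(k-1)(n-k)-8}`. -/
theorem statement17 (q k n : ℕ) (hq : 2 ≤ q) (hk : 4 ≤ k) (hn : 2 * k + 2 ≤ n) :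
    (∑ i ∈ Finset.range ((k + 1) / 2), q ^ ((k - 1) * (n - k - 2 * i)))
      + q ^ ((k - 1) * (n - k) - 8)
    < q ^ ((k - 1) * (n - k))
      + ((∑ i ∈ Finset.range ((k - 3) / 2 + 1), q ^ ((k - 3) * (n - k) - 4 * i))
          + ((k - 1) % 2) * q ^ ((k - 3) * (n - k - 2)))
        * (∑ i ∈ Finset.range ((n - k) / 2), q ^ (2 * (2 * i + (n - k) % 2))) := by
  set m := n - k with hm
  have hm6 : 6 ≤ m := by omega
  have hq1 : 1 ≤ q := by omega
  have hq0 : 0 < q := by omega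
  set E := (k - 1) * m with hE
  have hE18 : 18 ≤ E := le_trans (by norm_num) (Nat.mul_le_mul (by omega : 3 ≤ k - 1) hm6)
  have hE2 : 2 * (k - 1) ≤ E := by
    rw [hE, Nat.mul_comm]; exact Nat.mul_le_mul_left _ (by omega)
  -- Claim A : q^(E-4) ≤ B * S
  have hB : q ^ ((k - 3) * m) ≤
      (∑ i ∈ Finset.range ((k - 3) / 2 + 1), q ^ ((k - 3) * m - 4 * i))
        + ((k - 1) % 2) * q ^ ((k - 3) * (m - 2)) := by
    have h0 : q ^ ((k - 3) * m - 4 * 0) ≤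
        ∑ i ∈ Finset.range ((k - 3) / 2 + 1), q ^ ((k - 3) * m - 4 * i) :=
      Finset.single_le_sum (f := fun i => q ^ ((k - 3) * m - 4 * i))
        (fun i _ => Nat.zero_le _) (Finset.mem_range.mpr (by omega : 0 < (k - 3) / 2 + 1))
    simp only [Nat.mul_zero, Nat.sub_zero] at h0
    exact le_trans h0 (Nat.le_add_right _ _)
  have hS : q ^ (2 * m - 4) ≤ ∑ i ∈ Finset.range (m / 2), q ^ (2 * (2 * i + m % 2)) := by
    have hmem : m / 2 - 1 ∈ Finset.range (m / 2) := Finset.mem_range.mpr (by omega)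
    have h := Finset.single_le_sum (f := fun i => q ^ (2 * (2 * i + m % 2)))
      (fun i _ => Nat.zero_le _) hmem
    have he : 2 * (2 * (m / 2 - 1) + m % 2) = 2 * m - 4 := by omega
    simpa only [he] using h
  have hsplit : E = (k - 3) * m + 2 * m := by
    rw [hE, ← Nat.add_mul]; congr 1; omega
  have hA : q ^ (E - 4) ≤
      ((∑ i ∈ Finset.range ((k - 3) / 2 + 1), q ^ ((k - 3) * m - 4 * i))
        + ((k - 1) % 2) * q ^ ((k - 3) * (m - 2)))
      * (∑ i ∈ Finset.range (m / 2), q ^ (2 * (2 * i + m % 2))) := by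
    have he : E - 4 = (k - 3) * m + (2 * m - 4) := by
      set A := (k - 3) * m; omega
    rw [he, pow_add]
    exact Nat.mul_le_mul hB hS
  -- split off the i = 0 term of the left sum
  set N := (k + 1) / 2 - 1 with hN
  have ht : (k + 1) / 2 = N + 1 := by omega
  rw [ht, Finset.sum_range_succ']
  simp only [Nat.mul_zero, Nat.sub_zero]
  -- bound the tail T'
  have hkm2 : (k - 1) * (m - 2) = E - 2 * (k - 1) := by
    rw [hE, Nat.mul_sub, Nat.mul_comm (k - 1) 2]
  have hT : (∑ i ∈ Finset.range N, q ^ ((k - 1) * (m - 2 * (i + 1))))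
      ≤ N * q ^ (E - 2 * (k - 1)) := by
    calc (∑ i ∈ Finset.range N, q ^ ((k - 1) * (m - 2 * (i + 1))))
        ≤ ∑ _i ∈ Finset.range N, q ^ ((k - 1) * (m - 2)) :=
          Finset.sum_le_sum fun i _ =>
            Nat.pow_le_pow_right hq1 (Nat.mul_le_mul_left _ (by omega))
      _ = N * q ^ ((k - 1) * (m - 2)) := by
          rw [Finset.sum_const, smul_eq_mul, Finset.card_range]
      _ = N * q ^ (E - 2 * (k - 1)) := by rw [hkm2]
  have hN2 : N ≤ q ^ (2 * k - 7) := by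
    calc N ≤ 2 * k - 7 := by omega
      _ ≤ 2 ^ (2 * k - 7) := Nat.le_of_lt (Nat.lt_two_pow_self (n := 2 * k - 7))
      _ ≤ q ^ (2 * k - 7) := Nat.pow_le_pow_left hq _
  have hT5 : (∑ i ∈ Finset.range N, q ^ ((k - 1) * (m - 2 * (i + 1)))) ≤ q ^ (E - 5) := by
    refine le_trans hT ?_
    calc N * q ^ (E - 2 * (k - 1)) ≤ q ^ (2 * k - 7) * q ^ (E - 2 * (k - 1)) :=
          Nat.mul_le_mul_right _ hN2
      _ = q ^ (E - 5) := by rw [← pow_add]; congr 1; omega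
  have hfin : q ^ (E - 5) + q ^ (E - 8) < q ^ (E - 4) := by
    have h1 : q ^ (E - 5) = q ^ (E - 8) * q ^ 3 := by rw [← pow_add]; congr 1; omega
    have h2 : q ^ (E - 4) = q ^ (E - 8) * q ^ 4 := by rw [← pow_add]; congr 1; omega
    have h3 : q ^ 3 + 1 < q ^ 4 := by nlinarith [Nat.pow_le_pow_left hq 3, Nat.pow_le_pow_left hq 4]
    calc q ^ (E - 5) + q ^ (E - 8) = q ^ (E - 8) * (q ^ 3 + 1) := by rw [h1]; ring
      _ < q ^ (E - 8) * q ^ 4 := by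
          exact mul_lt_mul_of_pos_left h3 (pow_pos hq0 _)
      _ = q ^ (E - 4) := h2.symm
  have := lt_of_le_of_lt (Nat.add_le_add_right hT5 _) hfin
  linarith [this, hA]
end
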